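/- arXiv:2408.05311 — 10 statements merged into one kernel-verified Lean document; each statement's English description precedes it below -/
import Mathlib

section
/- For every n ≥ 1, the number of permutations of {1,...,n} avoiding the pattern 231 equals the n-th Catalan number C_n = (1/(n+1))·binom(2n, n). -/
def Contains {n k : ℕ} (σ : Equiv.Perm (Fin n)) (π : Equiv.Perm (Fin k)) : Prop :=
  ∃ f : Fin k → Fin n, StrictMono f ∧ ∀ a b : Fin k, π a < π b ↔ σ (f a) < σ (f b)

def Avoids {n k : ℕ} (σ : Equiv.Perm (Fin n)) (π : Equiv.Perm (Fin k)) : Prop :=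
  ¬ Contains σ π

/-!
If a permutation avoids 231, every entry to the left of its maximum is smaller than every entry
to its right, since otherwise the two entries and the maximum form a 231. With the maximum at
position `p`, the permutation is therefore a 231-avoiding permutation of the `p` smallest values,
then the maximum, then a 231-avoiding permutation of the remaining `q` values; conversely every
such concatenation avoids 231. Summing over `p + q = n` gives the Catalan recursion
`C (n + 1) = ∑ C p * C q`.
-/

open Function Equiv

def Has231 {ι α : Type*} [LT ι] [LT α] (f : ι → α) : Prop :=
  ∃ i j k, i < j ∧ j < k ∧ f k < f i ∧ f i < f j

theorem contains_finRotate_three_iff {n : ℕ} (σ : Perm (Fin n)) :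
    Contains σ (finRotate 3) ↔ Has231 σ := by
  constructor
  · rintro ⟨f, hf, hπ⟩
    exact ⟨f 0, f 1, f 2, hf (by decide), hf (by decide), (hπ 2 0).mp (by decide),
      (hπ 0 1).mp (by decide)⟩
  · rintro ⟨i, j, k, hij, hjk, hki, hij'⟩
    refine ⟨![i, j, k], ?_, fun a b => ?_⟩
    · simp [Fin.strictMono_iff_lt_succ, Fin.forall_fin_two, hij, hjk]
    · have hkj : σ k < σ j := hki.trans hij'
      fin_cases a <;> fin_cases b <;> simp_all [lt_asymm]

theorem Fin.castAdd_lt_natAdd {m n : ℕ} (a : Fin m) (b : Fin n) : castAdd n a < natAdd m b := by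
  simp only [lt_def, val_castAdd, val_natAdd]
  omega

section Has231

variable {ι κ α β : Type*}

theorem Has231.of_comp [Preorder ι] [Preorder κ] [LT α] {f : ι → α} {g : κ → ι}
    (hg : StrictMono g) (h : Has231 (f ∘ g)) : Has231 f := by
  obtain ⟨i, j, k, hij, hjk, hki, hij'⟩ := h
  exact ⟨g i, g j, g k, hg hij, hg hjk, hki, hij'⟩

theorem StrictMono.has231_comp_iff [LT ι] [LinearOrder α] [Preorder β] {f : ι → α} {h : α → β}
    (hh : StrictMono h) : Has231 (h ∘ f) ↔ Has231 f := by
  simp only [Has231, comp_apply, hh.lt_iff_lt]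

theorem Has231.of_append [Preorder α] {m n : ℕ} {u : Fin m → α} {v : Fin n → α}
    (huv : ∀ a b, u a < v b) (h : Has231 (Fin.append u v)) : Has231 u ∨ Has231 v := by
  obtain ⟨i, j, k, hij, hjk, hki, hij'⟩ := h
  induction i using Fin.addCases <;> induction j using Fin.addCases <;>
    induction k using Fin.addCases <;> simp only [Fin.append_left, Fin.append_right] at hki hij'
  -- A mixed choice of blocks either breaks `i < j < k` or puts a `v`-value below a `u`-value.
  all_goals first
    | exact .inl ⟨_, _, _, hij, hjk, hki, hij'⟩
    | exact .inr ⟨_, _, _, (Fin.natAdd_lt_natAdd_iff m).mp hij,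
        (Fin.natAdd_lt_natAdd_iff m).mp hjk, hki, hij'⟩
    | exact absurd hki (huv _ _).asymm
    | exact absurd hij (Fin.castAdd_lt_natAdd _ _).asymm
    | exact absurd hjk (Fin.castAdd_lt_natAdd _ _).asymm

theorem Has231.of_cons [Preorder α] {n : ℕ} {x : α} {v : Fin n → α} (hv : ∀ b, v b < x)
    (h : Has231 (Fin.cons x v : Fin (n + 1) → α)) : Has231 v := by
  obtain ⟨i, j, k, hij, hjk, hki, hij'⟩ := h
  induction j using Fin.cases with
  | zero => exact absurd hij (Fin.not_lt_zero i)
  | succ j =>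
  induction k using Fin.cases with
  | zero => exact absurd hjk (Fin.not_lt_zero _)
  | succ k =>
  induction i using Fin.cases with
  | zero => exact absurd hij' (hv j).asymm
  | succ i => exact ⟨i, j, k, Fin.succ_lt_succ_iff.mp hij, Fin.succ_lt_succ_iff.mp hjk, hki, hij'⟩

theorem apply_lt_apply_of_not_has231 [PartialOrder ι] [LinearOrder α] {f : ι → α}
    (hf : Injective f) (h : ¬ Has231 f) {i j k : ι} (hj : ∀ x, f x ≤ f j) (hij : i < j)
    (hjk : j ≤ k) : f i < f k := by
  have hfi : f i < f j := (hj i).lt_of_ne (hf.ne hij.ne)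
  rcases hjk.lt_or_eq with hjk | rfl
  · refine lt_of_not_ge fun hki => h ⟨i, j, k, hij, hjk, hki.lt_of_ne ?_, hfi⟩
    exact hf.ne (hij.trans hjk).ne'
  · exact hfi

end Has231

theorem lt_iff_apply_lt_of_separated {m : ℕ} (σ : Perm (Fin m)) {a : Fin m}
    (hsep : ∀ x < a, ∀ y, a ≤ y → σ x < σ y) (x : Fin m) : x < a ↔ σ x < a := by
  constructor
  · intro hx
    by_contra! hax
    have hsub : (Finset.Ici a).map σ.toEmbedding ⊆ Finset.Ioi (σ x) := by
      intro v hv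
      obtain ⟨y, hy, rfl⟩ := Finset.mem_map.mp hv
      exact Finset.mem_Ioi.mpr (hsep x hx y (Finset.mem_Ici.mp hy))
    have := Finset.card_le_card hsub
    simp only [Finset.card_map, Fin.card_Ici, Fin.card_Ioi] at this
    omega
  · intro hσx
    by_contra! hax
    have hsub : (Finset.Iio a).map σ.toEmbedding ⊆ Finset.Iio (σ x) := by
      intro v hv
      obtain ⟨y, hy, rfl⟩ := Finset.mem_map.mp hv
      exact Finset.mem_Iio.mpr (hsep y (Finset.mem_Iio.mp hy) x hax)
    have := Finset.card_le_card hsub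
    simp only [Finset.card_map, Fin.card_Iio] at this
    omega

theorem lt_iff_apply_lt_of_not_has231 {m : ℕ} {σ : Perm (Fin (m + 1))} (hσ : ¬ Has231 σ)
    {a : Fin (m + 1)} (hmax : σ a = Fin.last m) (x : Fin (m + 1)) : x < a ↔ σ x < a :=
  lt_iff_apply_lt_of_separated σ (fun _ hx _ hy => apply_lt_apply_of_not_has231 σ.injective hσ
    (fun z => hmax ▸ Fin.le_last (σ z)) hx hy) x

section inducedPerm

variable {α β : Type*} [LinearOrder α] [LinearOrder β]

noncomputable def inducedPerm (σ : Perm β) (g h : α ↪o β)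
    (hσ : ∀ x, x ∈ Set.range g ↔ σ x ∈ Set.range h) : Perm α :=
  (ofInjective g g.injective).trans ((σ.subtypeEquiv hσ).trans (ofInjective h h.injective).symm)

theorem apply_inducedPerm (σ : Perm β) (g h : α ↪o β)
    (hσ : ∀ x, x ∈ Set.range g ↔ σ x ∈ Set.range h) (a : α) :
    h (inducedPerm σ g h hσ a) = σ (g a) := by
  simp [inducedPerm, apply_ofInjective_symm]

theorem Has231.of_inducedPerm {σ : Perm β} {g h : α ↪o β}
    {hσ : ∀ x, x ∈ Set.range g ↔ σ x ∈ Set.range h} (H : Has231 (inducedPerm σ g h hσ)) :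
    Has231 σ := by
  have hcomp : h ∘ inducedPerm σ g h hσ = σ ∘ g := funext (apply_inducedPerm σ g h hσ)
  rw [← h.strictMono.has231_comp_iff, hcomp] at H
  exact H.of_comp g.strictMono

end inducedPerm

section concatMax

variable {p q : ℕ}

/-- `α`, then the maximum, then `β` shifted above all values of `α`. -/
noncomputable def concatMax (α : Perm (Fin p)) (β : Perm (Fin q)) : Perm (Fin (p + (q + 1))) :=
  ofBijective (Fin.append (Fin.castAdd (q + 1) ∘ α)
    (Fin.natAdd p ∘ (Fin.cons (Fin.last q) (Fin.castSucc ∘ β) : Fin (q + 1) → Fin (q + 1))))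
    (Finite.injective_iff_bijective.mp <| by
      refine Fin.append_injective_iff.mpr ⟨(Fin.castAdd_injective _ _).comp α.injective,
        (Fin.natAdd_injective _ _).comp (Fin.cons_injective_iff.mpr ⟨?_, ?_⟩),
        fun a b => (Fin.castAdd_lt_natAdd _ _).ne⟩
      · rintro ⟨b, hb⟩
        exact (Fin.castSucc_lt_last _).ne hb
      · exact (Fin.castSucc_injective _).comp β.injective)

@[simp]
theorem concatMax_castAdd (α : Perm (Fin p)) (β : Perm (Fin q)) (a : Fin p) :
    concatMax α β (Fin.castAdd (q + 1) a) = Fin.castAdd (q + 1) (α a) := by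
  simp [concatMax]

@[simp]
theorem concatMax_natAdd_zero (α : Perm (Fin p)) (β : Perm (Fin q)) :
    concatMax α β (Fin.natAdd p 0) = Fin.last (p + q) := by
  simp [concatMax]

@[simp]
theorem concatMax_natAdd_succ (α : Perm (Fin p)) (β : Perm (Fin q)) (b : Fin q) :
    concatMax α β (Fin.natAdd p b.succ) = Fin.natAdd p (β b).castSucc := by
  simp [concatMax]

theorem not_has231_concatMax {α : Perm (Fin p)} {β : Perm (Fin q)} (hα : ¬ Has231 α)
    (hβ : ¬ Has231 β) : ¬ Has231 (concatMax α β) := by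
  intro H
  rcases H.of_append fun a b => Fin.castAdd_lt_natAdd _ _ with H | H
  · exact hα ((Fin.strictMono_castAdd _).has231_comp_iff.mp H)
  · have H := ((Fin.strictMono_natAdd p).has231_comp_iff.mp H).of_cons
      fun b => Fin.castSucc_lt_last (β b)
    exact hβ (Fin.strictMono_castSucc.has231_comp_iff.mp H)

end concatMax

section splitAtMax

variable {p q : ℕ} {σ : Perm (Fin (p + (q + 1)))} (hσ : ¬ Has231 σ)
  (hmax : σ (Fin.natAdd p 0) = Fin.last (p + q))

noncomputable def leftBlock : Perm (Fin p) :=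
  inducedPerm σ (Fin.castAddOrderEmb (q + 1)) (Fin.castAddOrderEmb (q + 1)) fun x => by
    show x ∈ Set.range (Fin.castAdd (q + 1)) ↔ σ x ∈ Set.range (Fin.castAdd (q + 1))
    simp only [Fin.range_castAdd, Set.mem_Iio]
    exact lt_iff_apply_lt_of_not_has231 (m := p + q) hσ hmax x

noncomputable def tailBlock : Perm (Fin (q + 1)) :=
  inducedPerm σ (Fin.natAddOrderEmb p) (Fin.natAddOrderEmb p) fun x => by
    show x ∈ Set.range (Fin.natAdd p) ↔ σ x ∈ Set.range (Fin.natAdd p)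
    simp only [Fin.range_natAdd_eq_Ici, Set.mem_Ici, ← not_lt]
    exact (lt_iff_apply_lt_of_not_has231 (m := p + q) hσ hmax x).not

theorem natAdd_tailBlock (y : Fin (q + 1)) :
    Fin.natAdd p (tailBlock hσ hmax y) = σ (Fin.natAdd p y) :=
  apply_inducedPerm _ _ (Fin.natAddOrderEmb p) _ y

theorem tailBlock_zero : tailBlock hσ hmax 0 = Fin.last q :=
  (Fin.natAdd_inj p).mp <| (natAdd_tailBlock hσ hmax 0).trans (hmax.trans Fin.natAdd_last.symm)

noncomputable def rightBlock : Perm (Fin q) :=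
  inducedPerm (tailBlock hσ hmax) (Fin.succOrderEmb q) Fin.castSuccOrderEmb fun x => by
    show x ∈ Set.range Fin.succ ↔ tailBlock hσ hmax x ∈ Set.range Fin.castSucc
    rw [Fin.range_succ, Fin.range_castSucc]
    change x ≠ 0 ↔ tailBlock hσ hmax x < Fin.last q
    rw [Fin.lt_last_iff_ne_last, ← tailBlock_zero hσ hmax, (tailBlock hσ hmax).injective.ne_iff]

theorem castAdd_leftBlock (a : Fin p) :
    Fin.castAdd (q + 1) (leftBlock hσ hmax a) = σ (Fin.castAdd (q + 1) a) :=
  apply_inducedPerm _ _ (Fin.castAddOrderEmb (q + 1)) _ a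

theorem castSucc_rightBlock (b : Fin q) :
    (rightBlock hσ hmax b).castSucc = tailBlock hσ hmax b.succ :=
  apply_inducedPerm _ _ Fin.castSuccOrderEmb _ b

theorem not_has231_leftBlock : ¬ Has231 (leftBlock hσ hmax) :=
  fun H => hσ H.of_inducedPerm

theorem not_has231_rightBlock : ¬ Has231 (rightBlock hσ hmax) :=
  fun H => hσ H.of_inducedPerm.of_inducedPerm

theorem concatMax_leftBlock_rightBlock :
    concatMax (leftBlock hσ hmax) (rightBlock hσ hmax) = σ := by
  ext x : 1
  induction x using Fin.addCases with
  | left a => rw [concatMax_castAdd, castAdd_leftBlock]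
  | right y =>
    induction y using Fin.cases with
    | zero => rw [concatMax_natAdd_zero, hmax]
    | succ b => rw [concatMax_natAdd_succ, castSucc_rightBlock, natAdd_tailBlock]

end splitAtMax

section blocks_concatMax

variable {p q : ℕ} {α : Perm (Fin p)} {β : Perm (Fin q)} (hσ : ¬ Has231 (concatMax α β))
  (hmax : concatMax α β (Fin.natAdd p 0) = Fin.last (p + q))

theorem leftBlock_concatMax : leftBlock hσ hmax = α :=
  Equiv.ext fun a => Fin.castAdd_injective _ _ <| by rw [castAdd_leftBlock, concatMax_castAdd]

theorem rightBlock_concatMax : rightBlock hσ hmax = β :=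
  Equiv.ext fun b => Fin.castSucc_injective _ <| (Fin.natAdd_inj p).mp <| by
    rw [castSucc_rightBlock, natAdd_tailBlock, concatMax_natAdd_succ]

end blocks_concatMax

abbrev Av231 (n : ℕ) : Type := {σ : Perm (Fin n) // ¬ Has231 σ}

noncomputable def splitAtMaxEquiv (p q : ℕ) :
    {σ : Av231 (p + (q + 1)) // σ.1 (Fin.natAdd p 0) = Fin.last (p + q)} ≃ Av231 p × Av231 q where
  toFun σ := (⟨leftBlock σ.1.2 σ.2, not_has231_leftBlock _ _⟩,
    ⟨rightBlock σ.1.2 σ.2, not_has231_rightBlock _ _⟩)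
  invFun αβ := ⟨⟨concatMax αβ.1.1 αβ.2.1, not_has231_concatMax αβ.1.2 αβ.2.2⟩,
    concatMax_natAdd_zero _ _⟩
  left_inv σ := Subtype.ext <| Subtype.ext <| concatMax_leftBlock_rightBlock σ.1.2 σ.2
  right_inv αβ := by
    have hσ := not_has231_concatMax αβ.1.2 αβ.2.2
    have hmax := concatMax_natAdd_zero αβ.1.1 αβ.2.1
    exact Prod.ext (Subtype.ext (leftBlock_concatMax hσ hmax))
      (Subtype.ext (rightBlock_concatMax hσ hmax))

theorem natCard_av231_succ (n : ℕ) :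
    Nat.card (Av231 (n + 1)) =
      ∑ i : Fin (n + 1), Nat.card (Av231 i) * Nat.card (Av231 (n - i)) := by
  rw [← Nat.card_congr (sigmaFiberEquiv fun σ : Av231 (n + 1) => σ.1.symm (Fin.last n)),
    Nat.card_sigma]
  refine Finset.sum_congr rfl ?_
  rintro ⟨p, hp⟩ -
  obtain ⟨q, rfl⟩ : ∃ q, n = p + q := ⟨n - p, by omega⟩
  rw [← Nat.card_prod, Nat.add_sub_cancel_left, ← Nat.card_congr (splitAtMaxEquiv p q)]
  exact Nat.card_congr (subtypeEquivRight fun σ => σ.1.symm_apply_eq.trans eq_comm)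

theorem natCard_av231 (n : ℕ) : Nat.card (Av231 n) = catalan n := by
  induction n using Nat.strong_induction_on with
  | _ n ih =>
    cases n with
    | zero =>
      rw [catalan_zero, Nat.card_eq_one_iff_exists]
      exact ⟨⟨1, fun ⟨i, _⟩ => i.elim0⟩, fun σ => Subsingleton.elim _ _⟩
    | succ n =>
      rw [natCard_av231_succ, catalan_succ]
      exact Finset.sum_congr rfl fun i _ => by rw [ih i (by omega), ih (n - i) (by omega)]

theorem card_avoid_231_general (n : ℕ) :
    Nat.card {σ : Equiv.Perm (Fin n) // Avoids σ (finRotate 3)} = catalan n := by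
  rw [← natCard_av231]
  exact Nat.card_congr (subtypeEquivRight fun σ => (contains_finRotate_three_iff σ).not)

/-- The number of permutations of size `n ≥ 1` avoiding the pattern 231 is the
`n`-th Catalan number. -/
theorem card_avoid_231 (n : ℕ) (hn : 1 ≤ n) :
    Nat.card {σ : Equiv.Perm (Fin n) // Avoids σ (finRotate 3)} = catalan n :=
  card_avoid_231_general n
end

section
/- For every n ≥ 1, the number of permutations of {1,...,n} avoiding both patterns 123 and 231 equals binom(n,2) + 1. -/
open Equiv

def RiseBounded {ι α : Type*} [LT ι] [LT α] (f : ι → α) : Prop :=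
  ∀ ⦃i j k⦄, i < j → j < k → f i < f j → f i < f k ∧ f k < f j

section Patterns

variable {n : ℕ} (σ : Perm (Fin n))

lemma contains_iff_strictMono {k : ℕ} (π : Perm (Fin k)) :
    Contains σ π ↔ ∃ f : Fin k → Fin n, StrictMono f ∧ StrictMono (σ ∘ f ∘ π.symm) := by
  refine exists_congr fun f => and_congr_right fun _ => ⟨fun h a b hab => ?_, fun h a b => ?_⟩
  · simpa using (h (π.symm a) (π.symm b)).1 (by simpa using hab)
  · simpa using (h.lt_iff_lt (a := π a) (b := π b)).symm

lemma strictMono_fin_three_iff {α : Type*} [Preorder α] (f : Fin 3 → α) :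
    StrictMono f ↔ f 0 < f 1 ∧ f 1 < f 2 := by
  simp [Fin.strictMono_iff_lt_succ, Fin.forall_fin_two]

lemma contains_123_iff :
    Contains σ (1 : Perm (Fin 3)) ↔ ∃ i j k, i < j ∧ j < k ∧ σ i < σ j ∧ σ j < σ k := by
  simp only [contains_iff_strictMono, strictMono_fin_three_iff]
  constructor
  · rintro ⟨f, ⟨h01, h12⟩, h⟩
    exact ⟨f 0, f 1, f 2, h01, h12, by simpa [← Perm.inv_def] using h⟩
  · rintro ⟨i, j, k, hij, hjk, h⟩
    exact ⟨![i, j, k], ⟨hij, hjk⟩, by simpa [← Perm.inv_def] using h⟩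

lemma finRotate_three_symm : ⇑(finRotate 3).symm = ![2, 0, 1] := by
  ext i; fin_cases i <;> rfl

lemma contains_231_iff :
    Contains σ (finRotate 3) ↔ ∃ i j k, i < j ∧ j < k ∧ σ k < σ i ∧ σ i < σ j := by
  simp only [contains_iff_strictMono, strictMono_fin_three_iff]
  constructor
  · rintro ⟨f, ⟨h01, h12⟩, h⟩
    exact ⟨f 0, f 1, f 2, h01, h12, by simpa [finRotate_three_symm] using h⟩
  · rintro ⟨i, j, k, hij, hjk, h⟩
    exact ⟨![i, j, k], ⟨hij, hjk⟩, by simpa [finRotate_three_symm] using h⟩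

lemma avoids_123_and_231_iff :
    Avoids σ (1 : Perm (Fin 3)) ∧ Avoids σ (finRotate 3) ↔ RiseBounded σ := by
  rw [Avoids, Avoids, contains_123_iff, contains_231_iff]
  constructor
  · rintro ⟨h123, h231⟩ i j k hij hjk hσij
    refine ⟨lt_of_not_ge fun hki => h231 ⟨i, j, k, hij, hjk, ?_, hσij⟩,
      lt_of_not_ge fun hjk' => h123 ⟨i, j, k, hij, hjk, hσij, ?_⟩⟩
    · exact hki.lt_of_ne (σ.injective.ne (hij.trans hjk).ne')
    · exact hjk'.lt_of_ne (σ.injective.ne hjk.ne)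
  · intro h
    constructor
    · rintro ⟨i, j, k, hij, hjk, hσij, hσjk⟩
      exact (h hij hjk hσij).2.asymm hσjk
    · rintro ⟨i, j, k, hij, hjk, hσki, hσij⟩
      exact (h hij hjk hσij).1.asymm hσki

end Patterns

section RiseBounded

variable {α β : Type*}

lemma riseBounded_comp_iff {ι : Type*} [LT ι] [LinearOrder α] [Preorder β] {g : α → β}
    (hg : StrictMono g) (f : ι → α) : RiseBounded (g ∘ f) ↔ RiseBounded f := by
  simp only [RiseBounded, Function.comp_apply, hg.lt_iff_lt]

lemma riseBounded_cons_iff [Preorder α] {n : ℕ} {a : α} {f : Fin n → α} (ha : ∀ i, f i < a) :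
    RiseBounded (Fin.cons a f : Fin (n + 1) → α) ↔ RiseBounded f := by
  constructor
  · intro h i j k hij hjk hf
    simpa using h (Fin.succ_lt_succ_iff.2 hij) (Fin.succ_lt_succ_iff.2 hjk) (by simpa using hf)
  · intro h i j k hij hjk hf
    obtain ⟨j, rfl⟩ := Fin.exists_succ_eq.2 (Fin.ne_zero_of_lt hij)
    obtain ⟨k, rfl⟩ := Fin.exists_succ_eq.2 (Fin.ne_zero_of_lt hjk)
    cases i using Fin.cases with
    | zero => exact absurd hf (by simpa using (ha j).not_gt)
    | succ i =>
      simpa using h (Fin.succ_lt_succ_iff.1 hij) (Fin.succ_lt_succ_iff.1 hjk) (by simpa using hf)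

end RiseBounded

lemma Equiv.Perm.eq_of_forall_lt_iff {α : Type*} [LinearOrder α] [Finite α] {σ τ : Perm α}
    (h : ∀ a b, a < b → (σ a < σ b ↔ τ a < τ b)) : σ = τ := by
  have h' : ∀ a b, σ a < σ b ↔ τ a < τ b := by
    intro a b
    rcases lt_trichotomy a b with hab | rfl | hab
    · exact h a b hab
    · simp
    · rw [← not_iff_not, not_lt, not_lt, (σ.injective.ne hab.ne).le_iff_lt,
        (τ.injective.ne hab.ne).le_iff_lt]
      exact h b a hab
  have hmono : StrictMono (τ ∘ σ.symm) := fun x y hxy => (h' _ _).1 (by simpa using hxy)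
  exact Equiv.ext fun a => by simpa using (congrFun hmono.eq_id (σ a)).symm

section Recursion

variable {n : ℕ}

noncomputable def consMax (τ : Perm (Fin n)) : Perm (Fin (n + 1)) :=
  Equiv.ofBijective (Fin.cons (Fin.last n) (Fin.castSucc ∘ τ)) <|
    Finite.injective_iff_bijective.1 <| Fin.cons_injective_iff.2
      ⟨by simp, (Fin.castSucc_injective n).comp τ.injective⟩

lemma coe_consMax (τ : Perm (Fin n)) :
    ⇑(consMax τ) = Fin.cons (Fin.last n) (Fin.castSucc ∘ τ) := rfl

lemma consMax_apply_zero (τ : Perm (Fin n)) : consMax τ 0 = Fin.last n := rfl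

lemma riseBounded_consMax_iff (τ : Perm (Fin n)) : RiseBounded (consMax τ) ↔ RiseBounded τ := by
  rw [coe_consMax, riseBounded_cons_iff (f := Fin.castSucc ∘ τ) fun i => Fin.castSucc_lt_last _,
    riseBounded_comp_iff Fin.strictMono_castSucc]

lemma consMax_injective : Function.Injective (consMax (n := n)) := fun τ τ' h =>
  Equiv.ext fun i =>
    Fin.castSucc_injective _ (by simpa [coe_consMax] using DFunLike.congr_fun h i.succ)

lemma exists_consMax_eq {σ : Perm (Fin (n + 1))} (h : σ 0 = Fin.last n) : ∃ τ, consMax τ = σ := by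
  have hne : ∀ i : Fin n, σ i.succ ≠ Fin.last n := fun i => h ▸ σ.injective.ne (Fin.succ_ne_zero i)
  refine ⟨Equiv.ofBijective (fun i => (σ i.succ).castPred (hne i))
    (Finite.injective_iff_bijective.1 fun i i' hi => ?_), ?_⟩
  · exact Fin.succ_injective _ (σ.injective (Fin.castPred_inj.1 hi))
  · ext i
    cases i using Fin.cases <;> simp [coe_consMax, h]

/-- In one-line notation, `peakAt p` is `p-1 … 1 0 n n-1 … p`. -/
def peakAt (p : Fin (n + 1)) : Perm (Fin (n + 1)) := (Equiv.subRight p).trans Fin.revPerm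

lemma peakAt_apply (p i : Fin (n + 1)) : peakAt p i = Fin.rev (i - p) := rfl

lemma peakAt_self (p : Fin (n + 1)) : peakAt p p = Fin.last n := by simp [peakAt_apply]

lemma peakAt_zero_ne_last {p : Fin (n + 1)} (hp : p ≠ 0) : peakAt p 0 ≠ Fin.last n := by
  rwa [peakAt_apply, Ne, ← Fin.rev_zero, Fin.rev_inj, zero_sub, neg_eq_zero]

lemma riseBounded_peakAt (p : Fin (n + 1)) : RiseBounded (peakAt p) := by
  have hsub : ∀ x : Fin (n + 1),
      ((x - p : Fin (n + 1)) : ℕ) = if p ≤ x then (x : ℕ) - p else n + 1 + x - p := by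
    intro x
    split_ifs with h
    · exact Fin.coe_sub_iff_le.2 h
    · exact Fin.coe_sub_iff_lt.2 (not_le.1 h)
  intro i j k hij hjk h
  simp only [peakAt_apply, Fin.rev_lt_rev] at h ⊢
  simp only [Fin.lt_def, hsub] at h hij hjk ⊢
  split_ifs at h ⊢ <;> omega

lemma RiseBounded.lt_iff_of_apply_eq_last {σ : Perm (Fin (n + 1))} (hσ : RiseBounded σ)
    {p : Fin (n + 1)} (hp : p ≠ 0) (hσp : σ p = Fin.last n) {a b : Fin (n + 1)} (hab : a < b) :
    σ a < σ b ↔ a < p ∧ p ≤ b := by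
  have hlt : ∀ x, x ≠ p → σ x < σ p := fun x hx =>
    hσp ▸ Fin.lt_last_iff_ne_last.2 (hσp ▸ σ.injective.ne hx)
  constructor
  · intro h
    refine ⟨lt_of_not_ge fun hpa => ?_,
      le_of_not_gt fun hbp => (hσ hab hbp h).2.not_gt (hlt b hbp.ne)⟩
    rcases hpa.eq_or_lt with rfl | hpa
    · exact h.not_gt (hlt b hab.ne')
    · have h0p := Fin.pos_iff_ne_zero.2 hp
      have h0a := (hσ h0p hpa (hlt 0 hp.symm)).1
      exact h.not_gt (hσ (h0p.trans hpa) hab h0a).2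
  · rintro ⟨hap, hpb⟩
    rcases hpb.eq_or_lt with rfl | hpb
    · exact hlt a hap.ne
    · exact (hσ hap hpb (hlt a hap.ne)).1

lemma RiseBounded.eq_peakAt {σ : Perm (Fin (n + 1))} (hσ : RiseBounded σ) {p : Fin (n + 1)}
    (hp : p ≠ 0) (hσp : σ p = Fin.last n) : σ = peakAt p :=
  Perm.eq_of_forall_lt_iff fun _ _ hab => by
    rw [hσ.lt_iff_of_apply_eq_last hp hσp hab,
      (riseBounded_peakAt p).lt_iff_of_apply_eq_last hp (peakAt_self p) hab]

lemma card_riseBounded_apply_zero_eq_last :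
    Nat.card {σ : Perm (Fin (n + 1)) // RiseBounded σ ∧ σ 0 = Fin.last n} =
      Nat.card {τ : Perm (Fin n) // RiseBounded τ} := by
  refine (Nat.card_eq_of_bijective
    (fun τ => ⟨consMax τ.1, (riseBounded_consMax_iff _).2 τ.2, consMax_apply_zero _⟩)
    ⟨fun τ τ' h => Subtype.ext (consMax_injective (congrArg Subtype.val h)), fun σ => ?_⟩).symm
  obtain ⟨τ, hτ⟩ := exists_consMax_eq σ.2.2
  exact ⟨⟨τ, (riseBounded_consMax_iff τ).1 (hτ ▸ σ.2.1)⟩, Subtype.ext hτ⟩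

lemma card_riseBounded_apply_zero_ne_last :
    Nat.card {σ : Perm (Fin (n + 1)) // RiseBounded σ ∧ σ 0 ≠ Fin.last n} = n := by
  have hsymm : ∀ σ : Perm (Fin (n + 1)), σ 0 ≠ Fin.last n → σ.symm (Fin.last n) ≠ 0 :=
    fun σ h h' => h ((Equiv.symm_apply_eq σ).1 h').symm
  let e : {σ : Perm (Fin (n + 1)) // RiseBounded σ ∧ σ 0 ≠ Fin.last n} ≃
      {p : Fin (n + 1) // p ≠ 0} :=
    ⟨fun σ => ⟨σ.1.symm (Fin.last n), hsymm σ.1 σ.2.2⟩,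
      fun p => ⟨peakAt p.1, riseBounded_peakAt p.1, peakAt_zero_ne_last p.2⟩,
      fun σ => Subtype.ext (σ.2.1.eq_peakAt (hsymm σ.1 σ.2.2) (σ.1.apply_symm_apply _)).symm,
      fun p => Subtype.ext ((Equiv.symm_apply_eq _).2 (peakAt_self p.1).symm)⟩
  rw [Nat.card_congr e]
  simp

lemma card_riseBounded_succ :
    Nat.card {σ : Perm (Fin (n + 1)) // RiseBounded σ} =
      Nat.card {τ : Perm (Fin n) // RiseBounded τ} + n := by
  calc _ = Nat.card {σ : Perm (Fin (n + 1)) // RiseBounded σ ∧ σ 0 = Fin.last n} +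
        Nat.card {σ : Perm (Fin (n + 1)) // RiseBounded σ ∧ σ 0 ≠ Fin.last n} := by
        classical
        simp only [Nat.card_eq_fintype_card, Fintype.card_subtype]
        rw [← Finset.card_filter_add_card_filter_not (fun σ => σ 0 = Fin.last n),
          Finset.filter_filter, Finset.filter_filter]
    _ = _ := by rw [card_riseBounded_apply_zero_eq_last, card_riseBounded_apply_zero_ne_last]

end Recursion

lemma card_riseBounded (n : ℕ) :
    Nat.card {σ : Perm (Fin n) // RiseBounded σ} = n.choose 2 + 1 := by
  induction n with
  | zero =>
    have : ∀ σ : Perm (Fin 0), RiseBounded σ := fun _ i => i.elim0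
    simp [Nat.card_congr (Equiv.subtypeUnivEquiv this)]
  | succ n ih =>
    simp only [card_riseBounded_succ, ih, Nat.choose_succ_succ', Nat.choose_one_right,
      Nat.reduceAdd]
    omega

theorem card_avoid_123_231_general (n : ℕ) :
    Nat.card {σ : Equiv.Perm (Fin n) //
      Avoids σ (1 : Equiv.Perm (Fin 3)) ∧ Avoids σ (finRotate 3)} = n.choose 2 + 1 := by
  rw [← card_riseBounded n]
  exact Nat.card_congr (Equiv.subtypeEquivRight avoids_123_and_231_iff)

/-- The number of permutations of size `n ≥ 1` avoiding both 123 and 231 is `n.choose 2 + 1`. -/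
theorem card_avoid_123_231 (n : ℕ) (hn : 1 ≤ n) :
    Nat.card {σ : Equiv.Perm (Fin n) //
      Avoids σ (1 : Equiv.Perm (Fin 3)) ∧ Avoids σ (finRotate 3)} = n.choose 2 + 1 :=
  card_avoid_123_231_general n
end

section
/- For every n ≥ 1, the number of permutations of {1,...,n} avoiding both patterns 132 and 231 equals 2^(n-1). -/
variable {n : ℕ}

lemma strictMono3 {a b c : Fin n} (h1 : a < b) (h2 : b < c) : StrictMono ![a, b, c] := by
  intro x y hxy
  fin_cases x <;> fin_cases y <;>
    simp_all <;> first | exact h1 | exact h2 | exact h1.trans h2 | exact absurd hxy (by decide)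

lemma contains_of_231 {σ : Equiv.Perm (Fin n)} {i j k : Fin n} (hij : i < j) (hjk : j < k)
    (h1 : σ k < σ i) (h2 : σ i < σ j) : Contains σ (finRotate 3) := by
  refine ⟨![i, j, k], strictMono3 hij hjk, fun a b => ?_⟩
  fin_cases a <;> fin_cases b <;>
    simp [finRotate, lt_irrefl, h1, h2, h1.trans h2, lt_asymm h1, lt_asymm h2,
      lt_asymm (h1.trans h2)] <;> decide

lemma contains_of_132 {σ : Equiv.Perm (Fin n)} {i j k : Fin n} (hij : i < j) (hjk : j < k)
    (h1 : σ i < σ k) (h2 : σ k < σ j) : Contains σ (Equiv.swap (1 : Fin 3) 2) := by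
  refine ⟨![i, j, k], strictMono3 hij hjk, fun a b => ?_⟩
  fin_cases a <;> fin_cases b <;>
    simp [Equiv.swap_apply_def, lt_irrefl, h1, h2, h1.trans h2, lt_asymm h1, lt_asymm h2,
      lt_asymm (h1.trans h2)] <;> decide

def Valley (σ : Equiv.Perm (Fin n)) (p : Fin n) : Prop :=
  (∀ i j : Fin n, i < j → j ≤ p → σ j < σ i) ∧ (∀ i j : Fin n, p ≤ i → i < j → σ i < σ j)

lemma valley_avoids {σ : Equiv.Perm (Fin n)} {p : Fin n} (h : Valley σ p) :
    Avoids σ (Equiv.swap (1 : Fin 3) 2) ∧ Avoids σ (finRotate 3) := by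
  obtain ⟨hD, hI⟩ := h
  constructor <;> rintro ⟨f, hf, hiff⟩
  · have h01 : σ (f 0) < σ (f 1) := (hiff 0 1).mp (by decide)
    have h21 : σ (f 2) < σ (f 1) := (hiff 2 1).mp (by decide)
    rcases le_total (f 1) p with hp | hp
    · exact absurd (hD (f 0) (f 1) (hf (by decide)) hp) (lt_asymm h01)
    · exact absurd (hI (f 1) (f 2) hp (hf (by decide))) (lt_asymm h21)
  · have h01 : σ (f 0) < σ (f 1) := (hiff 0 1).mp (by decide)
    have h21 : σ (f 2) < σ (f 1) := (hiff 2 1).mp (by decide)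
    rcases le_total (f 1) p with hp | hp
    · exact absurd (hD (f 0) (f 1) (hf (by decide)) hp) (lt_asymm h01)
    · exact absurd (hI (f 1) (f 2) hp (hf (by decide))) (lt_asymm h21)

lemma avoids_valley [NeZero n] {σ : Equiv.Perm (Fin n)}
    (h1 : Avoids σ (Equiv.swap (1 : Fin 3) 2)) (h2 : Avoids σ (finRotate 3)) :
    Valley σ (σ.symm 0) := by
  set p := σ.symm 0 with hp
  have hσp : σ p = 0 := σ.apply_symm_apply 0
  constructor
  · intro i j hij hjp
    rcases eq_or_lt_of_le hjp with rfl | hjp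
    · rw [hσp]
      exact (Fin.pos_iff_ne_zero' _).mpr (fun hz => (hij.ne (σ.injective (hz.trans hσp.symm))).elim)
    · by_contra hc
      push_neg at hc
      have hne : σ i ≠ σ j := fun e => hij.ne (σ.injective e)
      have hlt : σ i < σ j := lt_of_le_of_ne hc hne
      have h0i : σ p < σ i := by
        rw [hσp]
        exact (Fin.pos_iff_ne_zero' _).mpr (fun hz => ((hij.trans hjp).ne (σ.injective (hz.trans hσp.symm))).elim)
      exact h2 (contains_of_231 hij hjp h0i hlt)
  · intro i j hpi hij
    rcases eq_or_lt_of_le hpi with rfl | hpi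
    · rw [hσp]
      exact (Fin.pos_iff_ne_zero' _).mpr (fun hz => (hij.ne' (σ.injective (hz.trans hσp.symm))).elim)
    · by_contra hc
      push_neg at hc
      have hne : σ j ≠ σ i := fun e => hij.ne' (σ.injective e)
      have hlt : σ j < σ i := lt_of_le_of_ne hc hne
      have h0j : σ p < σ j := by
        rw [hσp]
        exact (Fin.pos_iff_ne_zero' _).mpr (fun hz => ((hpi.trans hij).ne' (σ.injective (hz.trans hσp.symm))).elim)
      exact h1 (contains_of_132 hpi hij h0j hlt)

def Phi [NeZero n] (σ : Equiv.Perm (Fin n)) : Finset (Fin n) :=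
  Finset.univ.filter (fun v => σ.symm v < σ.symm 0)

lemma zero_notMem_Phi [NeZero n] (σ : Equiv.Perm (Fin n)) : (0 : Fin n) ∉ Phi σ := by
  simp [Phi]

lemma card_Phi [NeZero n] (σ : Equiv.Perm (Fin n)) : (Phi σ).card = (σ.symm 0 : ℕ) := by
  have h1 : Phi σ = Finset.image σ (Finset.univ.filter fun i => i < σ.symm 0) := by
    ext v
    simp only [Phi, Finset.mem_filter, Finset.mem_univ, true_and, Finset.mem_image]
    constructor
    · intro hv; exact ⟨σ.symm v, hv, σ.apply_symm_apply v⟩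
    · rintro ⟨i, hi, rfl⟩; simpa using hi
  have h2 : (Finset.univ.filter fun i : Fin n => i < σ.symm 0) = Finset.Iio (σ.symm 0) := by
    ext i; simp
  rw [h1, Finset.card_image_of_injective _ σ.injective, h2, Fin.card_Iio]

lemma valley_eq_of_Phi_eq [NeZero n] {σ τ : Equiv.Perm (Fin n)}
    (hσ : Valley σ (σ.symm 0)) (hτ : Valley τ (τ.symm 0)) (hS : Phi σ = Phi τ) : σ = τ := by
  obtain ⟨S, hSdef⟩ : ∃ S, Phi σ = S := ⟨_, rfl⟩
  obtain ⟨s, hsdef⟩ : ∃ s, S.card = s := ⟨_, rfl⟩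
  have hsσ : (σ.symm 0 : ℕ) = s := by rw [← hsdef, ← hSdef]; exact (card_Phi σ).symm
  have hsτ : (τ.symm 0 : ℕ) = s := by
    rw [← hsdef, ← hSdef, hS]; exact (card_Phi τ).symm
  have hsn : s < n := by have := (σ.symm 0).isLt; omega
  have key1 : ∀ (ρ : Equiv.Perm (Fin n)), Valley ρ (ρ.symm 0) → (ρ.symm 0 : ℕ) = s →
      Phi ρ = S → (fun k : Fin s => ρ ⟨s - 1 - (k : ℕ), by omega⟩) =
        S.orderEmbOfFin hsdef := by
    intro ρ hval hs hphi
    apply Finset.orderEmbOfFin_unique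
    · intro x
      rw [← hphi]
      simp only [Phi, Finset.mem_filter, Finset.mem_univ, true_and, Equiv.symm_apply_apply]
      rw [Fin.lt_def, hs]
      show s - 1 - (x : ℕ) < s
      have := x.isLt; omega
    · intro x y hxy
      have hxy' : (x : ℕ) < (y : ℕ) := hxy
      have hy := y.isLt
      refine hval.1 ⟨s - 1 - (y : ℕ), by omega⟩ ⟨s - 1 - (x : ℕ), by omega⟩ ?_ ?_
      · exact Fin.mk_lt_mk.mpr (by omega)
      · rw [Fin.le_def]; show s - 1 - (x : ℕ) ≤ ((ρ.symm 0 : Fin n) : ℕ); omega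
  have key2 : ∀ (ρ : Equiv.Perm (Fin n)), Valley ρ (ρ.symm 0) → (ρ.symm 0 : ℕ) = s →
      Phi ρ = S → (fun k : Fin (n - s) => ρ ⟨s + (k : ℕ), by have := k.isLt; omega⟩) =
        Sᶜ.orderEmbOfFin (by rw [Finset.card_compl, hsdef]; simp) := by
    intro ρ hval hs hphi
    apply Finset.orderEmbOfFin_unique
    · intro x
      rw [← hphi]
      simp only [Finset.mem_compl, Phi, Finset.mem_filter, Finset.mem_univ, true_and,
        Equiv.symm_apply_apply, not_lt]
      rw [Fin.le_def, hs]
      show s ≤ s + (x : ℕ); omega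
    · intro x y hxy
      have hxy' : (x : ℕ) < (y : ℕ) := hxy
      refine hval.2 _ _ ?_ ?_
      · rw [Fin.le_def, hs]; show s ≤ s + (x : ℕ); omega
      · exact Fin.mk_lt_mk.mpr (by omega)
  have e1 := (key1 σ hσ hsσ hSdef).trans (key1 τ hτ hsτ (hS.symm.trans hSdef)).symm
  have e2 := (key2 σ hσ hsσ hSdef).trans (key2 τ hτ hsτ (hS.symm.trans hSdef)).symm
  apply Equiv.ext
  intro i
  rcases lt_or_ge (i : ℕ) s with hi | hi
  · have h1 := congrFun e1 ⟨s - 1 - (i : ℕ), by omega⟩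
    simp only [] at h1
    have hidx : (⟨s - 1 - (s - 1 - (i : ℕ)), by omega⟩ : Fin n) = i := by
      apply Fin.ext; show s - 1 - (s - 1 - (i : ℕ)) = i; omega
    rwa [hidx] at h1
  · have h1 := congrFun e2 ⟨(i : ℕ) - s, by have := i.isLt; omega⟩
    simp only [] at h1
    have hidx : (⟨s + ((i : ℕ) - s), by have := i.isLt; omega⟩ : Fin n) = i := by
      apply Fin.ext; show s + ((i : ℕ) - s) = i; omega
    rwa [hidx] at h1

set_option maxHeartbeats 1000000 in
lemma exists_valley_Phi [NeZero n] (S : Finset (Fin n)) (hS0 : (0 : Fin n) ∉ S) :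
    ∃ σ : Equiv.Perm (Fin n), Valley σ (σ.symm 0) ∧ Phi σ = S := by
  obtain ⟨s, hsdef⟩ : ∃ s, S.card = s := ⟨_, rfl⟩
  have hTcard : Sᶜ.card = n - s := by rw [Finset.card_compl, hsdef]; simp
  have hsle : s ≤ n := by rw [← hsdef]; simpa using Finset.card_le_univ S
  have h0T : (0 : Fin n) ∈ Sᶜ := Finset.mem_compl.mpr hS0
  have hTpos : 0 < n - s := by
    have h1 := Finset.card_pos.mpr ⟨0, h0T⟩; omega
  have hsn : s < n := by omega
  obtain ⟨f, feval1, feval2⟩ :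
      ∃ f : Fin n → Fin n,
        (∀ (i : Fin n) (_ : (i : ℕ) < s),
          f i = S.orderEmbOfFin hsdef ⟨s - 1 - (i : ℕ), by omega⟩) ∧
        (∀ (i : Fin n) (_ : ¬ (i : ℕ) < s),
          f i = Sᶜ.orderEmbOfFin hTcard ⟨(i : ℕ) - s, by have := i.isLt; omega⟩) :=
    ⟨fun i =>
      if h : (i : ℕ) < s then S.orderEmbOfFin hsdef ⟨s - 1 - (i : ℕ), by omega⟩
      else Sᶜ.orderEmbOfFin hTcard ⟨(i : ℕ) - s, by have := i.isLt; omega⟩,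
      fun i h => dif_pos h, fun i h => dif_neg h⟩
  have hmemS : ∀ (i : Fin n), (i : ℕ) < s → f i ∈ S := by
    intro i h; rw [feval1 i h]; exact Finset.orderEmbOfFin_mem _ _ _
  have hmemT : ∀ (i : Fin n), ¬ (i : ℕ) < s → f i ∈ Sᶜ := by
    intro i h; rw [feval2 i h]; exact Finset.orderEmbOfFin_mem _ _ _
  have hinj : Function.Injective f := by
    intro i j hij
    by_cases hi : (i : ℕ) < s <;> by_cases hj : (j : ℕ) < s
    · rw [feval1 i hi, feval1 j hj] at hij
      have h2 := congrArg Fin.val ((S.orderEmbOfFin hsdef).injective hij)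
      have h3 : s - 1 - (i : ℕ) = s - 1 - (j : ℕ) := h2
      exact Fin.ext (by omega)
    · exact absurd (hij ▸ hmemS i hi) (Finset.mem_compl.mp (hmemT j hj))
    · exact absurd (hij.symm ▸ hmemS j hj) (Finset.mem_compl.mp (hmemT i hi))
    · rw [feval2 i hi, feval2 j hj] at hij
      have h2 := congrArg Fin.val ((Sᶜ.orderEmbOfFin hTcard).injective hij)
      have h3 : (i : ℕ) - s = (j : ℕ) - s := h2
      have := i.isLt; have := j.isLt
      exact Fin.ext (by omega)
  obtain ⟨σ, hσf⟩ : ∃ σ : Equiv.Perm (Fin n), ∀ i, σ i = f i :=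
    ⟨Equiv.ofBijective f (Finite.injective_iff_bijective.mp hinj), fun _ => rfl⟩
  have hmin : Sᶜ.orderEmbOfFin hTcard ⟨0, hTpos⟩ = 0 :=
    (Finset.orderEmbOfFin_zero hTcard hTpos).trans
      (le_antisymm (Finset.min'_le _ 0 h0T) (Fin.zero_le _))
  have hfs : σ ⟨s, hsn⟩ = 0 := by
    rw [hσf, feval2 ⟨s, hsn⟩ (by exact lt_irrefl s)]
    have hidx : (⟨((⟨s, hsn⟩ : Fin n) : ℕ) - s, by omega⟩ : Fin (n - s)) = ⟨0, hTpos⟩ :=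
      Fin.ext (Nat.sub_self s)
    rw [hidx, hmin]
  have hsymm0 : σ.symm 0 = ⟨s, hsn⟩ := by
    apply σ.injective; rw [σ.apply_symm_apply, hfs]
  have hval : Valley σ (σ.symm 0) := by
    rw [hsymm0]
    constructor
    · intro i j hij hjs
      have hij' : (i : ℕ) < j := hij
      have hjs' : (j : ℕ) ≤ s := hjs
      have hi : (i : ℕ) < s := by omega
      rw [hσf, hσf]
      rcases lt_or_eq_of_le hjs' with hj | hj
      · rw [feval1 i hi, feval1 j hj]
        exact (S.orderEmbOfFin hsdef).strictMono (Fin.mk_lt_mk.mpr (by omega))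
      · have hjeq : j = ⟨s, hsn⟩ := Fin.ext hj
        rw [hjeq, ← hσf, hfs]
        refine (Fin.pos_iff_ne_zero' _).mpr (fun hz => ?_)
        exact hS0 (hz ▸ hmemS i hi)
    · intro i j his hij
      have his' : s ≤ (i : ℕ) := his
      have hij' : (i : ℕ) < j := hij
      rw [hσf, hσf, feval2 i (by omega), feval2 j (by omega)]
      exact (Sᶜ.orderEmbOfFin hTcard).strictMono (Fin.mk_lt_mk.mpr (by omega))
  refine ⟨σ, hval, ?_⟩
  ext v
  simp only [Phi, Finset.mem_filter, Finset.mem_univ, true_and, hsymm0]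
  constructor
  · intro hv
    have hv' : ((σ.symm v : Fin n) : ℕ) < s := hv
    have h1 : v = f (σ.symm v) := by rw [← hσf, σ.apply_symm_apply]
    rw [h1]
    exact hmemS _ hv'
  · intro hv
    have hr : v ∈ Set.range (S.orderEmbOfFin hsdef) := by
      rw [Finset.range_orderEmbOfFin]; exact hv
    obtain ⟨k, hk⟩ := hr
    have hks := k.isLt
    have hkf : σ ⟨s - 1 - (k : ℕ), by omega⟩ = v := by
      rw [hσf, feval1 _ (by show s - 1 - (k : ℕ) < s; omega)]
      rw [← hk]
      congr 1
      exact Fin.ext (by show s - 1 - (s - 1 - (k : ℕ)) = k; omega)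
    have h2 : σ.symm v = ⟨s - 1 - (k : ℕ), by omega⟩ := by
      apply σ.injective; rw [σ.apply_symm_apply, hkf]
    rw [h2]
    exact Fin.mk_lt_mk.mpr (by omega)

/-- The number of permutations of size `n ≥ 1` avoiding both 132 and 231 is `2^(n-1)`. -/
theorem card_avoid_132_231 (n : ℕ) (hn : 1 ≤ n) :
    Nat.card {σ : Equiv.Perm (Fin n) //
      Avoids σ (Equiv.swap (1 : Fin 3) 2) ∧ Avoids σ (finRotate 3)} = 2 ^ (n - 1) := by
  haveI : NeZero n := ⟨by omega⟩
  have hbij : Function.Bijective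
      (fun σ : {σ : Equiv.Perm (Fin n) //
          Avoids σ (Equiv.swap (1 : Fin 3) 2) ∧ Avoids σ (finRotate 3)} =>
        (⟨Phi σ.1, zero_notMem_Phi σ.1⟩ : {S : Finset (Fin n) // (0 : Fin n) ∉ S})) := by
    constructor
    · rintro ⟨σ, hσ1, hσ2⟩ ⟨τ, hτ1, hτ2⟩ h
      have h' : Phi σ = Phi τ := congrArg Subtype.val h
      exact Subtype.ext (valley_eq_of_Phi_eq (avoids_valley hσ1 hσ2) (avoids_valley hτ1 hτ2) h')
    · rintro ⟨S, hS0⟩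
      obtain ⟨σ, hval, hphi⟩ := exists_valley_Phi S hS0
      exact ⟨⟨σ, valley_avoids hval⟩, Subtype.ext hphi⟩
  rw [Nat.card_eq_of_bijective _ hbij, Nat.card_eq_fintype_card, Fintype.card_subtype]
  have hpow : (Finset.univ.filter fun S : Finset (Fin n) => (0 : Fin n) ∉ S)
      = (Finset.univ.erase (0 : Fin n)).powerset := by
    ext S
    simp [Finset.mem_powerset, Finset.subset_erase]
  rw [hpow, Finset.card_powerset, Finset.card_erase_of_mem (Finset.mem_univ _),
    Finset.card_univ, Fintype.card_fin]
end

section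
/- For every n ≥ 1, the number of permutations of {1,...,n} avoiding both patterns 231 and 312 equals 2^(n-1). -/
namespace Av231312

theorem strictMono3 {n : ℕ} {i j k : Fin n} (h1 : i < j) (h2 : j < k) :
    StrictMono ![i, j, k] := by
  intro a b hab
  fin_cases a <;> fin_cases b <;>
    simp only [Matrix.cons_val_zero, Matrix.cons_val_one, Matrix.head_cons,
      Matrix.cons_val_two, Matrix.tail_cons] <;>
    first | (exact absurd hab (by decide)) | exact h1 | exact h2 | exact h1.trans h2

theorem contains231 {n : ℕ} (σ : Equiv.Perm (Fin n)) {i j k : Fin n} (h1 : i < j) (h2 : j < k)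
    (ha : σ k < σ i) (hb : σ i < σ j) : Contains σ (finRotate 3) := by
  refine ⟨![i, j, k], strictMono3 h1 h2, ?_⟩
  have ha' : (σ k : ℕ) < σ i := ha
  have hb' : (σ i : ℕ) < σ j := hb
  intro a b
  fin_cases a <;> fin_cases b <;>
    simp only [show ((⟨0, by norm_num⟩ : Fin 3)) = 0 from rfl,
      show ((⟨1, by norm_num⟩ : Fin 3)) = 1 from rfl,
      show ((⟨2, by norm_num⟩ : Fin 3)) = 2 from rfl,
      Matrix.cons_val_zero, Matrix.cons_val_one, Matrix.head_cons,
      Matrix.cons_val_two, Matrix.tail_cons, Fin.lt_def] <;>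
    (constructor <;> intro h <;>
      first | decide | omega | (exact absurd h (by decide)) | (exact absurd h (by omega)))

theorem contains312 {n : ℕ} (σ : Equiv.Perm (Fin n)) {i j k : Fin n} (h1 : i < j) (h2 : j < k)
    (ha : σ j < σ k) (hb : σ k < σ i) : Contains σ (finRotate 3)⁻¹ := by
  refine ⟨![i, j, k], strictMono3 h1 h2, ?_⟩
  have ha' : (σ j : ℕ) < σ k := ha
  have hb' : (σ k : ℕ) < σ i := hb
  intro a b
  fin_cases a <;> fin_cases b <;>
    simp only [show ((⟨0, by norm_num⟩ : Fin 3)) = 0 from rfl,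
      show ((⟨1, by norm_num⟩ : Fin 3)) = 1 from rfl,
      show ((⟨2, by norm_num⟩ : Fin 3)) = 2 from rfl,
      Matrix.cons_val_zero, Matrix.cons_val_one, Matrix.head_cons,
      Matrix.cons_val_two, Matrix.tail_cons, Fin.lt_def] <;>
    (constructor <;> intro h <;>
      first | decide | omega | (exact absurd h (by decide)) | (exact absurd h (by omega)))

theorem of_contains231 {n : ℕ} {σ : Equiv.Perm (Fin n)} (h : Contains σ (finRotate 3)) :
    ∃ i j k : Fin n, i < j ∧ j < k ∧ σ k < σ i ∧ σ i < σ j := by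
  obtain ⟨f, hf, hiff⟩ := h
  exact ⟨f 0, f 1, f 2, hf (by decide), hf (by decide),
    (hiff 2 0).1 (by decide), (hiff 0 1).1 (by decide)⟩

theorem of_contains312 {n : ℕ} {σ : Equiv.Perm (Fin n)} (h : Contains σ (finRotate 3)⁻¹) :
    ∃ i j k : Fin n, i < j ∧ j < k ∧ σ j < σ k ∧ σ k < σ i := by
  obtain ⟨f, hf, hiff⟩ := h
  exact ⟨f 0, f 1, f 2, hf (by decide), hf (by decide),
    (hiff 1 2).1 (by decide), (hiff 2 0).1 (by decide)⟩


theorem hex' (B : ℕ → Bool) (m i : ℕ) : ∃ j, i ≤ j ∧ (B j = false ∨ m ≤ j) :=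
  ⟨max i m, le_max_left _ _, Or.inr (le_max_right _ _)⟩

/-- least `j ≥ i` with `B j = false` (where `B` is false from `m` on). -/
def runEnd (B : ℕ → Bool) (m i : ℕ) : ℕ := Nat.find (hex' B m i)

/-- least `t` such that `B` is true on `[t, i)`. -/
def runStart (B : ℕ → Bool) (i : ℕ) : ℕ :=
  Nat.find (p := fun t => ∀ k < i, t ≤ k → B k = true)
    ⟨i, fun k hk hik => absurd hik (by omega)⟩

variable {B : ℕ → Bool} {m : ℕ}

theorem le_runEnd (i : ℕ) : i ≤ runEnd B m i := (Nat.find_spec (hex' B m i)).1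

theorem runEnd_false (hB : ∀ j, m ≤ j → B j = false) (i : ℕ) : B (runEnd B m i) = false := by
  rcases (Nat.find_spec (hex' B m i)).2 with h | h
  · exact h
  · exact hB _ h

theorem runEnd_le {i : ℕ} (h : i ≤ m) : runEnd B m i ≤ m :=
  Nat.find_le ⟨h, Or.inr le_rfl⟩

theorem runEnd_true {i k : ℕ} (h1 : i ≤ k) (h2 : k < runEnd B m i) : B k = true := by
  have := Nat.find_min (hex' B m i) h2
  simp only [not_and, not_or, Bool.not_eq_false, not_le] at this
  exact (this h1).1

theorem runStart_le (i : ℕ) : runStart B i ≤ i :=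
  Nat.find_le (fun k hk hik => absurd hik (by omega))

theorem runStart_true {i k : ℕ} (h1 : runStart B i ≤ k) (h2 : k < i) : B k = true :=
  Nat.find_spec (p := fun t => ∀ k < i, t ≤ k → B k = true)
    ⟨i, fun k hk hik => absurd hik (by omega)⟩ k h2 h1

theorem runStart_pred_false {i : ℕ} (h : 0 < runStart B i) : B (runStart B i - 1) = false := by
  have hmin : ¬ ∀ k < i, runStart B i - 1 ≤ k → B k = true :=
    Nat.find_min (p := fun t => ∀ k < i, t ≤ k → B k = true)
      ⟨i, fun k hk hik => absurd hik (by omega)⟩ (show runStart B i - 1 < runStart B i by omega)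
  push_neg at hmin
  obtain ⟨k, hk, h1, h2⟩ := hmin
  rcases Nat.lt_or_ge k (runStart B i) with h3 | h3
  · have : k = runStart B i - 1 := by omega
    subst this; simpa using h2
  · exact absurd (runStart_true h3 hk) (by simpa using h2)

/-- run membership: for `k ∈ [runStart i, runEnd i)`, `B` is true. -/
theorem run_true {i k : ℕ} (h1 : runStart B i ≤ k) (h2 : k < runEnd B m i) : B k = true := by
  rcases Nat.lt_or_ge k i with h | h
  · exact runStart_true h1 h
  · exact runEnd_true h h2

theorem runEnd_eq_of_mem (hB : ∀ j, m ≤ j → B j = false) {i j : ℕ}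
    (h1 : runStart B i ≤ j) (h2 : j ≤ runEnd B m i) : runEnd B m j = runEnd B m i := by
  have hle : runEnd B m j ≤ runEnd B m i :=
    Nat.find_le ⟨h2, Or.inl (runEnd_false hB i)⟩
  rcases Nat.lt_or_ge (runEnd B m j) (runEnd B m i) with h | h
  · have hj := le_runEnd (B := B) (m := m) j
    have : B (runEnd B m j) = true := run_true (le_trans h1 hj) h
    rw [runEnd_false hB j] at this; exact absurd this (by simp)
  · omega

theorem runStart_eq_of_mem {i j : ℕ}
    (h1 : runStart B i ≤ j) (h2 : j ≤ runEnd B m i) : runStart B j = runStart B i := by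
  have hle : runStart B j ≤ runStart B i := by
    apply Nat.find_le
    intro k hk hsk
    exact run_true (m := m) hsk (lt_of_lt_of_le hk h2)
  rcases Nat.lt_or_ge (runStart B j) (runStart B i) with h | h
  · have h0 : 0 < runStart B i := by omega
    have hf := runStart_pred_false h0
    have ht : B (runStart B i - 1) = true :=
      runStart_true (i := j) (by omega) (by omega)
    rw [hf] at ht; exact absurd ht (by simp)
  · omega

theorem runEnd_of_false {i : ℕ} (h : B i = false) : runEnd B m i = i := by
  have h1 := le_runEnd (B := B) (m := m) i
  have h2 : runEnd B m i ≤ i := Nat.find_le ⟨le_rfl, Or.inl h⟩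
  omega

theorem runStart_succ_of_false {i : ℕ} (h : B i = false) : runStart B (i + 1) = i + 1 := by
  have h1 := runStart_le (B := B) (i + 1)
  rcases Nat.lt_or_ge (runStart B (i+1)) (i+1) with h2 | h2
  · have := runStart_true (B := B) (i := i+1) (k := i) (by omega) (by omega)
    rw [h] at this; exact absurd this (by simp)
  · omega


/-! ### The layered permutation associated to a descent word -/

def ext {m : ℕ} (w : Fin m → Bool) : ℕ → Bool := fun i => if h : i < m then w ⟨i, h⟩ else false

theorem ext_false {m : ℕ} (w : Fin m → Bool) : ∀ j, m ≤ j → ext w j = false := by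
  intro j hj; simp [ext, Nat.not_lt.2 hj]

variable {m : ℕ}

theorem layered_aux (w : Fin m → Bool) (i : Fin (m + 1)) :
    runStart (ext w) i + (runEnd (ext w) m i - i) < m + 1 := by
  have h1 := runStart_le (B := ext w) (i : ℕ)
  have h2 := le_runEnd (B := ext w) (m := m) (i : ℕ)
  have h3 := runEnd_le (B := ext w) (m := m) (i := (i : ℕ)) (by omega)
  omega

def layeredFun (w : Fin m → Bool) : Fin (m + 1) → Fin (m + 1) :=
  fun i => ⟨runStart (ext w) i + (runEnd (ext w) m i - i), layered_aux w i⟩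

theorem layeredFun_involutive (w : Fin m → Bool) : Function.Involutive (layeredFun w) := by
  intro i
  set B := ext w with hBdef
  have hB := ext_false w
  set t := runStart B (i : ℕ) with htdef
  set s := runEnd B m (i : ℕ) with hsdef
  have h1 : t ≤ (i : ℕ) := runStart_le _
  have h2 : (i : ℕ) ≤ s := le_runEnd _
  have hv1 : t ≤ t + (s - (i : ℕ)) := by omega
  have hv2 : t + (s - (i : ℕ)) ≤ s := by omega
  have hts : runStart B (t + (s - (i : ℕ))) = t := runStart_eq_of_mem (m := m) hv1 hv2
  have hss : runEnd B m (t + (s - (i : ℕ))) = s := runEnd_eq_of_mem hB hv1 hv2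
  simp only [layeredFun]
  apply Fin.ext
  simp only [← hBdef, ← htdef, ← hsdef, hts, hss]
  omega

def layeredPerm (w : Fin m → Bool) : Equiv.Perm (Fin (m + 1)) :=
  (layeredFun_involutive w).toPerm

/-- The key property: `σ i + i = σ j + j` whenever `i < j` and `σ j < σ i`. -/
def P {n : ℕ} (σ : Equiv.Perm (Fin n)) : Prop :=
  ∀ i j : Fin n, i < j → σ j < σ i → (σ i : ℕ) + (i : ℕ) = (σ j : ℕ) + (j : ℕ)

theorem layeredPerm_P (w : Fin m → Bool) : P (layeredPerm w) := by
  intro i j hij hji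
  have hB := ext_false w
  have hijn : (i : ℕ) < (j : ℕ) := hij
  have h1 : runStart (ext w) (i:ℕ) ≤ (i:ℕ) := runStart_le _
  have h2 : (i:ℕ) ≤ runEnd (ext w) m (i:ℕ) := le_runEnd _
  have h1' : runStart (ext w) (j:ℕ) ≤ (j:ℕ) := runStart_le _
  have h2' : (j:ℕ) ≤ runEnd (ext w) m (j:ℕ) := le_runEnd _
  have hi : (layeredPerm w i : ℕ) = runStart (ext w) (i:ℕ) + (runEnd (ext w) m (i:ℕ) - (i:ℕ)) := rfl
  have hj : (layeredPerm w j : ℕ) = runStart (ext w) (j:ℕ) + (runEnd (ext w) m (j:ℕ) - (j:ℕ)) := rfl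
  have hji' : (layeredPerm w j : ℕ) < (layeredPerm w i : ℕ) := hji
  rcases le_or_gt (j : ℕ) (runEnd (ext w) m (i:ℕ)) with h | h
  · -- same run
    have hts : runStart (ext w) (j:ℕ) = runStart (ext w) (i:ℕ) := runStart_eq_of_mem (m := m) (by omega) h
    have hss : runEnd (ext w) m (j:ℕ) = runEnd (ext w) m (i:ℕ) := runEnd_eq_of_mem hB (by omega) h
    omega
  · -- different runs: no inversion, contradiction
    exfalso
    have hst : runEnd (ext w) m (i:ℕ) < runStart (ext w) (j:ℕ) := by
      rcases Nat.lt_or_ge (runEnd (ext w) m (i:ℕ)) (runStart (ext w) (j:ℕ)) with hh | hh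
      · exact hh
      · have h3 : ext w (runEnd (ext w) m (i:ℕ)) = true := runStart_true hh h
        rw [runEnd_false hB] at h3; exact absurd h3 (by simp)
    omega

/-- descent word of a permutation of `Fin (m+1)`. -/
def word (σ : Equiv.Perm (Fin (m + 1))) : Fin m → Bool :=
  fun i => decide (σ i.succ < σ i.castSucc)

theorem word_layeredPerm (w : Fin m → Bool) : word (layeredPerm w) = w := by
  funext i
  have hB := ext_false w
  have hwB : w i = ext w (i : ℕ) := by simp [ext, i.isLt]
  have h1 : runStart (ext w) (i:ℕ) ≤ (i:ℕ) := runStart_le _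
  have h2 : (i:ℕ) ≤ runEnd (ext w) m (i:ℕ) := le_runEnd _
  have hvc : (layeredPerm w i.castSucc : ℕ)
      = runStart (ext w) (i:ℕ) + (runEnd (ext w) m (i:ℕ) - (i:ℕ)) := rfl
  have hvs : (layeredPerm w i.succ : ℕ)
      = runStart (ext w) ((i:ℕ)+1) + (runEnd (ext w) m ((i:ℕ)+1) - ((i:ℕ)+1)) := rfl
  rw [word]
  cases hwi : w i with
  | true =>
    have hBi : ext w (i:ℕ) = true := by rw [← hwB, hwi]
    have hs1 : (i:ℕ) + 1 ≤ runEnd (ext w) m (i:ℕ) := by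
      rcases Nat.lt_or_ge (i:ℕ) (runEnd (ext w) m (i:ℕ)) with hh | hh
      · omega
      · have hi : runEnd (ext w) m (i:ℕ) = (i:ℕ) := by omega
        have h3 := runEnd_false hB (i:ℕ)
        rw [hi, hBi] at h3; exact absurd h3 (by simp)
    have hts : runStart (ext w) ((i:ℕ)+1) = runStart (ext w) (i:ℕ) :=
      runStart_eq_of_mem (m := m) (by omega) hs1
    have hss : runEnd (ext w) m ((i:ℕ)+1) = runEnd (ext w) m (i:ℕ) :=
      runEnd_eq_of_mem hB (by omega) hs1
    simp only [decide_eq_true_eq, Fin.lt_def]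
    omega
  | false =>
    have hBi : ext w (i:ℕ) = false := by rw [← hwB, hwi]
    have hsi : runEnd (ext w) m (i:ℕ) = (i:ℕ) := runEnd_of_false hBi
    have hti : runStart (ext w) ((i:ℕ)+1) = (i:ℕ)+1 := runStart_succ_of_false hBi
    have h2' : (i:ℕ)+1 ≤ runEnd (ext w) m ((i:ℕ)+1) := le_runEnd _
    simp only [decide_eq_false_iff_not, not_lt, Fin.le_def]
    omega


/-! ### Every `P`-permutation is layered -/

def pval (σ : Equiv.Perm (Fin (m + 1))) (k : ℕ) : ℕ :=
  if h : k < m + 1 then (σ ⟨k, h⟩ : ℕ) else k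

theorem pval_eq (σ : Equiv.Perm (Fin (m + 1))) (x : Fin (m + 1)) :
    pval σ (x : ℕ) = (σ x : ℕ) := by
  rw [pval, dif_pos x.isLt]

theorem pval_eq' (σ : Equiv.Perm (Fin (m + 1))) {k : ℕ} (h : k < m + 1) :
    pval σ k = (σ ⟨k, h⟩ : ℕ) := dif_pos h

theorem pval_le (σ : Equiv.Perm (Fin (m + 1))) {k : ℕ} (h : k ≤ m) : pval σ k ≤ m := by
  rw [pval, dif_pos (by omega)]
  exact Nat.lt_succ_iff.1 (σ _).isLt

theorem pval_inj (σ : Equiv.Perm (Fin (m + 1))) {k l : ℕ} (hk : k ≤ m) (hl : l ≤ m)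
    (h : pval σ k = pval σ l) : k = l := by
  rw [pval, dif_pos (by omega : k < m + 1), pval, dif_pos (by omega : l < m + 1)] at h
  have := σ.injective (Fin.ext h)
  exact congrArg Fin.val this

theorem ext_word_iff (σ : Equiv.Perm (Fin (m + 1))) {k : ℕ} (h : k < m) :
    ext (word σ) k = true ↔ pval σ (k + 1) < pval σ k := by
  rw [ext, dif_pos h, word]
  have h1 : ((⟨k, h⟩ : Fin m).succ : ℕ) = k + 1 := rfl
  have h2 : ((⟨k, h⟩ : Fin m).castSucc : ℕ) = k := rfl
  rw [pval, dif_pos (by omega : k + 1 < m + 1), pval, dif_pos (by omega : k < m + 1)]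
  simp only [decide_eq_true_eq, Fin.lt_def]
  constructor <;> (intro hh; convert hh using 2 <;> exact (Fin.ext (by simp [h1, h2])))

section PP

variable {σ : Equiv.Perm (Fin (m + 1))} (hP : P σ)
include hP

theorem pval_P {a b : ℕ} (hab : a < b) (hb : b ≤ m) (h : pval σ b < pval σ a) :
    pval σ a + a = pval σ b + b := by
  have ha' : a < m + 1 := by omega
  have hb' : b < m + 1 := by omega
  simp only [pval, dif_pos ha', dif_pos hb'] at h ⊢
  exact hP ⟨a, ha'⟩ ⟨b, hb'⟩ (Fin.mk_lt_mk.2 hab) h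

/-- `g` is weakly monotone -/
theorem pval_mono {a b : ℕ} (hab : a ≤ b) (hb : b ≤ m) :
    pval σ a + a ≤ pval σ b + b := by
  induction b, hab using Nat.le_induction with
  | base => exact le_refl _
  | succ b hab ih =>
    show pval σ a + a ≤ pval σ (b + 1) + (b + 1)
    have h1 : pval σ a + a ≤ pval σ b + b := ih (by omega)
    rcases Nat.lt_or_ge (pval σ (b + 1)) (pval σ b) with h | h
    · have := pval_P hP (by omega : b < b + 1) hb h
      omega
    · omega

/-- no inversion across an ascent -/
theorem pval_cross {k a b : ℕ} (hk : k < m) (hasc : ext (word σ) k = false)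
    (ha : a ≤ k) (hb : k + 1 ≤ b) (hbm : b ≤ m) : pval σ a < pval σ b := by
  have hne : pval σ a ≠ pval σ b := fun h => by
    have := pval_inj σ (by omega) hbm h; omega
  rcases Nat.lt_or_ge (pval σ a) (pval σ b) with h | h
  · exact h
  have hinv : pval σ b < pval σ a := by omega
  have hg : pval σ a + a = pval σ b + b := pval_P hP (by omega) hbm hinv
  have h1 : pval σ a + a ≤ pval σ k + k := pval_mono hP ha (by omega)
  have h2 : pval σ (k + 1) + (k + 1) ≤ pval σ b + b := pval_mono hP hb hbm
  have h3 : ¬ (pval σ (k + 1) < pval σ k) := fun hh => by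
    rw [(ext_word_iff σ hk).2 hh] at hasc; exact absurd hasc (by simp)
  omega

/-- pigeonhole: positions to the left of an ascent have small values -/
theorem pval_low {k a : ℕ} (hk : k < m) (hasc : ext (word σ) k = false)
    (ha : a ≤ k) : pval σ a ≤ k := by
  by_contra hcon
  push_neg at hcon
  have ha' : a < m + 1 := by omega
  have hsub : (Finset.Ioi (⟨k, by omega⟩ : Fin (m + 1))).image σ
      ⊆ Finset.Ioi (σ ⟨a, ha'⟩) := by
    intro y hy
    simp only [Finset.mem_image, Finset.mem_Ioi] at hy ⊢
    obtain ⟨b, hb, rfl⟩ := hy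
    have hbk : k + 1 ≤ (b : ℕ) := hb
    have hlt := pval_cross hP hk hasc ha hbk (Nat.lt_succ_iff.1 b.isLt)
    rw [pval_eq' σ ha', pval_eq] at hlt
    exact hlt
  have hcard := Finset.card_le_card hsub
  rw [Finset.card_image_of_injective _ σ.injective, Fin.card_Ioi, Fin.card_Ioi] at hcard
  have hxv : k < (σ (⟨a, ha'⟩ : Fin (m + 1)) : ℕ) := by rw [← pval_eq' σ ha']; exact hcon
  simp only at hcard
  omega

/-- pigeonhole: positions to the right of an ascent have large values -/
theorem pval_high {k b : ℕ} (hk : k < m) (hasc : ext (word σ) k = false)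
    (hb : k + 1 ≤ b) (hbm : b ≤ m) : k + 1 ≤ pval σ b := by
  by_contra hcon
  push_neg at hcon
  have hb' : b < m + 1 := by omega
  have hsub : (Finset.Iic (⟨k, by omega⟩ : Fin (m + 1))).image σ
      ⊆ Finset.Iio (σ ⟨b, hb'⟩) := by
    intro y hy
    simp only [Finset.mem_image, Finset.mem_Iic, Finset.mem_Iio] at hy ⊢
    obtain ⟨a, ha, rfl⟩ := hy
    have hak : (a : ℕ) ≤ k := ha
    have hlt := pval_cross hP hk hasc hak hb hbm
    rw [pval_eq' σ hb', pval_eq] at hlt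
    exact hlt
  have hcard := Finset.card_le_card hsub
  rw [Finset.card_image_of_injective _ σ.injective, Fin.card_Iic, Fin.card_Iio] at hcard
  have hxv : (σ (⟨b, hb'⟩ : Fin (m + 1)) : ℕ) ≤ k := by
    rw [← pval_eq' σ hb']; omega
  simp only at hcard
  omega

end PP

section PP2

variable {σ : Equiv.Perm (Fin (m + 1))} (hP : P σ)
include hP

theorem pval_le_runEnd {i : ℕ} (hi : i ≤ m) :
    pval σ i ≤ runEnd (ext (word σ)) m i := by
  rcases Nat.lt_or_ge (runEnd (ext (word σ)) m i) m with h | h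
  · exact pval_low hP h (runEnd_false (ext_false (word σ)) i) (le_runEnd i)
  · have := runEnd_le (B := ext (word σ)) (m := m) hi
    have := pval_le σ hi
    omega

theorem runStart_le_pval {i : ℕ} (hi : i ≤ m) :
    runStart (ext (word σ)) i ≤ pval σ i := by
  rcases Nat.eq_zero_or_pos (runStart (ext (word σ)) i) with h | h
  · omega
  · have hts := runStart_le (B := ext (word σ)) i
    have hf := runStart_pred_false (B := ext (word σ)) h
    have := pval_high hP (k := runStart (ext (word σ)) i - 1) (b := i)
      (by omega) hf (by omega) hi
    omega

theorem pval_run {i : ℕ} (hi : i ≤ m) : ∀ d,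
    runStart (ext (word σ)) i + d ≤ runEnd (ext (word σ)) m i →
    pval σ (runStart (ext (word σ)) i + d) + d = pval σ (runStart (ext (word σ)) i) := by
  intro d
  induction d with
  | zero => intro _; rfl
  | succ d ih =>
    intro hd
    show pval σ (runStart (ext (word σ)) i + d + 1) + (d + 1) = pval σ (runStart (ext (word σ)) i)
    have htrue : ext (word σ) (runStart (ext (word σ)) i + d) = true :=
      run_true (m := m) (i := i) (by omega) (by omega)
    have hklt : runStart (ext (word σ)) i + d < m := by
      rcases Nat.lt_or_ge (runStart (ext (word σ)) i + d) m with h | h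
      · exact h
      · rw [ext_false (word σ) _ h] at htrue; exact absurd htrue (by simp)
    have hdesc : pval σ (runStart (ext (word σ)) i + d + 1)
        < pval σ (runStart (ext (word σ)) i + d) := (ext_word_iff σ hklt).1 htrue
    have hstep := pval_P hP
      (show runStart (ext (word σ)) i + d < runStart (ext (word σ)) i + d + 1 by omega)
      (show runStart (ext (word σ)) i + d + 1 ≤ m by omega) hdesc
    have := ih (by omega)
    omega

theorem pval_formula {i : ℕ} (hi : i ≤ m) :
    pval σ i + i = runStart (ext (word σ)) i + runEnd (ext (word σ)) m i := by
  have hB := ext_false (word σ)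
  have ht : runStart (ext (word σ)) i ≤ i := runStart_le i
  have hs : i ≤ runEnd (ext (word σ)) m i := le_runEnd i
  have hsm : runEnd (ext (word σ)) m i ≤ m := runEnd_le hi
  have htt : runStart (ext (word σ)) (runStart (ext (word σ)) i) = runStart (ext (word σ)) i :=
    runStart_eq_of_mem (m := m) le_rfl (by omega)
  have hts : runEnd (ext (word σ)) m (runStart (ext (word σ)) i) = runEnd (ext (word σ)) m i :=
    runEnd_eq_of_mem hB le_rfl (by omega)
  have hst : runStart (ext (word σ)) (runEnd (ext (word σ)) m i) = runStart (ext (word σ)) i :=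
    runStart_eq_of_mem (m := m) (by omega) le_rfl
  have hss : runEnd (ext (word σ)) m (runEnd (ext (word σ)) m i) = runEnd (ext (word σ)) m i :=
    runEnd_eq_of_mem hB (by omega) le_rfl
  have hb1 : pval σ (runStart (ext (word σ)) i) ≤ runEnd (ext (word σ)) m i := by
    have := pval_le_runEnd hP (i := runStart (ext (word σ)) i) (by omega)
    omega
  have hb2 : runStart (ext (word σ)) i ≤ pval σ (runEnd (ext (word σ)) m i) := by
    have := runStart_le_pval hP (i := runEnd (ext (word σ)) m i) (by omega)
    omega
  have hrun1 := pval_run hP hi (runEnd (ext (word σ)) m i - runStart (ext (word σ)) i) (by omega)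
  have hrun2 := pval_run hP hi (i - runStart (ext (word σ)) i) (by omega)
  rw [show runStart (ext (word σ)) i + (runEnd (ext (word σ)) m i - runStart (ext (word σ)) i)
      = runEnd (ext (word σ)) m i by omega] at hrun1
  rw [show runStart (ext (word σ)) i + (i - runStart (ext (word σ)) i) = i by omega] at hrun2
  omega

theorem layeredPerm_word : layeredPerm (word σ) = σ := by
  apply Equiv.ext
  intro x
  apply Fin.ext
  have h1 : (layeredPerm (word σ) x : ℕ)
      = runStart (ext (word σ)) (x : ℕ) + (runEnd (ext (word σ)) m (x : ℕ) - (x : ℕ)) := rfl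
  have h2 := pval_formula hP (i := (x : ℕ)) (Nat.lt_succ_iff.1 x.isLt)
  have h3 := pval_eq σ x
  have ht : runStart (ext (word σ)) (x : ℕ) ≤ (x : ℕ) := runStart_le _
  have hs : (x : ℕ) ≤ runEnd (ext (word σ)) m (x : ℕ) := le_runEnd _
  omega

end PP2

/-- The master bijection. -/
def mainEquiv : {σ : Equiv.Perm (Fin (m + 1)) // P σ} ≃ (Fin m → Bool) where
  toFun σ := word σ.1
  invFun w := ⟨layeredPerm w, layeredPerm_P w⟩
  left_inv σ := Subtype.ext (layeredPerm_word σ.2)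
  right_inv w := word_layeredPerm w

theorem card_P : Nat.card {σ : Equiv.Perm (Fin (m + 1)) // P σ} = 2 ^ m := by
  rw [Nat.card_congr mainEquiv, Nat.card_eq_fintype_card]
  simp


theorem avoids_iff_P {n : ℕ} (σ : Equiv.Perm (Fin n)) :
    (Avoids σ (finRotate 3) ∧ Avoids σ (finRotate 3)⁻¹) ↔ P σ := by
  constructor
  · rintro ⟨h1, h2⟩ i j hij hji
    have himg : (Finset.Ioo i j).image σ = Finset.Ioo (σ j) (σ i) := by
      apply Finset.Subset.antisymm
      · intro y hy
        simp only [Finset.mem_image, Finset.mem_Ioo] at hy ⊢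
        obtain ⟨x, ⟨hx1, hx2⟩, rfl⟩ := hy
        constructor
        · by_contra hc
          push_neg at hc
          have hne : σ x ≠ σ j := fun h => absurd (σ.injective h) (ne_of_lt hx2)
          have hlt : σ x < σ j := lt_of_le_of_ne hc hne
          exact h2 (contains312 σ hx1 hx2 hlt hji)
        · by_contra hc
          push_neg at hc
          have hne : σ i ≠ σ x := fun h => absurd (σ.injective h) (ne_of_lt hx1)
          have hlt : σ i < σ x := lt_of_le_of_ne hc hne
          exact h1 (contains231 σ hx1 hx2 hji hlt)
      · intro y hy
        simp only [Finset.mem_Ioo] at hy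
        simp only [Finset.mem_image, Finset.mem_Ioo]
        obtain ⟨hy1, hy2⟩ := hy
        have hxy : σ (σ.symm y) = y := σ.apply_symm_apply y
        refine ⟨σ.symm y, ⟨?_, ?_⟩, hxy⟩
        · rcases lt_trichotomy (σ.symm y) i with h | h | h
          · exact absurd (contains231 σ h hij (by rw [hxy]; exact hy1)
              (by rw [hxy]; exact hy2)) h1
          · exfalso; rw [h] at hxy; rw [hxy] at hy2; exact lt_irrefl _ hy2
          · exact h
        · rcases lt_trichotomy (σ.symm y) j with h | h | h
          · exact h
          · exfalso; rw [h] at hxy; rw [hxy] at hy1; exact lt_irrefl _ hy1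
          · exact absurd (contains312 σ hij h (by rw [hxy]; exact hy1)
              (by rw [hxy]; exact hy2)) h2
    have hcard : (Finset.Ioo i j).card = (Finset.Ioo (σ j) (σ i)).card := by
      rw [← himg, Finset.card_image_of_injective _ σ.injective]
    rw [Fin.card_Ioo, Fin.card_Ioo] at hcard
    have hij' : (i : ℕ) < j := hij
    have hji' : (σ j : ℕ) < σ i := hji
    omega
  · intro hP
    constructor
    · intro hc
      obtain ⟨i, j, k, hij, hjk, ha, hb⟩ := of_contains231 hc
      have e1 := hP i k (hij.trans hjk) ha
      have e2 := hP j k hjk (ha.trans hb)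
      have hb' : (σ i : ℕ) < σ j := hb
      have hij' : (i : ℕ) < j := hij
      omega
    · intro hc
      obtain ⟨i, j, k, hij, hjk, ha, hb⟩ := of_contains312 hc
      have e1 := hP i j hij (ha.trans hb)
      have e2 := hP i k (hij.trans hjk) hb
      have ha' : (σ j : ℕ) < σ k := ha
      have hjk' : (j : ℕ) < k := hjk
      omega

end Av231312

/-- The number of permutations of size `n ≥ 1` avoiding both 231 and 312 is `2^(n-1)`. -/
theorem card_avoid_231_312 (n : ℕ) (hn : 1 ≤ n) :
    Nat.card {σ : Equiv.Perm (Fin n) //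
      Avoids σ (finRotate 3) ∧ Avoids σ (finRotate 3)⁻¹} = 2 ^ (n - 1) := by
  obtain ⟨m, rfl⟩ : ∃ m, n = m + 1 := ⟨n - 1, by omega⟩
  rw [Nat.card_congr (Equiv.subtypeEquivRight (fun σ => Av231312.avoids_iff_P σ)),
    Av231312.card_P, Nat.add_sub_cancel]
end

section
/- For every n ≥ 1, the number of permutations of {1,...,n} avoiding both patterns 231 and 321 equals 2^(n-1). -/
/- ### Auxiliary lemmas -/

lemma step_iff (n : ℕ) (p : Fin (n+1)) (e : Equiv.Perm (Fin n)) :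
    (∀ v : Fin (n+1), ((Equiv.Perm.decomposeFin.symm (p, e)) v : ℕ) ≤ (v : ℕ) + 1) ↔
      ((p : ℕ) ≤ 1 ∧ ∀ i : Fin n, ((e i : ℕ) ≤ (i : ℕ) + 1)) := by
  constructor
  · intro h
    have hp : (p : ℕ) ≤ 1 := by simpa using h 0
    refine ⟨hp, fun i => ?_⟩
    have h2 := h i.succ
    rw [Equiv.Perm.decomposeFin_symm_apply_succ] at h2
    rcases eq_or_ne ((e i).succ) p with hpe | hpe
    · have : ((e i).succ : ℕ) = (p : ℕ) := by rw [hpe]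
      simp [Fin.val_succ] at this
      omega
    · rw [Equiv.swap_apply_of_ne_of_ne (Fin.succ_ne_zero _) hpe] at h2
      simp [Fin.val_succ] at h2
      omega
  · rintro ⟨hp, he⟩ v
    refine Fin.cases ?_ (fun i => ?_) v
    · simpa using hp
    · rw [Equiv.Perm.decomposeFin_symm_apply_succ]
      rcases eq_or_ne ((e i).succ) p with hpe | hpe
      · rw [hpe, Equiv.swap_apply_right]
        simp
      · rw [Equiv.swap_apply_of_ne_of_ne (Fin.succ_ne_zero _) hpe]
        have := he i
        simp [Fin.val_succ]
        omega

lemma card_two (m : ℕ) (hm : 1 ≤ m) :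
    Nat.card {p : Fin (m+1) // (p : ℕ) ≤ 1} = 2 := by
  have e : {p : Fin (m+1) // (p : ℕ) ≤ 1} ≃ Fin 2 :=
    { toFun := fun p => ⟨(p.1 : ℕ), by omega⟩
      invFun := fun j => ⟨⟨(j : ℕ), by omega⟩, by simp only [Fin.val_mk]; have := j.isLt; omega⟩
      left_inv := fun p => by apply Subtype.ext; apply Fin.ext; rfl
      right_inv := fun j => by apply Fin.ext; rfl }
  rw [Nat.card_congr e]
  simp

lemma card_B : ∀ n : ℕ, 1 ≤ n →
    Nat.card {τ : Equiv.Perm (Fin n) // ∀ v : Fin n, ((τ v : ℕ) ≤ (v : ℕ) + 1)} = 2 ^ (n - 1) := by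
  intro n
  induction n with
  | zero => omega
  | succ m ih =>
    intro _
    rcases Nat.eq_zero_or_pos m with rfl | hm
    · haveI : Subsingleton (Equiv.Perm (Fin 1)) :=
        ⟨fun a b => Equiv.ext fun x => Subsingleton.elim _ _⟩
      haveI : Unique {τ : Equiv.Perm (Fin 1) // ∀ v : Fin 1, ((τ v : ℕ) ≤ (v : ℕ) + 1)} :=
        uniqueOfSubsingleton ⟨1, fun v => by omega⟩
      simp [Nat.card_unique]
    · have e1 : {τ : Equiv.Perm (Fin (m+1)) // ∀ v, ((τ v : ℕ) ≤ (v : ℕ) + 1)} ≃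
          {q : Fin (m+1) × Equiv.Perm (Fin m) //
            (q.1 : ℕ) ≤ 1 ∧ ∀ i : Fin m, ((q.2 i : ℕ) ≤ (i : ℕ) + 1)} :=
        (Equiv.Perm.decomposeFin.symm.subtypeEquiv (fun q => (step_iff m q.1 q.2).symm)).symm
      have e2 : {q : Fin (m+1) × Equiv.Perm (Fin m) //
            (q.1 : ℕ) ≤ 1 ∧ ∀ i : Fin m, ((q.2 i : ℕ) ≤ (i : ℕ) + 1)} ≃
          {p : Fin (m+1) // (p : ℕ) ≤ 1} ×
            {e : Equiv.Perm (Fin m) // ∀ i : Fin m, ((e i : ℕ) ≤ (i : ℕ) + 1)} :=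
        Equiv.subtypeProdEquivProd (p := fun a : Fin (m+1) => (a : ℕ) ≤ 1)
          (q := fun e : Equiv.Perm (Fin m) => ∀ i : Fin m, ((e i : ℕ) ≤ (i : ℕ) + 1))
      rw [Nat.card_congr (e1.trans e2), Nat.card_prod, card_two m hm, ih hm]
      have : m + 1 - 1 = (m - 1) + 1 := by omega
      rw [this, pow_succ]
      ring

lemma cond_iff (n : ℕ) (σ : Equiv.Perm (Fin n)) :
    (∀ a b c : Fin n, a < b → b < c → σ c < σ a → σ c < σ b → False) ↔
      (∀ c : Fin n, (c : ℕ) ≤ (σ c : ℕ) + 1) := by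
  constructor
  · intro h c
    by_contra hc
    push_neg at hc
    set S2 := Finset.univ.filter (fun p => p < c ∧ σ c < σ p) with hS2
    have h1 : ((Finset.Iio c).filter (fun p => σ p < σ c)).card ≤ (σ c : ℕ) := by
      calc ((Finset.Iio c).filter (fun p => σ p < σ c)).card
          = (((Finset.Iio c).filter (fun p => σ p < σ c)).image σ).card :=
            (Finset.card_image_of_injective _ σ.injective).symm
        _ ≤ (Finset.Iio (σ c)).card := Finset.card_le_card (by
            intro v hv
            simp only [Finset.mem_image, Finset.mem_filter, Finset.mem_Iio] at hv ⊢
            obtain ⟨p, ⟨_, hp⟩, rfl⟩ := hv; exact hp)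
        _ = (σ c : ℕ) := Fin.card_Iio _
    have h2 : (Finset.Iio c).card = (c : ℕ) := Fin.card_Iio _
    have hsub : Finset.Iio c ⊆ (Finset.Iio c).filter (fun p => σ p < σ c) ∪ S2 := by
      intro p hp
      simp only [Finset.mem_Iio] at hp
      rcases lt_trichotomy (σ p) (σ c) with h' | h' | h'
      · exact Finset.mem_union_left _ (Finset.mem_filter.2 ⟨Finset.mem_Iio.2 hp, h'⟩)
      · exact absurd (σ.injective h') (ne_of_lt hp)
      · exact Finset.mem_union_right _ (by simp [hS2, hp, h'])
    have h3 := (Finset.card_le_card hsub).trans (Finset.card_union_le _ _)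
    have hcard : 1 < S2.card := by omega
    obtain ⟨a, ha, b, hb, hab⟩ := Finset.one_lt_card.mp hcard
    rw [hS2, Finset.mem_filter] at ha hb
    rcases lt_or_gt_of_ne hab with h' | h'
    · exact h a b c h' hb.2.1 ha.2.2 hb.2.2
    · exact h b a c h' ha.2.1 hb.2.2 ha.2.2
  · intro hσ a b c hab hbc hca hcb
    set s := Finset.univ.filter (fun p => σ p ≤ σ c) with hs
    have hscard : s.card = (σ c : ℕ) + 1 := by
      have : s.image σ = Finset.Iic (σ c) := by
        ext v
        simp only [hs, Finset.mem_image, Finset.mem_filter, Finset.mem_univ, true_and,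
          Finset.mem_Iic]
        constructor
        · rintro ⟨p, hp, rfl⟩; exact hp
        · intro hv; exact ⟨σ.symm v, by simp [hv], by simp⟩
      calc s.card = (s.image σ).card := (Finset.card_image_of_injective _ σ.injective).symm
        _ = (σ c : ℕ) + 1 := by rw [this, Fin.card_Iic]
    set F := Finset.univ.filter (fun p : Fin n => (p : ℕ) ≤ (σ c : ℕ) + 1) with hF
    have hFcard : F.card ≤ (σ c : ℕ) + 2 := by
      calc F.card = (F.image Fin.val).card :=
            (Finset.card_image_of_injective _ Fin.val_injective).symm
        _ ≤ (Finset.Iic ((σ c : ℕ) + 1)).card := Finset.card_le_card (by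
            intro v hv
            simp only [hF, Finset.mem_image, Finset.mem_filter, Finset.mem_univ, true_and,
              Finset.mem_Iic] at hv ⊢
            obtain ⟨p, hp, rfl⟩ := hv; exact hp)
        _ = (σ c : ℕ) + 2 := by rw [Nat.card_Iic]
    have haF : a ∈ F := by
      simp only [hF, Finset.mem_filter, Finset.mem_univ, true_and]
      have hac : (a : ℕ) < (c : ℕ) := hab.trans hbc
      have := hσ c
      omega
    have hbF : b ∈ F := by
      simp only [hF, Finset.mem_filter, Finset.mem_univ, true_and]
      have hbc' : (b : ℕ) < (c : ℕ) := hbc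
      have := hσ c
      omega
    have hsub : s ⊆ (F.erase a).erase b := by
      intro p hp
      simp only [hs, Finset.mem_filter, Finset.mem_univ, true_and] at hp
      have hpa : p ≠ a := fun h => by rw [h] at hp; exact absurd hp (not_le.2 hca)
      have hpb : p ≠ b := fun h => by rw [h] at hp; exact absurd hp (not_le.2 hcb)
      refine Finset.mem_erase.2 ⟨hpb, Finset.mem_erase.2 ⟨hpa, ?_⟩⟩
      simp only [hF, Finset.mem_filter, Finset.mem_univ, true_and]
      have h1 := hσ p
      have h2 : (σ p : ℕ) ≤ (σ c : ℕ) := hp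
      omega
    have hbe : b ∈ F.erase a := Finset.mem_erase.2 ⟨(ne_of_lt hab).symm, hbF⟩
    have e1 : ((F.erase a).erase b).card = (F.erase a).card - 1 := Finset.card_erase_of_mem hbe
    have e2 : (F.erase a).card = F.card - 1 := Finset.card_erase_of_mem haF
    have e3 : 1 ≤ (F.erase a).card := Finset.card_pos.2 ⟨b, hbe⟩
    have e4 := Finset.card_le_card hsub
    omega

lemma contains231_iff {n : ℕ} (σ : Equiv.Perm (Fin n)) :
    Contains σ (finRotate 3) ↔
      ∃ a b c : Fin n, a < b ∧ b < c ∧ σ c < σ a ∧ σ a < σ b := by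
  constructor
  · rintro ⟨f, hf, h⟩
    exact ⟨f 0, f 1, f 2, hf (by decide), hf (by decide),
      (h 2 0).mp (by decide), (h 0 1).mp (by decide)⟩
  · rintro ⟨a, b, c, hab, hbc, h1, h2⟩
    have hac : a < c := hab.trans hbc
    have h3 : σ c < σ b := h1.trans h2
    refine ⟨![a, b, c], ?_, ?_⟩
    · intro i j hij
      fin_cases i <;> fin_cases j
      · exact absurd hij (by decide)
      · exact hab
      · exact hac
      · exact absurd hij (by decide)
      · exact absurd hij (by decide)
      · exact hbc
      · exact absurd hij (by decide)
      · exact absurd hij (by decide)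
      · exact absurd hij (by decide)
    · intro x y
      fin_cases x <;> fin_cases y
      · exact iff_of_false (by decide) (lt_irrefl _)
      · exact iff_of_true (by decide) h2
      · exact iff_of_false (by decide) (lt_asymm h1)
      · exact iff_of_false (by decide) (lt_asymm h2)
      · exact iff_of_false (by decide) (lt_irrefl _)
      · exact iff_of_false (by decide) (lt_asymm h3)
      · exact iff_of_true (by decide) h1
      · exact iff_of_true (by decide) h3
      · exact iff_of_false (by decide) (lt_irrefl _)

lemma contains321_iff {n : ℕ} (σ : Equiv.Perm (Fin n)) :
    Contains σ (Fin.revPerm : Equiv.Perm (Fin 3)) ↔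
      ∃ a b c : Fin n, a < b ∧ b < c ∧ σ b < σ a ∧ σ c < σ b := by
  constructor
  · rintro ⟨f, hf, h⟩
    exact ⟨f 0, f 1, f 2, hf (by decide), hf (by decide),
      (h 1 0).mp (by decide), (h 2 1).mp (by decide)⟩
  · rintro ⟨a, b, c, hab, hbc, h1, h2⟩
    have hac : a < c := hab.trans hbc
    have h3 : σ c < σ a := h2.trans h1
    refine ⟨![a, b, c], ?_, ?_⟩
    · intro i j hij
      fin_cases i <;> fin_cases j
      · exact absurd hij (by decide)
      · exact hab
      · exact hac
      · exact absurd hij (by decide)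
      · exact absurd hij (by decide)
      · exact hbc
      · exact absurd hij (by decide)
      · exact absurd hij (by decide)
      · exact absurd hij (by decide)
    · intro x y
      fin_cases x <;> fin_cases y
      · exact iff_of_false (by decide) (lt_irrefl _)
      · exact iff_of_false (by decide) (lt_asymm h1)
      · exact iff_of_false (by decide) (lt_asymm h3)
      · exact iff_of_true (by decide) h1
      · exact iff_of_false (by decide) (lt_irrefl _)
      · exact iff_of_false (by decide) (lt_asymm h2)
      · exact iff_of_true (by decide) h3
      · exact iff_of_true (by decide) h2
      · exact iff_of_false (by decide) (lt_irrefl _)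

/-- The number of permutations of size `n ≥ 1` avoiding both 231 and 321 is `2^(n-1)`. -/
theorem card_avoid_231_321 (n : ℕ) (hn : 1 ≤ n) :
    Nat.card {σ : Equiv.Perm (Fin n) //
      Avoids σ (finRotate 3) ∧ Avoids σ (Fin.revPerm : Equiv.Perm (Fin 3))} = 2 ^ (n - 1) := by
  have key : ∀ σ : Equiv.Perm (Fin n),
      (Avoids σ (finRotate 3) ∧ Avoids σ (Fin.revPerm : Equiv.Perm (Fin 3))) ↔
        ∀ v : Fin n, ((σ⁻¹ v : ℕ) ≤ (v : ℕ) + 1) := by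
    intro σ
    have htriple : (Avoids σ (finRotate 3) ∧ Avoids σ (Fin.revPerm : Equiv.Perm (Fin 3))) ↔
        (∀ a b c : Fin n, a < b → b < c → σ c < σ a → σ c < σ b → False) := by
      constructor
      · rintro ⟨h1, h2⟩ a b c hab hbc hca hcb
        have hne : σ a ≠ σ b := fun h => (ne_of_lt hab) (σ.injective h)
        rcases lt_or_gt_of_ne hne with h | h
        · exact h1 ((contains231_iff σ).2 ⟨a, b, c, hab, hbc, hca, h⟩)
        · exact h2 ((contains321_iff σ).2 ⟨a, b, c, hab, hbc, h, hcb⟩)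
      · intro h
        constructor
        · intro hc
          obtain ⟨a, b, c, hab, hbc, hca, hab'⟩ := (contains231_iff σ).1 hc
          exact h a b c hab hbc hca (hca.trans hab')
        · intro hc
          obtain ⟨a, b, c, hab, hbc, hba, hcb⟩ := (contains321_iff σ).1 hc
          exact h a b c hab hbc (hcb.trans hba) hcb
    rw [htriple, cond_iff]
    constructor
    · intro h v
      have := h (σ⁻¹ v)
      simpa using this
    · intro h c
      have := h (σ c)
      simpa using this
  rw [Nat.card_congr (Equiv.subtypeEquiv
    (q := fun τ : Equiv.Perm (Fin n) => ∀ v : Fin n, ((τ v : ℕ) ≤ (v : ℕ) + 1))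
    (Equiv.inv (Equiv.Perm (Fin n))) (fun σ => by simpa using key σ))]
  exact card_B n hn
end

section
/- For every n ≥ 1, the set of monotone triangles of order n with bottom row 1 2 ... n and with at most two distinct values in each column, satisfying the gapless condition, is in bijection with weakly increasing inversion sequences of length n; hence their number is the n-th Catalan number C_n. -/
/-- `t i j` is the `j`-th entry (0-based) of the `i`-th row (0-based) of a triangular
array; row `i` has entries `t i 0, …, t i i`.  `IsMonotoneTriangle n t` says `t` is a
monotone triangle of order `n`: rows strictly increase, columns weakly increase from
bottom to top, northwest-southeast diagonals weakly increase from top to bottom, and the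
bottom row is `1, 2, …, n`. -/
def IsMonotoneTriangle (n : ℕ) (t : ℕ → ℕ → ℕ) : Prop :=
  (∀ i j j', i < n → j < j' → j' ≤ i → t i j < t i j') ∧
  (∀ i i' j, i ≤ i' → i' < n → j ≤ i → t i' j ≤ t i j) ∧
  (∀ i j d, i + d < n → j ≤ i → t i j ≤ t (i + d) (j + d)) ∧
  (∀ j, j < n → t (n - 1) j = j + 1)

/-- The triangle is gapless: the entries of each column form an interval of integers. -/
def Gapless (n : ℕ) (t : ℕ → ℕ → ℕ) : Prop :=
  ∀ j c, j < n → (∃ i, j ≤ i ∧ i < n ∧ t i j ≤ c) → (∃ i, j ≤ i ∧ i < n ∧ c ≤ t i j) →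
    ∃ i, j ≤ i ∧ i < n ∧ t i j = c

/-- Each column of the triangle contains at most two distinct values. -/
def AtMostTwoValues (n : ℕ) (t : ℕ → ℕ → ℕ) : Prop :=
  ∀ j, j < n → ∃ a b, ∀ i, j ≤ i → i < n → t i j = a ∨ t i j = b

/-- Entries outside the triangular region are normalized to `0`. -/
def Normalized (n : ℕ) (t : ℕ → ℕ → ℕ) : Prop :=
  ∀ i j, n ≤ i ∨ i < j → t i j = 0


namespace GTTaux


def ext (n : ℕ) (e : Fin n → ℕ) : ℕ → ℕ := fun k =>
  if h : min k (n - 1) < n then e ⟨min k (n - 1), h⟩ else 0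

lemma ext_lt {n : ℕ} (e : Fin n → ℕ) {k : ℕ} (h : k < n) : ext n e k = e ⟨k, h⟩ := by
  unfold ext
  rw [dif_pos (by omega)]
  congr 1
  exact Fin.ext (by simp; omega)

lemma ext_mono {n : ℕ} {e : Fin n → ℕ} (he : Monotone e) : Monotone (ext n e) := by
  rcases Nat.eq_zero_or_pos n with rfl | hn
  · intro k k' _
    unfold ext
    rw [dif_neg (by omega), dif_neg (by omega)]
  · intro k k' h
    unfold ext
    rw [dif_pos (by omega), dif_pos (by omega)]
    exact he (by rw [Fin.mk_le_mk]; omega)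

def InvSeq (n : ℕ) : Type := {e : Fin n → ℕ // (∀ i : Fin n, e i ≤ (i : ℕ)) ∧ Monotone e}

lemma ext_le {n : ℕ} {e : Fin n → ℕ} (he : ∀ i : Fin n, e i ≤ (i : ℕ)) :
    ∀ k, ext n e k ≤ k := by
  intro k
  unfold ext
  split_ifs with h
  · have := he ⟨min k (n - 1), h⟩
    simp only at this ⊢
    omega
  · omega

instance invSeqFinite (n : ℕ) : Finite (InvSeq n) := by
  have hinj : Function.Injective
      (fun (e : InvSeq n) => fun (i : Fin n) =>
        (⟨e.1 i, lt_of_le_of_lt (e.2.1 i) i.isLt⟩ : Fin n)) := by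
    intro a b h
    apply Subtype.ext
    funext i
    have := congrFun h i
    simpa [Fin.ext_iff] using this
  exact Finite.of_injective _ hinj

def glue (i : ℕ) (A B : ℕ → ℕ) : ℕ → ℕ := fun k =>
  if k = 0 then 0 else if k ≤ i then A (k - 1) else i + 1 + B (k - i - 1)

lemma glue_val_zero {i : ℕ} {A B : ℕ → ℕ} : glue i A B 0 = 0 := by simp [glue]

lemma glue_val_a {i k : ℕ} {A B : ℕ → ℕ} (h0 : k ≠ 0) (h1 : k ≤ i) :
    glue i A B k = A (k - 1) := by simp [glue, h0, h1]

lemma glue_val_b {i k : ℕ} {A B : ℕ → ℕ} (h1 : i < k) :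
    glue i A B k = i + 1 + B (k - i - 1) := by
  simp only [glue, if_neg (by omega : ¬k = 0), if_neg (by omega : ¬k ≤ i)]

lemma glue_le {i : ℕ} {A B : ℕ → ℕ} (hA : ∀ k, A k ≤ k) (hB : ∀ k, B k ≤ k) :
    ∀ k, glue i A B k ≤ k := by
  intro k
  unfold glue
  split_ifs with h0 h1
  · omega
  · have := hA (k - 1); omega
  · have := hB (k - i - 1); omega

lemma glue_mono {i : ℕ} {A B : ℕ → ℕ} (hA : Monotone A) (hB : Monotone B)
    (hAle : ∀ k, A k ≤ k) : ∀ k k', k ≤ k' → glue i A B k ≤ glue i A B k' := by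
  intro k k' hkk
  by_cases h0 : k = 0
  · subst h0
    simp only [glue, if_pos rfl]
    exact Nat.zero_le _
  · have h0' : k' ≠ 0 := by omega
    by_cases h1' : k' ≤ i
    · have h1 : k ≤ i := le_trans hkk h1'
      simp only [glue, if_neg h0, if_neg h0', if_pos h1, if_pos h1']
      exact hA (by omega)
    · by_cases h1 : k ≤ i
      · simp only [glue, if_neg h0, if_neg h0', if_pos h1, if_neg h1']
        have := hAle (k - 1)
        omega
      · simp only [glue, if_neg h0, if_neg h0', if_neg h1, if_neg h1']
        have := hB (by omega : k - i - 1 ≤ k' - i - 1)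
        omega

def Fglue (n : ℕ) (x : Σ i : Fin (n + 1), InvSeq i.val × InvSeq (n - i.val)) :
    InvSeq (n + 1) := by
  refine ⟨fun k => glue x.1.val (ext x.1.val x.2.1.1) (ext (n - x.1.val) x.2.2.1) k.val, ?_, ?_⟩
  · intro k
    exact glue_le (ext_le x.2.1.2.1) (ext_le x.2.2.2.1) k.val
  · intro k k' hkk
    exact glue_mono (ext_mono x.2.1.2.2) (ext_mono x.2.2.2.2) (ext_le x.2.1.2.1) k.val k'.val hkk

lemma glue_spec_a {n i : ℕ} (a : InvSeq i) (b : InvSeq (n - i)) {k : ℕ} (hk : k < i) :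
    glue i (ext i a.1) (ext (n - i) b.1) (k + 1) ≤ k := by
  rw [glue_val_a (by omega) (by omega), Nat.add_sub_cancel, ext_lt _ hk]
  exact a.2.1 _

lemma glue_spec_b {n i : ℕ} (a : InvSeq i) (b : InvSeq (n - i)) (hin : i < n) :
    glue i (ext i a.1) (ext (n - i) b.1) (i + 1) = i + 1 := by
  rw [glue_val_b (by omega)]
  have h0 : i + 1 - i - 1 = 0 := by omega
  rw [h0]
  have h2 := ext_le b.2.1 0
  omega

lemma Fglue_inj (n : ℕ) : Function.Injective (Fglue n) := by
  intro x y hxy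
  obtain ⟨i, a, b⟩ := x
  obtain ⟨i', a', b'⟩ := y
  have hf : ∀ k, k < n + 1 → glue i.val (ext i.val a.1) (ext (n - i.val) b.1) k
      = glue i'.val (ext i'.val a'.1) (ext (n - i'.val) b'.1) k :=
    fun k hk => congrFun (congrArg Subtype.val hxy) ⟨k, hk⟩
  have hi := i.isLt
  have hi' := i'.isLt
  have hii : i = i' := by
    apply Fin.ext
    by_contra hne
    rcases Nat.lt_or_ge i.val i'.val with hlt | hge
    · have h1 := glue_spec_a a' b' hlt
      have h2 := glue_spec_b a b (by omega)
      have h3 := hf (i.val + 1) (by omega)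
      omega
    · have hlt : i'.val < i.val := by omega
      have h1 := glue_spec_a a b hlt
      have h2 := glue_spec_b a' b' (by omega)
      have h3 := hf (i'.val + 1) (by omega)
      omega
  subst hii
  have ha : a = a' := by
    apply Subtype.ext
    funext j
    have hj := j.isLt
    have h3 := hf (j.val + 1) (by omega)
    rw [glue_val_a (by omega) (by omega), glue_val_a (by omega) (by omega),
      Nat.add_sub_cancel, ext_lt _ hj, ext_lt _ hj] at h3
    have hjeta : (⟨j.val, hj⟩ : Fin i.val) = j := Fin.ext rfl
    rwa [hjeta] at h3
  have hb : b = b' := by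
    apply Subtype.ext
    funext j
    have hj := j.isLt
    have h3 := hf (i.val + 1 + j.val) (by omega)
    rw [glue_val_b (by omega), glue_val_b (by omega),
      show i.val + 1 + j.val - i.val - 1 = j.val by omega, ext_lt _ hj, ext_lt _ hj] at h3
    have hjeta : (⟨j.val, hj⟩ : Fin (n - i.val)) = j := Fin.ext rfl
    rw [hjeta] at h3
    omega
  rw [ha, hb]

lemma Fglue_surj (n : ℕ) : Function.Surjective (Fglue n) := by
  intro e
  have hEval : ∀ k (h : k < n + 1), ext (n + 1) e.1 k = e.1 ⟨k, h⟩ := fun k h => ext_lt e.1 h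
  set E := ext (n + 1) e.1 with hE
  have hEmono : Monotone E := ext_mono e.2.2
  have hex : ∃ k, k = n ∨ (k < n ∧ E (k + 1) = k + 1) := ⟨n, Or.inl rfl⟩
  obtain ⟨i, hspec, hmin⟩ :
      ∃ i, (i = n ∨ (i < n ∧ E (i + 1) = i + 1)) ∧
        ∀ k, k < i → ¬(k = n ∨ (k < n ∧ E (k + 1) = k + 1)) :=
    ⟨Nat.find hex, Nat.find_spec hex, fun k hk => Nat.find_min hex hk⟩
  have hile : i ≤ n := by rcases hspec with h | h <;> omega
  have hlt : ∀ k, k < i → E (k + 1) ≤ k := by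
    intro k hk
    have h1 := hmin k hk
    push_neg at h1
    have hkn : k < n := by omega
    have h2 := h1.2 hkn
    have h3 : E (k + 1) ≤ k + 1 := by rw [hEval (k + 1) (by omega)]; exact e.2.1 _
    omega
  have hEi : i < n → E (i + 1) = i + 1 := by
    intro hin
    rcases hspec with h | h
    · omega
    · exact h.2
  have hiltn : i < n + 1 := by omega
  have ha1 : ∀ j : Fin i, E (j.val + 1) ≤ j.val := fun j => hlt j.val j.isLt
  have ha2 : Monotone (fun j : Fin i => E (j.val + 1)) :=
    fun j j' h => hEmono (by have hv : (j : ℕ) ≤ j' := h; omega)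
  have hb1 : ∀ j : Fin (n - i), E (i + 1 + j.val) - (i + 1) ≤ j.val := by
    intro j
    have hj := j.isLt
    have hin : i < n := by omega
    have hge := hEmono (show i + 1 ≤ i + 1 + j.val by omega)
    rw [hEi hin] at hge
    have hub : E (i + 1 + j.val) ≤ i + 1 + j.val := by
      rw [hEval _ (by omega)]
      exact e.2.1 _
    omega
  have hb2 : Monotone (fun j : Fin (n - i) => E (i + 1 + j.val) - (i + 1)) := by
    intro j j' h
    have hv : (j : ℕ) ≤ j' := h
    exact Nat.sub_le_sub_right (hEmono (by omega)) (i + 1)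
  refine ⟨⟨⟨i, hiltn⟩, ⟨fun j => E (j.val + 1), ha1, ha2⟩,
    ⟨fun j => E (i + 1 + j.val) - (i + 1), hb1, hb2⟩⟩, ?_⟩
  apply Subtype.ext
  funext k
  have hk := k.isLt
  show glue i (ext i (fun j : Fin i => E (j.val + 1)))
    (ext (n - i) (fun j : Fin (n - i) => E (i + 1 + j.val) - (i + 1))) k.val = e.1 k
  by_cases h0 : k.val = 0
  · rw [h0, glue_val_zero]
    have := e.2.1 k
    omega
  · by_cases h1 : k.val ≤ i
    · rw [glue_val_a h0 h1, ext_lt _ (show k.val - 1 < i by omega)]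
      show E (k.val - 1 + 1) = e.1 k
      rw [show k.val - 1 + 1 = k.val by omega, hEval _ hk]
    · rw [glue_val_b (by omega), ext_lt _ (show k.val - i - 1 < n - i by omega)]
      show i + 1 + (E (i + 1 + (k.val - i - 1)) - (i + 1)) = e.1 k
      rw [show i + 1 + (k.val - i - 1) = k.val by omega]
      have hin : i < n := by omega
      have hge := hEmono (show i + 1 ≤ k.val by omega)
      rw [hEi hin] at hge
      have hval : E k.val = e.1 k := by rw [hEval _ hk]
      omega

lemma card_invSeq (n : ℕ) : Nat.card (InvSeq n) = catalan n := by
  induction n using Nat.strong_induction_on with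
  | _ n ih =>
    rcases n with _ | m
    · haveI : Unique (InvSeq 0) :=
        { default := ⟨fun _ => 0, fun i => i.elim0, monotone_const⟩
          uniq := fun e => Subtype.ext (funext fun i => i.elim0) }
      simp [Nat.card_unique, catalan_zero]
    · have heqv : Nonempty (InvSeq (m + 1) ≃ Σ i : Fin (m + 1), InvSeq i.val × InvSeq (m - i.val)) :=
        ⟨(Equiv.ofBijective (Fglue m) ⟨Fglue_inj m, Fglue_surj m⟩).symm⟩
      obtain ⟨eqv⟩ := heqv
      rw [Nat.card_congr eqv]
      letI : ∀ k, Fintype (InvSeq k) := fun k => Fintype.ofFinite _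
      rw [Nat.card_eq_fintype_card, Fintype.card_sigma, catalan_succ]
      refine Finset.sum_congr rfl fun i _ => ?_
      rw [Fintype.card_prod, ← Nat.card_eq_fintype_card, ← Nat.card_eq_fintype_card,
        ih i.val i.isLt, ih (m - i.val) (by omega)]

/-! ### Column counts of a triangle -/

def colCount (n : ℕ) (t : ℕ → ℕ → ℕ) (j : ℕ) : ℕ :=
  ((Finset.Ico j n).filter fun i => t i j = j + 2).card

lemma colCount_eq (n j m : ℕ) (t : ℕ → ℕ → ℕ) (hjm : j + m ≤ n)
    (h : ∀ i, j ≤ i → i < n → (t i j = j + 2 ↔ i < j + m)) : colCount n t j = m := by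
  unfold colCount
  have hfe : ((Finset.Ico j n).filter fun i => t i j = j + 2)
      = (Finset.Ico j n).filter fun i => i < j + m := by
    apply Finset.filter_congr
    intro i hi
    rw [Finset.mem_Ico] at hi
    exact h i hi.1 hi.2
  rw [hfe, Finset.Ico_filter_lt, Nat.card_Ico]
  omega

section Structure

variable {n : ℕ} {t : ℕ → ℕ → ℕ}

lemma tri_bounds (ht : IsMonotoneTriangle n t) (hg : Gapless n t)
    (h2 : AtMostTwoValues n t) {i j : ℕ} (hj : j ≤ i) (hi : i < n) :
    t i j = j + 1 ∨ t i j = j + 2 := by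
  have hbot : t (n - 1) j = j + 1 := ht.2.2.2 j (by omega)
  have hcol : t (n - 1) j ≤ t i j := ht.2.1 i (n - 1) j (by omega) (by omega) hj
  by_cases hup : t i j ≤ j + 2
  · omega
  · exfalso
    obtain ⟨a, b, hab⟩ := h2 j (by omega)
    obtain ⟨i2, hi2a, hi2b, hi2c⟩ := hg j (j + 2) (by omega)
      ⟨n - 1, by omega, by omega, by omega⟩ ⟨i, hj, hi, by omega⟩
    have v1 := hab i hj hi
    have v2 := hab i2 hi2a hi2b
    have v3 := hab (n - 1) (by omega) (by omega)
    rcases v1 with h | h <;> rcases v2 with h' | h' <;> rcases v3 with h'' | h'' <;> omega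

lemma tri_downset (ht : IsMonotoneTriangle n t) (hg : Gapless n t)
    (h2 : AtMostTwoValues n t) {i i' j : ℕ} (hij : j ≤ i) (hii' : i ≤ i') (hi' : i' < n)
    (hv : t i' j = j + 2) : t i j = j + 2 := by
  have hcol : t i' j ≤ t i j := ht.2.1 i i' j hii' hi' hij
  have hb := tri_bounds ht hg h2 hij (by omega)
  omega

lemma tri_char (ht : IsMonotoneTriangle n t) (hg : Gapless n t)
    (h2 : AtMostTwoValues n t) {i j : ℕ} (hj : j ≤ i) (hi : i < n) :
    t i j = j + 2 ↔ i < j + colCount n t j := by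
  constructor
  · intro hv
    have hsub : Finset.Ico j (i + 1) ⊆ (Finset.Ico j n).filter fun x => t x j = j + 2 := by
      intro x hx
      rw [Finset.mem_Ico] at hx
      rw [Finset.mem_filter, Finset.mem_Ico]
      exact ⟨⟨hx.1, by omega⟩, tri_downset ht hg h2 hx.1 (by omega) hi hv⟩
    have := Finset.card_le_card hsub
    rw [Nat.card_Ico] at this
    unfold colCount
    omega
  · intro hlt
    by_contra hv
    have hsub : ((Finset.Ico j n).filter fun x => t x j = j + 2) ⊆ Finset.Ico j i := by
      intro x hx
      rw [Finset.mem_filter, Finset.mem_Ico] at hx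
      rw [Finset.mem_Ico]
      refine ⟨hx.1.1, ?_⟩
      by_contra hxi
      exact hv (tri_downset ht hg h2 hj (by omega) hx.1.2 hx.2)
    have := Finset.card_le_card hsub
    rw [Nat.card_Ico] at this
    unfold colCount at hlt
    omega

lemma colCount_le (ht : IsMonotoneTriangle n t) {j : ℕ} (hj : j < n) :
    colCount n t j ≤ n - 1 - j := by
  have hbot : t (n - 1) j = j + 1 := ht.2.2.2 j hj
  have hsub : ((Finset.Ico j n).filter fun x => t x j = j + 2) ⊆ Finset.Ico j (n - 1) := by
    intro x hx
    rw [Finset.mem_filter, Finset.mem_Ico] at hx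
    rw [Finset.mem_Ico]
    refine ⟨hx.1.1, ?_⟩
    by_contra hxn
    have : x = n - 1 := by omega
    subst this
    omega
  have := Finset.card_le_card hsub
  rw [Nat.card_Ico] at this
  unfold colCount
  omega

lemma colCount_step (ht : IsMonotoneTriangle n t) (hg : Gapless n t)
    (h2 : AtMostTwoValues n t) {j : ℕ} (hj1 : j + 1 < n) :
    colCount n t j ≤ colCount n t (j + 1) + 1 := by
  by_cases hc : colCount n t j ≤ 1
  · omega
  · have hcle := colCount_le ht (show j < n by omega)
    set c := colCount n t j with hcdef
    have hij : j ≤ j + c - 1 := by omega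
    have hi : j + c - 1 < n := by omega
    have hv : t (j + c - 1) j = j + 2 := (tri_char ht hg h2 hij hi).mpr (by omega)
    have hrow : t (j + c - 1) j < t (j + c - 1) (j + 1) :=
      ht.1 (j + c - 1) j (j + 1) hi (by omega) (by omega)
    have hb2 := tri_bounds ht hg h2 (show j + 1 ≤ j + c - 1 by omega) hi
    have hv2 : t (j + c - 1) (j + 1) = (j + 1) + 2 := by omega
    have := (tri_char ht hg h2 (show j + 1 ≤ j + c - 1 by omega) hi).mp hv2
    omega

/-! ### The inversion sequence of a triangle -/

def eOf (n : ℕ) (t : ℕ → ℕ → ℕ) : Fin n → ℕ := fun k =>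
  k.val - colCount n t (n - 1 - k.val)

lemma eOf_le (n : ℕ) (t : ℕ → ℕ → ℕ) : ∀ k : Fin n, eOf n t k ≤ (k : ℕ) :=
  fun _ => Nat.sub_le _ _

lemma eOf_mono (ht : IsMonotoneTriangle n t) (hg : Gapless n t)
    (h2 : AtMostTwoValues n t) : Monotone (eOf n t) := by
  have hstep : ∀ k, k + 1 < n →
      k - colCount n t (n - 1 - k) ≤ (k + 1) - colCount n t (n - 1 - (k + 1)) := by
    intro k hk
    have h1 := colCount_step ht hg h2 (show (n - 2 - k) + 1 < n by omega)
    rw [show n - 2 - k + 1 = n - 1 - k by omega] at h1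
    have h2b := colCount_le ht (show n - 1 - k < n by omega)
    rw [show n - 1 - (k + 1) = n - 2 - k by omega]
    omega
  have hall : ∀ d k, k + d < n →
      k - colCount n t (n - 1 - k) ≤ (k + d) - colCount n t (n - 1 - (k + d)) := by
    intro d
    induction d with
    | zero => intro k _; simp
    | succ d ihd =>
      intro k hk
      have h1 := ihd k (by omega)
      have h2' := hstep (k + d) (by omega)
      exact le_trans h1 h2'
  intro k k' h
  have hv : (k : ℕ) ≤ k' := h
  have := hall (k'.val - k.val) k.val (by have := k'.isLt; omega)
  rw [show k.val + (k'.val - k.val) = k'.val by omega] at this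
  exact this

/-! ### The triangle of an inversion sequence -/

def tri (n : ℕ) (E : ℕ → ℕ) : ℕ → ℕ → ℕ := fun i j =>
  if j ≤ i ∧ i < n then (if i + E (n - 1 - j) + 1 < n then j + 2 else j + 1) else 0

lemma tri_in {n : ℕ} {E : ℕ → ℕ} {i j : ℕ} (h : j ≤ i ∧ i < n) :
    tri n E i j = if i + E (n - 1 - j) + 1 < n then j + 2 else j + 1 := by
  simp only [tri, if_pos h]

lemma tri_out {n : ℕ} {E : ℕ → ℕ} {i j : ℕ} (h : ¬(j ≤ i ∧ i < n)) :
    tri n E i j = 0 := by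
  simp only [tri, if_neg h]

lemma tri_vals {n : ℕ} {E : ℕ → ℕ} {i j : ℕ} (hji : j ≤ i) (hi : i < n) :
    tri n E i j = j + 1 ∨ tri n E i j = j + 2 := by
  rw [tri_in ⟨hji, hi⟩]
  split_ifs with h
  · exact Or.inr rfl
  · exact Or.inl rfl

lemma tri_isMonotone {n : ℕ} {E : ℕ → ℕ} (hn : 1 ≤ n) (hEmono : Monotone E) :
    IsMonotoneTriangle n (tri n E) := by
  refine ⟨?_, ?_, ?_, ?_⟩
  · intro i j j' hi hjj' hj'i
    rw [tri_in ⟨by omega, hi⟩, tri_in ⟨hj'i, hi⟩]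
    have hm : E (n - 1 - j') ≤ E (n - 1 - j) := hEmono (by omega)
    split_ifs <;> omega
  · intro i i' j hii' hi' hji
    rw [tri_in ⟨hji, by omega⟩, tri_in ⟨by omega, hi'⟩]
    split_ifs <;> omega
  · intro i j d hidn hji
    rcases Nat.eq_zero_or_pos d with rfl | hd
    · simp
    · rw [tri_in ⟨hji, by omega⟩, tri_in ⟨by omega, hidn⟩]
      split_ifs <;> omega
  · intro j hjn
    rw [tri_in ⟨by omega, by omega⟩, if_neg (by omega)]

lemma tri_gapless {n : ℕ} {E : ℕ → ℕ} (hn : 1 ≤ n) : Gapless n (tri n E) := by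
  intro j c hj h1 h2
  obtain ⟨i1, hi1a, hi1b, hi1c⟩ := h1
  obtain ⟨i2, hi2a, hi2b, hi2c⟩ := h2
  have v1 := tri_vals (E := E) hi1a hi1b
  have v2 := tri_vals (E := E) hi2a hi2b
  have hc : c = j + 1 ∨ c = j + 2 := by omega
  rcases hc with rfl | rfl
  · refine ⟨n - 1, by omega, by omega, ?_⟩
    rw [tri_in ⟨by omega, by omega⟩, if_neg (by omega)]
  · exact ⟨i2, hi2a, hi2b, by omega⟩

lemma tri_two {n : ℕ} {E : ℕ → ℕ} : AtMostTwoValues n (tri n E) :=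
  fun j _ => ⟨j + 1, j + 2, fun i hji hi => tri_vals hji hi⟩

lemma tri_norm {n : ℕ} {E : ℕ → ℕ} : Normalized n (tri n E) :=
  fun i j h => tri_out (by omega)

end Structure

/-! ### Round trips -/

lemma roundtripA {n : ℕ} {t : ℕ → ℕ → ℕ} (hn : 1 ≤ n) (ht : IsMonotoneTriangle n t)
    (hg : Gapless n t) (h2 : AtMostTwoValues n t) (hnorm : Normalized n t) :
    tri n (ext n (eOf n t)) = t := by
  funext i j
  by_cases h : j ≤ i ∧ i < n
  · rw [tri_in h]
    have hval : ext n (eOf n t) (n - 1 - j) =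
        (n - 1 - j) - colCount n t (n - 1 - (n - 1 - j)) := by
      rw [ext_lt _ (show n - 1 - j < n by omega)]
      rfl
    rw [hval, show n - 1 - (n - 1 - j) = j by omega]
    have hcle := colCount_le ht (show j < n by omega)
    have hchar := tri_char ht hg h2 h.1 h.2
    have hb := tri_bounds ht hg h2 h.1 h.2
    set c := colCount n t j with hcdef
    split_ifs with hcond
    · have hlt : i < j + c := by omega
      have := hchar.mpr hlt
      omega
    · have hge : ¬ i < j + c := by omega
      have : t i j ≠ j + 2 := fun hh => hge (hchar.mp hh)
      omega
  · rw [tri_out h]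
    exact (hnorm i j (by omega)).symm

lemma roundtripB {n : ℕ} {e : Fin n → ℕ} (hn : 1 ≤ n) (he1 : ∀ i : Fin n, e i ≤ (i : ℕ))
    (he2 : Monotone e) : eOf n (tri n (ext n e)) = e := by
  have hcc2 : ∀ k : Fin n, colCount n (tri n (ext n e)) (n - 1 - k.val) = k.val - e k := by
    intro k
    have hek := he1 k
    have hk := k.isLt
    apply colCount_eq n (n - 1 - k.val) (k.val - e k) _ (by omega)
    intro i hji hi
    rw [tri_in ⟨hji, hi⟩, show n - 1 - (n - 1 - k.val) = k.val by omega,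
      ext_lt _ k.isLt]
    simp only [Fin.eta]
    split_ifs with hcond
    · exact iff_of_true rfl (by omega)
    · exact iff_of_false (by omega) (by omega)
  funext k
  show k.val - colCount n (tri n (ext n e)) (n - 1 - k.val) = e k
  rw [hcc2 k]
  have := he1 k
  omega


end GTTaux

/-- Gapless monotone triangles of order `n ≥ 1` with at most two distinct values in each
column are in bijection with weakly increasing inversion sequences of length `n`; hence
their number is the `n`-th Catalan number. -/
theorem gapless_two_value_triangles_equiv_inversion_sequences (n : ℕ) (hn : 1 ≤ n) :
    Nonempty
      ({t : ℕ → ℕ → ℕ //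
          IsMonotoneTriangle n t ∧ Gapless n t ∧ AtMostTwoValues n t ∧ Normalized n t} ≃
        {e : Fin n → ℕ // (∀ i : Fin n, e i ≤ (i : ℕ)) ∧ Monotone e}) ∧
    Nat.card {t : ℕ → ℕ → ℕ //
        IsMonotoneTriangle n t ∧ Gapless n t ∧ AtMostTwoValues n t ∧ Normalized n t} =
      catalan n := by
  have heqv :
      {t : ℕ → ℕ → ℕ //
          IsMonotoneTriangle n t ∧ Gapless n t ∧ AtMostTwoValues n t ∧ Normalized n t} ≃
        {e : Fin n → ℕ // (∀ i : Fin n, e i ≤ (i : ℕ)) ∧ Monotone e} :=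
    { toFun := fun x =>
        ⟨GTTaux.eOf n x.1, GTTaux.eOf_le n x.1, GTTaux.eOf_mono x.2.1 x.2.2.1 x.2.2.2.1⟩
      invFun := fun y =>
        ⟨GTTaux.tri n (GTTaux.ext n y.1), GTTaux.tri_isMonotone hn (GTTaux.ext_mono y.2.2),
          GTTaux.tri_gapless hn, GTTaux.tri_two, GTTaux.tri_norm⟩
      left_inv := fun x =>
        Subtype.ext (GTTaux.roundtripA hn x.2.1 x.2.2.1 x.2.2.2.1 x.2.2.2.2)
      right_inv := fun y => Subtype.ext (GTTaux.roundtripB hn y.2.1 y.2.2) }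
  refine ⟨⟨heqv⟩, ?_⟩
  rw [Nat.card_congr heqv]
  exact GTTaux.card_invSeq n
end

section
/- Every permutation π of {1,...,n} avoiding both patterns 312 and 321 is a direct sum w_{m₁} ⊕ w_{m₂} ⊕ ... ⊕ w_{m_k} for a unique composition (m₁,...,m_k) of n into positive parts, where w_m denotes the permutation 2 3 ... m 1 of size m. Moreover this correspondence is a bijection between permutations of size n avoiding 312 and 321 and compositions of n into positive parts. -/
/-- The permutation `w_m = 2 3 ⋯ m 1` of size `m`, 0-based: `i ↦ i + 1` for `i + 1 < m`,
and `m - 1 ↦ 0`. -/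
def wfun (m i : ℕ) : ℕ := if i + 1 < m then i + 1 else 0

/-- The direct sum `w_{m₁} ⊕ w_{m₂} ⊕ ⋯ ⊕ w_{m_k}` for a list of block sizes, as a
function on 0-based positions. -/
def dsum : List ℕ → ℕ → ℕ
  | [], i => i
  | m :: L, i => if i < m then wfun m i else m + dsum L (i - m)

/-! 312 and 321 are the two patterns of length 3 whose first entry is the largest, so `π` avoids
both iff no entry has two smaller entries to its right; counting the entries below `π i` then
gives `π i ≤ i + 1`. For such a `π` the entries before the position `p` of the value `0` are
forced to be `1, …, p` and all later entries exceed `p`, so `π = w_{p+1} ⊕ π'` with `π'` of the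
same kind. Conversely, no `w_{m₁} ⊕ ⋯ ⊕ w_{m_k}` has an entry with two smaller entries to its
right, and the block sizes are read off from the positions of the block minima. -/

open Equiv Finset

section Patterns

variable {n : ℕ} {σ : Perm (Fin n)}

lemma strictMono_vecCons_three {x y z : Fin n} (hxy : x < y) (hyz : y < z) :
    StrictMono ![x, y, z] :=
  Fin.strictMono_iff_lt_succ.2 fun i => by fin_cases i <;> simpa

lemma contains_312_of_lt {x y z : Fin n} (hxy : x < y) (hyz : y < z) (hyz' : σ y < σ z)
    (hzx : σ z < σ x) : Contains σ (finRotate 3)⁻¹ := by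
  have hpat : ⇑(finRotate 3)⁻¹ = ![2, 0, 1] := by decide
  refine ⟨![x, y, z], strictMono_vecCons_three hxy hyz, fun a b => ?_⟩
  fin_cases a <;> fin_cases b <;> simp [hpat] <;> omega

lemma contains_321_of_lt {x y z : Fin n} (hxy : x < y) (hyz : y < z) (hzy : σ z < σ y)
    (hyx : σ y < σ x) : Contains σ (Fin.revPerm : Perm (Fin 3)) := by
  refine ⟨![x, y, z], strictMono_vecCons_three hxy hyz, fun a b => ?_⟩
  fin_cases a <;> fin_cases b <;> simp <;> omega

lemma avoids_312_and_321_iff :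
    Avoids σ (finRotate 3)⁻¹ ∧ Avoids σ (Fin.revPerm : Perm (Fin 3)) ↔
      ∀ x y z, x < y → y < z → σ y < σ x → σ x < σ z := by
  constructor
  · rintro ⟨h312, h321⟩ x y z hxy hyz hyx
    by_contra! hzx
    have hzx : σ z < σ x := hzx.lt_of_ne (σ.injective.ne (hxy.trans hyz).ne')
    rcases lt_trichotomy (σ y) (σ z) with h | h | h
    · exact h312 (contains_312_of_lt hxy hyz h hzx)
    · exact hyz.ne (σ.injective h)
    · exact h321 (contains_321_of_lt hxy hyz h hyx)
  · intro h
    have avoids : ∀ pat : Perm (Fin 3), pat 1 < pat 0 → pat 2 < pat 0 → Avoids σ pat := by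
      rintro pat h10 h20 ⟨g, hg, hiff⟩
      exact ((hiff 2 0).1 h20).not_gt
        (h _ _ _ (hg (by decide)) (hg (by decide)) ((hiff 1 0).1 h10))
    exact ⟨avoids _ (by decide) (by decide), avoids _ (by decide) (by decide)⟩

/-- Of the `σ i` positions carrying a value below `σ i`, at most `i` precede `i` and, by the
hypothesis, at most one follows it. -/
lemma val_apply_le_succ (h : ∀ x y z, x < y → y < z → σ y < σ x → σ x < σ z) (i : Fin n) :
    (σ i : ℕ) ≤ i + 1 := by
  classical
  have hbelow : #{t | σ t < σ i} = σ i := by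
    rw [← Fin.card_Iio (σ i)]
    exact card_equiv σ (by simp)
  have hafter : #{t | i < t ∧ σ t < σ i} ≤ 1 := by
    refine card_le_one.2 fun a ha b hb => ?_
    simp only [mem_filter, mem_univ, true_and] at ha hb
    by_contra hab
    rcases lt_or_gt_of_ne hab with hab | hab
    · exact (h _ _ _ ha.1 hab ha.2).not_gt hb.2
    · exact (h _ _ _ hb.1 hab hb.2).not_gt ha.2
  have hsub : ({t | σ t < σ i} : Finset _) ⊆ Iio i ∪ ({t | i < t ∧ σ t < σ i} : Finset _) := by
    intro t ht
    simp only [mem_filter, mem_univ, true_and] at ht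
    rcases lt_trichotomy t i with hti | rfl | hti
    · simp [hti]
    · exact absurd ht (lt_irrefl _)
    · simp [hti, ht]
  calc (σ i : ℕ) = #{t | σ t < σ i} := hbelow.symm
    _ ≤ #(Iio i) + #{t | i < t ∧ σ t < σ i} := (card_le_card hsub).trans (card_union_le _ _)
    _ ≤ i + 1 := by rw [Fin.card_Iio]; omega

end Patterns

section DirectSum

variable {L L' : List ℕ} {m i j : ℕ}

lemma wfun_lt (h : i < m) : wfun m i < m := by
  unfold wfun; split <;> omega

lemma dsum_cons_of_lt (h : i < m) : dsum (m :: L) i = wfun m i := if_pos h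

lemma dsum_cons_add : dsum (m :: L) (m + i) = m + dsum L i := by
  simp [dsum]

lemma le_dsum_cons (h : m ≤ i) : m ≤ dsum (m :: L) i := by
  obtain ⟨i, rfl⟩ := Nat.exists_eq_add_of_le h
  rw [dsum_cons_add]
  omega

lemma dsum_cons_eq_zero_iff (hm : 0 < m) : dsum (m :: L) i = 0 ↔ i + 1 = m := by
  unfold dsum wfun
  split_ifs <;> simp <;> omega

lemma dsum_lt_sum (hi : i < L.sum) : dsum L i < L.sum := by
  induction L generalizing i with
  | nil => simp at hi
  | cons m L ih =>
    rw [List.sum_cons] at hi ⊢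
    rcases Nat.lt_or_ge i m with him | him
    · rw [dsum_cons_of_lt him]
      have := wfun_lt him
      omega
    · obtain ⟨j, rfl⟩ := Nat.exists_eq_add_of_le him
      rw [dsum_cons_add]
      have := @ih j (by omega)
      omega

lemma dsum_injective : Function.Injective (dsum L) := by
  induction L with
  | nil => exact fun i j h => h
  | cons m L ih =>
    suffices ∀ i j, i < m → dsum (m :: L) i = dsum (m :: L) j → i = j by
      intro i j h
      rcases Nat.lt_or_ge i m with him | him
      · exact this i j him h
      rcases Nat.lt_or_ge j m with hjm | hjm
      · exact (this j i hjm h.symm).symm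
      obtain ⟨i, rfl⟩ := Nat.exists_eq_add_of_le him
      obtain ⟨j, rfl⟩ := Nat.exists_eq_add_of_le hjm
      rw [dsum_cons_add, dsum_cons_add] at h
      rw [ih (Nat.add_left_cancel h)]
    intro i j him h
    rw [dsum_cons_of_lt him] at h
    rcases Nat.lt_or_ge j m with hjm | hjm
    · rw [dsum_cons_of_lt hjm] at h
      unfold wfun at h
      split_ifs at h <;> omega
    · obtain ⟨j, rfl⟩ := Nat.exists_eq_add_of_le hjm
      rw [dsum_cons_add] at h
      have := wfun_lt him
      omega

/-- Inside a block `w_m` only the last entry is smaller than its predecessors, and every later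
block lies entirely above it. -/
lemma dsum_lt_of_lt_of_lt {k : ℕ} (hij : i < j) (hjk : j < k) (hji : dsum L j < dsum L i) :
    dsum L i < dsum L k := by
  induction L generalizing i j k with
  | nil => simp only [dsum] at hji ⊢; omega
  | cons m L ih =>
    rcases Nat.lt_or_ge i m with him | him
    · have hwi := wfun_lt him
      rw [dsum_cons_of_lt him] at hji ⊢
      have hjm : j < m := by
        by_contra! hjm
        have := le_dsum_cons (L := L) hjm
        omega
      have hkm := le_dsum_cons (L := L) (show m ≤ k by
        rw [dsum_cons_of_lt hjm] at hji
        unfold wfun at hji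
        split_ifs at hji <;> omega)
      unfold wfun
      split_ifs <;> omega
    · obtain ⟨i, rfl⟩ := Nat.exists_eq_add_of_le him
      obtain ⟨j, rfl⟩ := Nat.exists_eq_add_of_le (him.trans hij.le)
      obtain ⟨k, rfl⟩ := Nat.exists_eq_add_of_le (him.trans (hij.trans hjk).le)
      simp only [dsum_cons_add] at hji ⊢
      have := @ih i j k (by omega) (by omega) (by omega)
      omega

lemma eq_of_dsum_eq (hL : ∀ m ∈ L, 0 < m) (hL' : ∀ m ∈ L', 0 < m) (hsum : L.sum = L'.sum)
    (h : ∀ i < L.sum, dsum L i = dsum L' i) : L = L' := by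
  induction L generalizing L' with
  | nil =>
    cases L' with
    | nil => rfl
    | cons m' L' => simp at hsum; have := hL' m' (by simp); omega
  | cons m L ih =>
    cases L' with
    | nil => simp at hsum; have := hL m (by simp); omega
    | cons m' L' =>
      have hm := hL m (by simp)
      obtain rfl : m = m' := by
        have h0 := (dsum_cons_eq_zero_iff (L := L) hm).2 (Nat.sub_add_cancel hm)
        rw [h (m - 1) (by simp; omega)] at h0
        have := (dsum_cons_eq_zero_iff (hL' m' (by simp))).1 h0
        omega
      rw [ih (List.forall_mem_cons.1 hL).2 (List.forall_mem_cons.1 hL').2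
        (by simpa using hsum) fun i hi => ?_]
      have := h (m + i) (by simp; omega)
      rwa [dsum_cons_add, dsum_cons_add, Nat.add_left_cancel_iff] at this

noncomputable def dsumPerm (L : List ℕ) : Perm (Fin L.sum) :=
  .ofBijective (fun i => ⟨dsum L i, dsum_lt_sum i.2⟩)
    (Finite.injective_iff_bijective.1 fun _ _ h => Fin.ext (dsum_injective (Fin.val_eq_of_eq h)))

lemma dsumPerm_apply (i : Fin L.sum) : (dsumPerm L i : ℕ) = dsum L i := rfl

lemma avoids_312_and_321_dsumPerm :
    Avoids (dsumPerm L) (finRotate 3)⁻¹ ∧ Avoids (dsumPerm L) (Fin.revPerm : Perm (Fin 3)) :=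
  avoids_312_and_321_iff.2 fun _ _ _ hxy hyz hyx => dsum_lt_of_lt_of_lt hxy hyz hyx

end DirectSum

section BoundedRise

variable {f : ℕ → ℕ} {n p : ℕ}

lemma eq_succ_of_lt_of_eq_zero (hinj : Set.InjOn f (Set.Iio n)) (hle : ∀ i < n, f i ≤ i + 1)
    (hp : p < n) (hfp : f p = 0) {i : ℕ} (hi : i < p) : f i = i + 1 := by
  induction i using Nat.strong_induction_on with
  | _ i ih =>
    have hin : i < n := hi.trans hp
    cases hf : f i with
    | zero => exact absurd (hinj hin hp (hf.trans hfp.symm)) hi.ne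
    | succ j =>
      have hji : j ≤ i := by have := hle i hin; omega
      refine congrArg (· + 1) (hji.eq_or_lt.resolve_right fun hji => hji.ne ?_)
      exact hinj (hji.trans hin) hin ((ih j hji (hji.trans hi)).trans hf.symm)

lemma succ_le_of_lt_of_eq_zero (hinj : Set.InjOn f (Set.Iio n)) (hle : ∀ i < n, f i ≤ i + 1)
    (hp : p < n) (hfp : f p = 0) {i : ℕ} (hpi : p < i) (hin : i < n) : p + 1 ≤ f i := by
  by_contra! hfi
  cases hf : f i with
  | zero => exact hpi.ne' (hinj hin hp (hf.trans hfp.symm))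
  | succ j =>
    have hjp : j < p := by omega
    exact (hjp.trans hpi).ne
      (hinj (hjp.trans hp) hin ((eq_succ_of_lt_of_eq_zero hinj hle hp hfp hjp).trans hf.symm))

lemma exists_dsum_eq_of_le_succ (hmaps : Set.MapsTo f (Set.Iio n) (Set.Iio n))
    (hinj : Set.InjOn f (Set.Iio n)) (hle : ∀ i < n, f i ≤ i + 1) :
    ∃ L : List ℕ, (∀ m ∈ L, 0 < m) ∧ L.sum = n ∧ ∀ i < n, f i = dsum L i := by
  induction n using Nat.strong_induction_on generalizing f with
  | _ n ih =>
  rcases Nat.eq_zero_or_pos n with rfl | hn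
  · exact ⟨[], by simp, rfl, by simp⟩
  obtain ⟨p, hp : p < n, hfp⟩ :=
    (((Set.finite_Iio n).injOn_iff_bijOn_of_mapsTo hmaps).1 hinj).surjOn (Set.mem_Iio.2 hn)
  have hhigh (j : ℕ) (hj : p + 1 + j < n) : p + 1 ≤ f (p + 1 + j) :=
    succ_le_of_lt_of_eq_zero hinj hle hp hfp (by omega) hj
  obtain ⟨L, hL, hsum, hfL⟩ :=
    ih (n - (p + 1)) (by omega) (f := fun j => f (p + 1 + j) - (p + 1))
      (fun j hj => by
        simp only [Set.mem_Iio] at hj ⊢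
        have : f (p + 1 + j) < n := hmaps (show p + 1 + j < n by omega)
        omega)
      (fun i hi j hj h => by
        simp only [Set.mem_Iio] at hi hj h
        have := hinj (show p + 1 + i < n by omega) (show p + 1 + j < n by omega)
          (by have := hhigh i (by omega); have := hhigh j (by omega); omega)
        omega)
      (fun j hj => by have := hle (p + 1 + j) (by omega); omega)
  refine ⟨(p + 1) :: L, List.forall_mem_cons.2 ⟨p.succ_pos, hL⟩, by simp [hsum]; omega,
    fun i hi => ?_⟩
  rcases lt_trichotomy i p with hip | rfl | hpi
  · rw [dsum_cons_of_lt (by omega), eq_succ_of_lt_of_eq_zero hinj hle hp hfp hip, wfun,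
      if_pos (by omega)]
  · rw [hfp, dsum_cons_of_lt (by omega), wfun, if_neg (by omega)]
  · obtain ⟨j, rfl⟩ := Nat.exists_eq_add_of_lt hpi
    have := hfL j (by omega)
    have := hhigh j (by omega)
    rw [show p + j + 1 = p + 1 + j by omega, dsum_cons_add]
    omega

end BoundedRise

lemma exists_dsum_eq_of_val_apply_le_succ {n : ℕ} {σ : Perm (Fin n)}
    (h : ∀ i, (σ i : ℕ) ≤ i + 1) :
    ∃ L : List ℕ, (∀ m ∈ L, 0 < m) ∧ L.sum = n ∧ ∀ i : Fin n, (σ i : ℕ) = dsum L i := by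
  let f (i : ℕ) : ℕ := if hi : i < n then σ ⟨i, hi⟩ else i
  have hf (i : ℕ) (hi : i < n) : f i = σ ⟨i, hi⟩ := dif_pos hi
  obtain ⟨L, hL, hsum, hfL⟩ := exists_dsum_eq_of_le_succ (f := f) (n := n)
    (fun i hi => by simp only [Set.mem_Iio, hf i hi, Fin.is_lt])
    (fun i hi j hj hij => by
      rw [hf i hi, hf j hj, Fin.val_inj, σ.apply_eq_iff_eq] at hij
      exact Fin.val_eq_of_eq hij)
    (fun i hi => (hf i hi).trans_le (h _))
  exact ⟨L, hL, hsum, fun i => (hf i i.2).symm.trans (hfL i i.2)⟩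

/-- Every permutation of size `n` avoiding 312 and 321 is `w_{m₁} ⊕ ⋯ ⊕ w_{m_k}` for a
unique composition `(m₁, …, m_k)` of `n` into positive parts, and conversely every such
composition arises from such a permutation; hence this correspondence is a bijection. -/
theorem avoid_312_321_iff_direct_sum_of_w (n : ℕ) :
    (∀ π : Equiv.Perm (Fin n), Avoids π ((finRotate 3)⁻¹) →
      Avoids π (Fin.revPerm : Equiv.Perm (Fin 3)) →
      ∃! L : List ℕ, (∀ m ∈ L, 0 < m) ∧ L.sum = n ∧ ∀ i : Fin n, (π i : ℕ) = dsum L i) ∧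
    (∀ L : List ℕ, (∀ m ∈ L, 0 < m) → L.sum = n →
      ∃ π : Equiv.Perm (Fin n), Avoids π ((finRotate 3)⁻¹) ∧
        Avoids π (Fin.revPerm : Equiv.Perm (Fin 3)) ∧ ∀ i : Fin n, (π i : ℕ) = dsum L i) := by
  refine ⟨fun π h312 h321 => ?_, fun L _ hsum => ?_⟩
  · obtain ⟨L, hL, hsum, hπL⟩ := exists_dsum_eq_of_val_apply_le_succ
      (val_apply_le_succ (avoids_312_and_321_iff.1 ⟨h312, h321⟩))
    refine ⟨L, ⟨hL, hsum, hπL⟩, fun L' ⟨hL', hsum', hπL'⟩ => ?_⟩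
    refine eq_of_dsum_eq hL' hL (hsum'.trans hsum.symm) fun i hi => ?_
    rw [hsum'] at hi
    exact (hπL' ⟨i, hi⟩).symm.trans (hπL ⟨i, hi⟩)
  · subst hsum
    exact ⟨dsumPerm L, avoids_312_and_321_dsumPerm.1, avoids_312_and_321_dsumPerm.2,
      dsumPerm_apply⟩
end

section
/- For every n ≥ 1, the number of permutations of {1,...,n} avoiding both patterns 312 and 321 equals 2^(n-1). -/
def Constrained {n : ℕ} (σ : Equiv.Perm (Fin n)) : Prop :=
  ∀ i : Fin n, (σ i : ℕ) ≤ (i : ℕ) + 1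

section witness

variable {n : ℕ} (σ : Equiv.Perm (Fin n))

lemma strictMono_vec3 {i j k : Fin n} (h1 : i < j) (h2 : j < k) :
    StrictMono ![i, j, k] := by
  intro a b hab
  fin_cases a <;> fin_cases b <;>
    simp_all [Matrix.cons_val_zero, Matrix.cons_val_one] <;>
    first
      | exact h1 | exact h2 | exact h1.trans h2

lemma contains_of_witness {i j k : Fin n} (hij : i < j) (hjk : j < k)
    (h1 : σ j < σ i) (h2 : σ k < σ i) :
    Contains σ (finRotate 3)⁻¹ ∨ Contains σ (Fin.revPerm : Equiv.Perm (Fin 3)) := by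
  rcases lt_or_gt_of_ne (fun h : σ j = σ k => absurd (σ.injective h) (hjk.ne)) with hjk' | hjk'
  · left
    refine ⟨![i, j, k], strictMono_vec3 hij hjk, ?_⟩
    intro a b
    fin_cases a <;> fin_cases b
    · exact iff_of_false (lt_irrefl _) (lt_irrefl _)
    · exact iff_of_false (by decide) (asymm h1)
    · exact iff_of_false (by decide) (asymm h2)
    · exact iff_of_true (by decide) h1
    · exact iff_of_false (lt_irrefl _) (lt_irrefl _)
    · exact iff_of_true (by decide) hjk'
    · exact iff_of_true (by decide) h2
    · exact iff_of_false (by decide) (asymm hjk')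
    · exact iff_of_false (lt_irrefl _) (lt_irrefl _)
  · right
    refine ⟨![i, j, k], strictMono_vec3 hij hjk, ?_⟩
    intro a b
    fin_cases a <;> fin_cases b
    · exact iff_of_false (lt_irrefl _) (lt_irrefl _)
    · exact iff_of_false (by decide) (asymm h1)
    · exact iff_of_false (by decide) (asymm h2)
    · exact iff_of_true (by decide) h1
    · exact iff_of_false (lt_irrefl _) (lt_irrefl _)
    · exact iff_of_false (by decide) (asymm hjk')
    · exact iff_of_true (by decide) h2
    · exact iff_of_true (by decide) hjk'
    · exact iff_of_false (lt_irrefl _) (lt_irrefl _)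

lemma witness_of_contains
    (h : Contains σ (finRotate 3)⁻¹ ∨ Contains σ (Fin.revPerm : Equiv.Perm (Fin 3))) :
    ∃ i j k : Fin n, i < j ∧ j < k ∧ σ j < σ i ∧ σ k < σ i := by
  rcases h with ⟨f, hf, hp⟩ | ⟨f, hf, hp⟩
  · exact ⟨f 0, f 1, f 2, hf (by decide), hf (by decide),
      (hp 1 0).1 (by decide), (hp 2 0).1 (by decide)⟩
  · exact ⟨f 0, f 1, f 2, hf (by decide), hf (by decide),
      (hp 1 0).1 (by decide), (hp 2 0).1 (by decide)⟩

end witness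

section equiv

open Finset

variable {n : ℕ} (σ : Equiv.Perm (Fin n))

lemma no_witness (hC : Constrained σ) :
    ¬ ∃ i j k : Fin n, i < j ∧ j < k ∧ σ j < σ i ∧ σ k < σ i := by
  classical
  rintro h
  set F : Finset (Fin n) :=
    univ.filter (fun i => ∃ j k : Fin n, i < j ∧ j < k ∧ σ j < σ i ∧ σ k < σ i) with hF
  have hFne : F.Nonempty := by
    obtain ⟨i, j, k, h1, h2, h3, h4⟩ := h
    exact ⟨i, Finset.mem_filter.mpr ⟨Finset.mem_univ _, j, k, h1, h2, h3, h4⟩⟩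
  obtain ⟨i, hiF, hmax⟩ := F.exists_max_image (fun i => (σ i : ℕ)) hFne
  obtain ⟨j, k, hij, hjk, hji, hki⟩ := (mem_filter.mp hiF).2
  -- image of positions below i
  set A : Finset (Fin n) := (Finset.Iio i).map σ.toEmbedding with hA
  have hcardA : A.card = (i : ℕ) := by simp [hA]
  have hbig : ∃ v ∈ A, σ i < v := by
    by_contra hb
    push_neg at hb
    have hsub : A ⊆ ((Finset.Iio (σ i)).erase (σ j)).erase (σ k) := by
      intro v hv
      obtain ⟨p, hp, rfl⟩ := Finset.mem_map.mp hv
      have hpi : p < i := Finset.mem_Iio.mp hp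
      have h1 : σ p ≠ σ k := fun h => absurd (σ.injective h) (hpi.trans (hij.trans hjk)).ne
      have h2 : σ p ≠ σ j := fun h => absurd (σ.injective h) (hpi.trans hij).ne
      have h3 : σ p ≠ σ i := fun h => absurd (σ.injective h) hpi.ne
      refine Finset.mem_erase.mpr ⟨h1, Finset.mem_erase.mpr ⟨h2, Finset.mem_Iio.mpr ?_⟩⟩
      exact lt_of_le_of_ne (hb _ hv) h3
    have hjlt : σ j ∈ Finset.Iio (σ i) := Finset.mem_Iio.mpr hji
    have hklt : σ k ∈ (Finset.Iio (σ i)).erase (σ j) :=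
      Finset.mem_erase.mpr ⟨fun h => absurd (σ.injective h) hjk.ne', Finset.mem_Iio.mpr hki⟩
    have hcard2 : (((Finset.Iio (σ i)).erase (σ j)).erase (σ k)).card
        = ((σ i : ℕ)) - 1 - 1 := by
      rw [Finset.card_erase_of_mem hklt, Finset.card_erase_of_mem hjlt, Fin.card_Iio]
    have hle := Finset.card_le_card hsub
    rw [hcardA, hcard2] at hle
    have hσj : (σ j : ℕ) < (σ i : ℕ) := hji
    have hσk : (σ k : ℕ) < (σ i : ℕ) := hki
    have hσjk : (σ j : ℕ) ≠ (σ k : ℕ) := by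
      intro h
      exact absurd (σ.injective (Fin.ext h)) hjk.ne
    have hCi := hC i
    omega
  obtain ⟨v, hvA, hv⟩ := hbig
  obtain ⟨p, hp, rfl⟩ := Finset.mem_map.mp hvA
  have hpi : p < i := Finset.mem_Iio.mp hp
  have hpF : p ∈ F := by
    simp only [hF, mem_filter, mem_univ, true_and]
    exact ⟨j, k, hpi.trans hij, hjk, hji.trans hv, hki.trans hv⟩
  exact absurd (hmax p hpF) (not_le.mpr hv)

lemma avoid_iff :
    (Avoids σ (finRotate 3)⁻¹ ∧ Avoids σ (Fin.revPerm : Equiv.Perm (Fin 3))) ↔ Constrained σ := by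
  classical
  constructor
  · intro hA
    by_contra hC
    simp only [Constrained, not_forall, not_le] at hC
    obtain ⟨i, hi⟩ := hC
    -- find two positions after i with smaller values
    set S : Finset (Fin n) := univ.filter (fun p => σ p < σ i) with hS
    have hScard : S.card = (σ i : ℕ) := by
      have : S = (Finset.Iio (σ i)).map σ.symm.toEmbedding := by
        ext p
        simp [hS, Equiv.symm_apply_eq, eq_comm]
      rw [this]
      simp
    set T : Finset (Fin n) := S.filter (fun p => i < p) with hT
    have hsplit : S.card ≤ (i : ℕ) + T.card := by
      have hSsub : S ⊆ S.filter (fun p => p < i) ∪ T := by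
        intro p hp
        have hpi : p ≠ i := by
          intro h
          subst h
          exact absurd (mem_filter.mp hp).2 (lt_irrefl _)
        rcases lt_or_gt_of_ne hpi with h | h
        · exact Finset.mem_union_left _ (mem_filter.mpr ⟨hp, h⟩)
        · exact Finset.mem_union_right _ (mem_filter.mpr ⟨hp, h⟩)
      calc S.card ≤ (S.filter (fun p => p < i) ∪ T).card := Finset.card_le_card hSsub
        _ ≤ (S.filter (fun p => p < i)).card + T.card := Finset.card_union_le _ _
        _ ≤ (i : ℕ) + T.card := by
            have : S.filter (fun p => p < i) ⊆ Finset.Iio i := by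
              intro p hp
              exact Finset.mem_Iio.mpr (mem_filter.mp hp).2
            have := Finset.card_le_card this
            rw [Fin.card_Iio] at this
            omega
    have hT2 : 1 < T.card := by omega
    obtain ⟨a, ha, b, hb, hab⟩ := Finset.one_lt_card.mp hT2
    have haS := mem_filter.mp (mem_filter.mp ha).1
    have hbS := mem_filter.mp (mem_filter.mp hb).1
    have hai : i < a := (mem_filter.mp ha).2
    have hbi : i < b := (mem_filter.mp hb).2
    rcases lt_or_gt_of_ne hab with h | h
    · rcases contains_of_witness σ hai h haS.2 hbS.2 with hc | hc
      · exact hA.1 hc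
      · exact hA.2 hc
    · rcases contains_of_witness σ hbi h hbS.2 haS.2 with hc | hc
      · exact hA.1 hc
      · exact hA.2 hc
  · intro hC
    constructor
    · intro hc
      exact no_witness σ hC (witness_of_contains σ (Or.inl hc))
    · intro hc
      exact no_witness σ hC (witness_of_contains σ (Or.inr hc))

end equiv

section count

lemma constrained_decompose {n : ℕ} (p : Fin (n + 1)) (e : Equiv.Perm (Fin n)) :
    Constrained (Equiv.Perm.decomposeFin.symm (p, e)) ↔ (p : ℕ) ≤ 1 ∧ Constrained e := by
  have key : ∀ i : Fin n,
      ((Equiv.Perm.decomposeFin.symm (p, e)) i.succ : ℕ)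
        = if (e i).succ = p then 0 else (e i : ℕ) + 1 := by
    intro i
    have h0 : ¬ ((e i).succ = (0 : Fin (n+1))) := Fin.succ_ne_zero _
    rw [Equiv.Perm.decomposeFin_symm_apply_succ, Equiv.swap_apply_def, if_neg h0]
    split_ifs with h2
    · rfl
    · simp [Fin.val_succ]
  constructor
  · intro h
    have h0 := h 0
    rw [Equiv.Perm.decomposeFin_symm_apply_zero] at h0
    simp only [Fin.val_zero] at h0
    refine ⟨h0, fun i => ?_⟩
    have hi := h i.succ
    rw [key i] at hi
    simp only [Fin.val_succ] at hi
    split_ifs at hi with hif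
    · have : (e i : ℕ) + 1 = (p : ℕ) := by
        rw [← hif]; simp [Fin.val_succ]
      omega
    · omega
  · rintro ⟨hp, he⟩ j
    rcases Fin.eq_zero_or_eq_succ j with rfl | ⟨i, rfl⟩
    · rw [Equiv.Perm.decomposeFin_symm_apply_zero]
      simpa using hp
    · rw [key i]
      have := he i
      simp only [Fin.val_succ]
      split_ifs <;> omega

lemma card_constrained : ∀ m : ℕ,
    Nat.card {σ : Equiv.Perm (Fin (m + 1)) // Constrained σ} = 2 ^ m := by
  intro m
  induction m with
  | zero =>
      rw [pow_zero, Nat.card_eq_one_iff_unique]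
      refine ⟨⟨fun a b => ?_⟩, ⟨⟨1, fun i => by omega⟩⟩⟩
      ext1
      exact Equiv.ext fun x => Fin.ext (by omega)
  | succ m ih =>
      have key : ∀ σ : Equiv.Perm (Fin (m + 2)),
          Constrained σ ↔ (((Equiv.Perm.decomposeFin σ).1 : ℕ) ≤ 1 ∧
            Constrained (Equiv.Perm.decomposeFin σ).2) := by
        intro σ
        conv_lhs => rw [← Equiv.symm_apply_apply Equiv.Perm.decomposeFin σ]
        exact constrained_decompose _ _
      have E : {σ : Equiv.Perm (Fin (m + 2)) // Constrained σ} ≃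
          {p : Fin (m + 2) // (p : ℕ) ≤ 1} × {e : Equiv.Perm (Fin (m + 1)) // Constrained e} :=
        (Equiv.Perm.decomposeFin.subtypeEquiv (fun σ => by
          rw [key σ])).trans Equiv.subtypeProdEquivProd
      have e2 : {p : Fin (m + 2) // (p : ℕ) ≤ 1} ≃ Fin 2 :=
        { toFun := fun p => ⟨(p.1 : ℕ), by omega⟩
          invFun := fun i => ⟨⟨(i : ℕ), by omega⟩, by simp; omega⟩
          left_inv := fun p => by ext; rfl
          right_inv := fun i => rfl }
      rw [Nat.card_congr E, Nat.card_prod, Nat.card_congr e2, ih]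
      simp [Nat.card_eq_fintype_card]
      ring

end count

/-- The number of permutations of size `n ≥ 1` avoiding both 312 and 321 is `2^(n-1)`. -/
theorem card_avoid_312_321 (n : ℕ) (hn : 1 ≤ n) :
    Nat.card {σ : Equiv.Perm (Fin n) //
      Avoids σ (finRotate 3)⁻¹ ∧ Avoids σ (Fin.revPerm : Equiv.Perm (Fin 3))} = 2 ^ (n - 1) := by
  obtain ⟨m, rfl⟩ := Nat.exists_eq_add_of_le' hn
  rw [Nat.card_congr (Equiv.subtypeEquivRight (fun σ => avoid_iff σ))]
  simpa using card_constrained m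
end

section
/- The map sending an n×n alternating sign matrix A to the array whose i-th row lists (in increasing order) the columns j with Σ_{k=1}^{i} A(k,j) = 1 is a bijection from n×n alternating sign matrices to monotone triangles of order n. -/
/-- A vector with entries in `ℤ` is alternating: consecutive nonzero entries have
opposite signs, and the first and last nonzero entries (if any) equal `1`. -/
def Alternating (n : ℕ) (v : Fin n → ℤ) : Prop :=
  (∀ i₁ i₂ : Fin n, i₁ < i₂ → v i₁ ≠ 0 → v i₂ ≠ 0 →
    (∀ i, i₁ < i → i < i₂ → v i = 0) → v i₂ = - v i₁) ∧
  (∀ i₂ : Fin n, v i₂ ≠ 0 → (∀ i, i < i₂ → v i = 0) → v i₂ = 1) ∧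
  (∀ i₁ : Fin n, v i₁ ≠ 0 → (∀ i, i₁ < i → v i = 0) → v i₁ = 1)

/-- `A` is an `n × n` alternating sign matrix: entries in `{-1, 0, 1}`, all row and
column sums equal to `1`, and the nonzero entries of every row and column alternate in
sign, starting and ending with `1`. -/
def IsASM (n : ℕ) (A : Matrix (Fin n) (Fin n) ℤ) : Prop :=
  (∀ i j, A i j = -1 ∨ A i j = 0 ∨ A i j = 1) ∧
  (∀ i : Fin n, ∑ j, A i j = 1) ∧
  (∀ j : Fin n, ∑ i, A i j = 1) ∧
  (∀ i : Fin n, Alternating n (fun j => A i j)) ∧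
  (∀ j : Fin n, Alternating n (fun i => A i j))

/-- The monotone triangle of an ASM `A`: its `i`-th row (0-based) lists, in increasing
order, the 1-based indices of the columns whose partial sum down to row `i` equals `1`;
entries outside the triangle are `0`. -/
noncomputable def triangleOf {n : ℕ} (A : Matrix (Fin n) (Fin n) ℤ) : ℕ → ℕ → ℕ :=
  fun i j =>
    if i < n ∧ j ≤ i then
      (((Finset.univ.filter (fun c : Fin n =>
            (∑ k ∈ Finset.univ.filter (fun k : Fin n => (k : ℕ) ≤ i), A k c) = 1)).image
          (fun c : Fin n => (c : ℕ) + 1)).sort (· ≤ ·)).getD j 0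
    else 0

open Finset Nat
open scoped Matrix

/-!
For an alternating sign matrix `A`, the partial column sums over the top `m` rows lie in
`{0, 1}` (columns alternate), so they are the indicator of a set `Sₘ` of columns, with
`S₀ = ∅`, `#Sₘ = m` and `Sₙ = {1, …, n}`; row `i` of the triangle enumerates `Sᵢ₊₁`.
Row `m` of `A` is the difference of the indicators of `Sₘ₊₁` and `Sₘ`, so its partial
sums are `#(Sₘ₊₁ ∩ [1, x]) - #(Sₘ ∩ [1, x])`. Rows alternate iff these all lie in `{0, 1}`,
which says exactly that the increasing enumerations of `Sₘ` and `Sₘ₊₁` interlace, i.e. the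
column and diagonal inequalities of a monotone triangle. Conversely the rows of a monotone
triangle give such a chain of sets, and differences of consecutive indicators give back `A`.
-/

lemma Set.Finite.toFinset_ofPred_mem (S : Finset ℕ) (hf : (Set.ofPred (· ∈ S)).Finite) :
    hf.toFinset = S := by
  simp

namespace Nat

lemma nth_mem_eq_getD_sort (S : Finset ℕ) (j : ℕ) :
    nth (· ∈ S) j = (S.sort (· ≤ ·)).getD j 0 := by
  rw [nth_eq_getD_sort (p := (· ∈ S)) S.finite_toSet, Set.Finite.toFinset_ofPred_mem]

lemma nth_mem_strictMonoOn (S : Finset ℕ) : StrictMonoOn (nth (· ∈ S)) (Set.Iio #S) := by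
  simpa using nth_strictMonoOn (p := (· ∈ S)) S.finite_toSet

lemma image_range_card_nth_mem (S : Finset ℕ) : (range #S).image (nth (· ∈ S)) = S := by
  apply coe_injective
  simpa using image_nth_Iio_card (p := (· ∈ S)) S.finite_toSet

lemma count_mem_le_card (S : Finset ℕ) (m : ℕ) : count (· ∈ S) m ≤ #S := by
  simpa using count_le_card (p := (· ∈ S)) S.finite_toSet m

lemma count_mem_eq_card {S : Finset ℕ} {m : ℕ} (h : ∀ x ∈ S, x < m) :
    count (· ∈ S) m = #S := by
  rw [count_eq_card_filter_range, filter_mem_eq_inter, inter_eq_right.mpr fun x hx => by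
    simpa using h x hx]

lemma nth_mem_lt_iff_lt_count {S : Finset ℕ} {j : ℕ} (hj : j < #S) (m : ℕ) :
    nth (· ∈ S) j < m ↔ j < count (· ∈ S) m := by
  have hj' : ∀ hf : (Set.ofPred (· ∈ S)).Finite, j < #hf.toFinset := by simpa using hj
  refine ⟨fun h => ?_, nth_lt_of_lt_count⟩
  calc j < j + 1 := j.lt_succ_self
    _ = count (· ∈ S) (nth (· ∈ S) j + 1) := (count_nth_succ hj').symm
    _ ≤ count (· ∈ S) m := count_monotone _ h

lemma nth_mem_interlace_iff {S T : Finset ℕ} {s : ℕ} (hS : #S = s + 1) (hT : #T = s) :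
    (∀ j < s, nth (· ∈ S) j ≤ nth (· ∈ T) j ∧ nth (· ∈ T) j ≤ nth (· ∈ S) (j + 1)) ↔
      ∀ m, count (· ∈ T) m ≤ count (· ∈ S) m ∧ count (· ∈ S) m ≤ count (· ∈ T) m + 1 := by
  have ltS := fun {j} (hj : j < s + 1) => nth_mem_lt_iff_lt_count (S := S) (hS ▸ hj)
  have ltT := fun {j} (hj : j < s) => nth_mem_lt_iff_lt_count (S := T) (hT ▸ hj)
  constructor
  · intro h m
    have hTm := hT ▸ count_mem_le_card T m
    have hSm := hS ▸ count_mem_le_card S m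
    constructor
    · obtain hk | hk := Nat.eq_zero_or_pos (count (· ∈ T) m)
      · omega
      · have hTk := (ltT (by omega) m).mpr (Nat.sub_one_lt_of_lt hk)
        have := (ltS (by omega) m).mp ((h _ (by omega)).1.trans_lt hTk)
        omega
    · by_contra! hlt
      have hSk := (ltS (by omega) m).mpr (show count (· ∈ T) m + 1 < _ by omega)
      have := (ltT (by omega) m).mp ((h _ (by omega)).2.trans_lt hSk)
      omega
  · intro h j hj
    constructor
    · have := (ltT hj _).mp (lt_add_one (nth (· ∈ T) j))
      exact Nat.lt_add_one_iff.mp ((ltS (by omega) _).mpr (this.trans_le (h _).1))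
    · have := (ltS (by omega) _).mp (lt_add_one (nth (· ∈ S) (j + 1)))
      have := (h (nth (· ∈ S) (j + 1) + 1)).2
      exact Nat.lt_add_one_iff.mp ((ltT hj _).mpr (by omega))

lemma nth_mem_image_range {f : ℕ → ℕ} {s j : ℕ} (hf : StrictMonoOn f (Set.Iio s))
    (hj : j < s) : nth (· ∈ (range s).image f) j = f j := by
  have hcard : #((range s).image f) = s := by
    rw [Finset.card_image_of_injOn (by simpa using hf.injOn), card_range]
  have hdom : {n | ∀ hf : (Set.ofPred (· ∈ (range s).image f)).Finite, n < #hf.toFinset} =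
      Set.Iio s := by
    ext
    simp only [Set.mem_ofPred_eq, Set.Finite.toFinset_ofPred_mem, hcard, Set.mem_Iio]
    exact ⟨fun h => h (finite_toSet ((range s).image f)), fun h _ => h⟩
  apply le_antisymm
  · refine nth_le_of_strictMonoOn_of_mapsTo f ?_ (hdom ▸ hf)
    rw [hdom]
    intro k hk
    simp only [Set.mem_ofPred_eq, mem_image, mem_range]
    exact ⟨k, hk, rfl⟩
  · refine le_nth_of_monotoneOn_of_surjOn f ?_ (hdom ▸ hf.monotoneOn)
      (fun h => by rwa [Set.Finite.toFinset_ofPred_mem, hcard])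
    rw [hdom]
    rintro _ h
    simp only [Set.mem_ofPred_eq, mem_image, mem_range] at h
    obtain ⟨k, hk, rfl⟩ := h
    exact ⟨k, hk, rfl⟩

end Nat

variable {n : ℕ}

def prefixSum (v : Fin n → ℤ) (m : ℕ) : ℤ :=
  ∑ k ∈ univ.filter (fun k : Fin n => (k : ℕ) < m), v k

section prefixSum
variable (v : Fin n → ℤ)

lemma prefixSum_eq_of_forall_eq_zero {a b : ℕ} (hab : a ≤ b)
    (h : ∀ k : Fin n, a ≤ k → (k : ℕ) < b → v k = 0) : prefixSum v b = prefixSum v a := by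
  refine (sum_subset (fun k => by simp only [mem_filter_univ]; omega) fun k hk hk' => ?_).symm
  simp only [mem_filter_univ, not_lt] at hk hk'
  exact h k hk' hk

lemma prefixSum_zero : prefixSum v 0 = 0 := by
  simp [prefixSum]

lemma prefixSum_eq_zero {m : ℕ} (h : ∀ k : Fin n, (k : ℕ) < m → v k = 0) :
    prefixSum v m = 0 :=
  (prefixSum_eq_of_forall_eq_zero v m.zero_le fun k _ => h k).trans (prefixSum_zero v)

lemma prefixSum_succ (k : Fin n) : prefixSum v (k + 1) = prefixSum v k + v k := by
  have : univ.filter (fun j : Fin n => (j : ℕ) < k + 1) =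
      insert k (univ.filter fun j : Fin n => (j : ℕ) < k) := by
    ext j
    simp only [mem_filter_univ, mem_insert, Fin.ext_iff]
    omega
  rw [prefixSum, this, sum_insert (by simp), add_comm, prefixSum]

lemma prefixSum_eq_sum_of_le {m : ℕ} (h : n ≤ m) : prefixSum v m = ∑ k, v k := by
  rw [prefixSum, filter_true_of_mem fun k _ => k.isLt.trans_le h]

lemma prefixSum_add (w : Fin n → ℤ) (m : ℕ) :
    prefixSum (v + w) m = prefixSum v m + prefixSum w m :=
  sum_add_distrib

lemma prefixSum_sub (w : Fin n → ℤ) (m : ℕ) :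
    prefixSum (v - w) m = prefixSum v m - prefixSum w m :=
  sum_sub_distrib _ _

end prefixSum

lemma prefixSum_indicator_eq_count {S : Finset ℕ} (hS : S ⊆ Icc 1 n) (m : ℕ) :
    prefixSum (fun c : Fin n => if (c : ℕ) + 1 ∈ S then 1 else 0) m =
      count (· ∈ S) (m + 1) := by
  induction m with
  | zero =>
    have : 0 ∉ S := fun h => by simpa using hS h
    simp [prefixSum_zero, count_succ, this]
  | succ m ih =>
    rw [count_succ, Nat.cast_add, ← ih]
    by_cases hm : m < n
    · rw [prefixSum_succ _ ⟨m, hm⟩]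
      push_cast
      rfl
    · have : m + 1 ∉ S := fun h => by have := (mem_Icc.mp (hS h)).2; omega
      rw [prefixSum_eq_sum_of_le _ (not_lt.mp hm), prefixSum_eq_sum_of_le _ (by omega), if_neg this,
        Nat.cast_zero, add_zero]

variable {v : Fin n → ℤ}

lemma exists_last_ne_zero {m : ℕ} (h : ∃ k : Fin n, (k : ℕ) < m ∧ v k ≠ 0) :
    ∃ k : Fin n, (k : ℕ) < m ∧ v k ≠ 0 ∧
      ∀ i : Fin n, k < i → (i : ℕ) < m → v i = 0 := by
  obtain ⟨k, hk, hmax⟩ := exists_max_image {k : Fin n | (k : ℕ) < m ∧ v k ≠ 0} id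
    (by simpa [Finset.Nonempty] using h)
  simp only [mem_filter_univ, id] at hk hmax
  refine ⟨k, hk.1, hk.2, fun i hki him => ?_⟩
  by_contra hi
  exact (hmax i ⟨him, hi⟩).not_gt hki

lemma Alternating.prefixSum_succ_eq (hent : ∀ k, v k = -1 ∨ v k = 0 ∨ v k = 1)
    (halt : Alternating n v) (k : Fin n) (hk : v k ≠ 0) :
    prefixSum v (k + 1) = if v k = 1 then 1 else 0 := by
  induction k using WellFoundedLT.induction with
  | _ k ih =>
  rw [prefixSum_succ]
  by_cases hprev : ∃ i : Fin n, (i : ℕ) < k ∧ v i ≠ 0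
  · obtain ⟨i, hik, hi, hzero⟩ := exists_last_ne_zero hprev
    have hvk : v k = -v i := halt.1 i k hik hi hk fun j hij hjk => hzero j hij hjk
    rw [prefixSum_eq_of_forall_eq_zero v hik fun j hij hjk => hzero j hij hjk, ih i hik hi, hvk]
    rcases hent i with h | h | h <;> simp_all
  · push Not at hprev
    rw [prefixSum_eq_zero v hprev, halt.2.1 k hk fun i hi => hprev i hi]
    simp

lemma Alternating.prefixSum_mem (hent : ∀ k, v k = -1 ∨ v k = 0 ∨ v k = 1)
    (halt : Alternating n v) (m : ℕ) : prefixSum v m = 0 ∨ prefixSum v m = 1 := by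
  by_cases hprev : ∃ i : Fin n, (i : ℕ) < m ∧ v i ≠ 0
  · obtain ⟨i, him, hi, hzero⟩ := exists_last_ne_zero hprev
    rw [prefixSum_eq_of_forall_eq_zero v him fun j hij hjm => hzero j hij hjm,
      halt.prefixSum_succ_eq hent i hi]
    split_ifs <;> simp
  · push Not at hprev
    exact .inl (prefixSum_eq_zero v hprev)

lemma alternating_of_prefixSum (hmem : ∀ m ≤ n, prefixSum v m = 0 ∨ prefixSum v m = 1)
    (htot : prefixSum v n = 1) : Alternating n v := by
  refine ⟨fun i₁ i₂ h12 h1 h2 hz => ?_, fun i h hz => ?_, fun i h hz => ?_⟩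
  · have := prefixSum_eq_of_forall_eq_zero v (a := i₁ + 1) h12 fun k h1 h2 => hz k h1 h2
    have := prefixSum_succ v i₁
    have := prefixSum_succ v i₂
    rcases hmem i₁ i₁.isLt.le with h₁ | h₁ <;>
      rcases hmem (i₁ + 1) i₁.isLt with h₂ | h₂ <;>
      rcases hmem (i₂ + 1) i₂.isLt with h₃ | h₃ <;> omega
  · have := prefixSum_eq_of_forall_eq_zero v (Nat.zero_le i) fun k _ hk => hz k hk
    have := prefixSum_succ v i
    have := prefixSum_zero v
    rcases hmem (i + 1) i.isLt with h | h <;> omega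
  · have := prefixSum_eq_of_forall_eq_zero v (a := i + 1) i.isLt fun k hk _ => hz k hk
    have := prefixSum_succ v i
    rcases hmem i i.isLt.le with h | h <;> omega

def partialSumSet (A : Matrix (Fin n) (Fin n) ℤ) (m : ℕ) : Finset ℕ :=
  (univ.filter fun c : Fin n => prefixSum (Aᵀ c) m = 1).image fun c : Fin n => (c : ℕ) + 1

section partialSumSet
variable (A : Matrix (Fin n) (Fin n) ℤ)

lemma succ_mem_partialSumSet (m : ℕ) (c : Fin n) :
    (c : ℕ) + 1 ∈ partialSumSet A m ↔ prefixSum (Aᵀ c) m = 1 := by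
  simp [partialSumSet, Fin.val_inj]

lemma partialSumSet_subset (m : ℕ) : partialSumSet A m ⊆ Icc 1 n := by
  intro y hy
  obtain ⟨c, -, rfl⟩ := mem_image.mp hy
  exact mem_Icc.mpr ⟨by omega, c.isLt⟩

lemma partialSumSet_zero : partialSumSet A 0 = ∅ := by
  simp [partialSumSet, prefixSum_zero]

lemma prefixSum_prefixSum_succ (k : Fin n) (x : ℕ) :
    prefixSum (fun c => prefixSum (Aᵀ c) (k + 1)) x =
      prefixSum (fun c => prefixSum (Aᵀ c) k) x + prefixSum (A k) x := by
  simp only [prefixSum_succ, Matrix.transpose_apply]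
  exact prefixSum_add _ _ x

lemma triangleOf_eq_nth {i j : ℕ} (hi : i < n) (hj : j ≤ i) :
    triangleOf A i j = nth (· ∈ partialSumSet A (i + 1)) j := by
  simp only [triangleOf, if_pos (And.intro hi hj), nth_mem_eq_getD_sort, partialSumSet, prefixSum,
    Matrix.transpose_apply, Nat.lt_succ_iff]

lemma normalized_triangleOf : Normalized n (triangleOf A) :=
  fun i j h => if_neg (by omega)

end partialSumSet

namespace IsASM
variable {A : Matrix (Fin n) (Fin n) ℤ}

lemma prefixSum_col_mem (hA : IsASM n A) (c : Fin n) (m : ℕ) :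
    prefixSum (Aᵀ c) m = 0 ∨ prefixSum (Aᵀ c) m = 1 :=
  Alternating.prefixSum_mem (fun k => hA.1 k c) (hA.2.2.2.2 c) m

lemma prefixSum_row_mem (hA : IsASM n A) (k : Fin n) (m : ℕ) :
    prefixSum (A k) m = 0 ∨ prefixSum (A k) m = 1 :=
  Alternating.prefixSum_mem (hA.1 k) (hA.2.2.2.1 k) m

lemma prefixSum_col_eq_ite (hA : IsASM n A) (c : Fin n) (m : ℕ) :
    prefixSum (Aᵀ c) m = if (c : ℕ) + 1 ∈ partialSumSet A m then 1 else 0 := by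
  rcases hA.prefixSum_col_mem c m with h | h <;> simp [h, succ_mem_partialSumSet]

lemma count_partialSumSet (hA : IsASM n A) (m x : ℕ) :
    (count (· ∈ partialSumSet A m) (x + 1) : ℤ) =
      prefixSum (fun c => prefixSum (Aᵀ c) m) x := by
  rw [← prefixSum_indicator_eq_count (partialSumSet_subset A m)]
  simp only [hA.prefixSum_col_eq_ite]

lemma count_partialSumSet_succ (hA : IsASM n A) (k : Fin n) (y : ℕ) :
    count (· ∈ partialSumSet A k) y ≤ count (· ∈ partialSumSet A (k + 1)) y ∧
      count (· ∈ partialSumSet A (k + 1)) y ≤ count (· ∈ partialSumSet A k) y + 1 := by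
  cases y with
  | zero => simp
  | succ x =>
    have h := hA.count_partialSumSet (k + 1) x
    rw [prefixSum_prefixSum_succ, ← hA.count_partialSumSet] at h
    rcases hA.prefixSum_row_mem k x with h' | h' <;> omega

lemma card_partialSumSet (hA : IsASM n A) {m : ℕ} (hm : m ≤ n) :
    #(partialSumSet A m) = m := by
  have hcount : ∀ m, count (· ∈ partialSumSet A m) (n + 1) = #(partialSumSet A m) :=
    fun m => count_mem_eq_card fun x hx => by
      have := (mem_Icc.mp (partialSumSet_subset A m hx)).2; omega
  induction m with
  | zero => simp [partialSumSet_zero]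
  | succ m ih =>
    have h := prefixSum_prefixSum_succ A ⟨m, hm⟩ n
    rw [← hA.count_partialSumSet, ← hA.count_partialSumSet, prefixSum_eq_sum_of_le _ le_rfl, hA.2.1,
      hcount, hcount] at h
    have := ih (by omega)
    dsimp only at h
    omega

lemma nth_partialSumSet_last (hA : IsASM n A) {j : ℕ} (hj : j < n) :
    nth (· ∈ partialSumSet A n) j = j + 1 := by
  have : partialSumSet A n = (range n).image (· + 1) := by
    ext y
    simp [partialSumSet, prefixSum_eq_sum_of_le _ le_rfl, Matrix.transpose_apply, hA.2.2.1,
      Fin.exists_iff]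
  rw [this, nth_mem_image_range (fun a _ b _ h => by omega) hj]

end IsASM

lemma isMonotoneTriangle_of_succ {t : ℕ → ℕ → ℕ}
    (hrow : ∀ i j j', i < n → j < j' → j' ≤ i → t i j < t i j')
    (hstep : ∀ i j, i + 1 < n → j ≤ i →
      t (i + 1) j ≤ t i j ∧ t i j ≤ t (i + 1) (j + 1))
    (hbot : ∀ j, j < n → t (n - 1) j = j + 1) : IsMonotoneTriangle n t := by
  refine ⟨hrow, fun i i' j hii' hi' hj => ?_, fun i j d => ?_, hbot⟩
  · induction i', hii' using Nat.le_induction with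
    | base => exact le_rfl
    | succ i' hii' ih => exact (hstep i' j hi' (by omega)).1.trans (ih (by omega))
  · induction d with
    | zero => exact fun _ _ => le_rfl
    | succ d ih =>
      intro hd hj
      exact (ih (by omega) hj).trans (hstep (i + d) (j + d) (by omega) (by omega)).2

lemma IsASM.isMonotoneTriangle_triangleOf {A : Matrix (Fin n) (Fin n) ℤ} (hA : IsASM n A) :
    IsMonotoneTriangle n (triangleOf A) := by
  refine isMonotoneTriangle_of_succ (fun i j j' hi hjj' hj' => ?_) (fun i j hi hj => ?_)
    (fun j hj => ?_)
  · rw [triangleOf_eq_nth A hi (by omega), triangleOf_eq_nth A hi hj']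
    have hcard := hA.card_partialSumSet (m := i + 1) hi
    exact nth_mem_strictMonoOn _ (Set.mem_Iio.mpr (by omega)) (Set.mem_Iio.mpr (by omega)) hjj'
  · rw [triangleOf_eq_nth A hi (by omega), triangleOf_eq_nth A hi (by omega),
      triangleOf_eq_nth A (by omega) hj]
    exact (nth_mem_interlace_iff (hA.card_partialSumSet hi)
      (hA.card_partialSumSet (by omega))).mpr (hA.count_partialSumSet_succ ⟨i + 1, hi⟩) j (by omega)
  · rw [triangleOf_eq_nth A (by omega) (by omega), Nat.sub_add_cancel (by omega),
      hA.nth_partialSumSet_last hj]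

-- The entries of row `m - 1` of `t` (and `∅` for `m = 0`), indexed like `partialSumSet A m`.
def entrySet (t : ℕ → ℕ → ℕ) : ℕ → Finset ℕ
  | 0 => ∅
  | m + 1 => (range (m + 1)).image (t m)

def ofTriangle (n : ℕ) (t : ℕ → ℕ → ℕ) : Matrix (Fin n) (Fin n) ℤ :=
  fun k c => (if (c : ℕ) + 1 ∈ entrySet t (k + 1) then 1 else 0) -
    (if (c : ℕ) + 1 ∈ entrySet t k then 1 else 0)

lemma prefixSum_col_ofTriangle (t : ℕ → ℕ → ℕ) (c : Fin n) {m : ℕ} (hm : m ≤ n) :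
    prefixSum ((ofTriangle n t)ᵀ c) m = if (c : ℕ) + 1 ∈ entrySet t m then 1 else 0 := by
  induction m with
  | zero => simp [prefixSum_zero, entrySet]
  | succ m ih =>
    rw [show m + 1 = ((⟨m, hm⟩ : Fin n) : ℕ) + 1 from rfl, prefixSum_succ, ih (by omega)]
    simp [ofTriangle]

namespace IsMonotoneTriangle
variable {t : ℕ → ℕ → ℕ}

lemma entry_mem_Icc (hmt : IsMonotoneTriangle n t) {i j : ℕ} (hi : i < n) (hj : j ≤ i) :
    t i j ∈ Icc 1 n := by
  have hcol := hmt.2.1 i (n - 1) j (by omega) (by omega) hj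
  have hdiag := hmt.2.2.1 i j (n - 1 - i) (by omega) hj
  rw [hmt.2.2.2 j (by omega)] at hcol
  rw [show i + (n - 1 - i) = n - 1 by omega, hmt.2.2.2 _ (by omega)] at hdiag
  exact Finset.mem_Icc.mpr ⟨by omega, by omega⟩

lemma entrySet_subset (hmt : IsMonotoneTriangle n t) {m : ℕ} (hm : m ≤ n) :
    entrySet t m ⊆ Icc 1 n := by
  cases m with
  | zero => exact empty_subset _
  | succ i =>
    intro y hy
    obtain ⟨j, hj, rfl⟩ := mem_image.mp hy
    exact hmt.entry_mem_Icc (by omega) (by simpa [Nat.lt_succ_iff] using hj)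

lemma strictMonoOn_row (hmt : IsMonotoneTriangle n t) {i : ℕ} (hi : i < n) :
    StrictMonoOn (t i) (Set.Iio (i + 1)) :=
  fun _ _ _ hb hab => hmt.1 i _ _ hi hab (Nat.lt_succ_iff.mp hb)

lemma nth_entrySet (hmt : IsMonotoneTriangle n t) {i j : ℕ} (hi : i < n) (hj : j ≤ i) :
    nth (· ∈ entrySet t (i + 1)) j = t i j :=
  nth_mem_image_range (hmt.strictMonoOn_row hi) (Nat.lt_succ_of_le hj)

lemma card_entrySet (hmt : IsMonotoneTriangle n t) {m : ℕ} (hm : m ≤ n) :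
    #(entrySet t m) = m := by
  cases m with
  | zero => rfl
  | succ i =>
    rw [entrySet, Finset.card_image_of_injOn (by simpa using (hmt.strictMonoOn_row hm).injOn),
      card_range]

lemma count_entrySet_succ (hmt : IsMonotoneTriangle n t) {m : ℕ} (hm : m < n) (y : ℕ) :
    count (· ∈ entrySet t m) y ≤ count (· ∈ entrySet t (m + 1)) y ∧
      count (· ∈ entrySet t (m + 1)) y ≤ count (· ∈ entrySet t m) y + 1 := by
  refine (nth_mem_interlace_iff (hmt.card_entrySet hm) (hmt.card_entrySet hm.le)).mp
    (fun j hj => ?_) y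
  obtain ⟨i, rfl⟩ : ∃ i, m = i + 1 := ⟨m - 1, by omega⟩
  rw [hmt.nth_entrySet hm (by omega), hmt.nth_entrySet (by omega) (by omega),
    hmt.nth_entrySet hm (by omega)]
  exact ⟨hmt.2.1 i (i + 1) j (by omega) hm (by omega), hmt.2.2.1 i j 1 hm (by omega)⟩

lemma succ_mem_entrySet_last (hmt : IsMonotoneTriangle n t) (c : Fin n) :
    (c : ℕ) + 1 ∈ entrySet t n := by
  obtain ⟨i, rfl⟩ : ∃ i, n = i + 1 := ⟨n - 1, by have := c.isLt; omega⟩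
  exact mem_image.mpr ⟨c, mem_range.mpr c.isLt, hmt.2.2.2 c c.isLt⟩

lemma prefixSum_row_ofTriangle (hmt : IsMonotoneTriangle n t) (k : Fin n) (x : ℕ) :
    prefixSum (ofTriangle n t k) x =
      count (· ∈ entrySet t (k + 1)) (x + 1) - count (· ∈ entrySet t k) (x + 1) := by
  rw [← prefixSum_indicator_eq_count (hmt.entrySet_subset k.isLt),
    ← prefixSum_indicator_eq_count (hmt.entrySet_subset k.isLt.le), ← prefixSum_sub]
  rfl

lemma isASM_ofTriangle (hmt : IsMonotoneTriangle n t) : IsASM n (ofTriangle n t) := by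
  have hcount : ∀ m ≤ n, count (· ∈ entrySet t m) (n + 1) = m := fun m hm => by
    rw [count_mem_eq_card fun x hx => by
      have := (Finset.mem_Icc.mp (hmt.entrySet_subset hm hx)).2; omega, hmt.card_entrySet hm]
  have hrow : ∀ k : Fin n, prefixSum (ofTriangle n t k) n = 1 := fun k => by
    rw [hmt.prefixSum_row_ofTriangle, hcount _ k.isLt, hcount _ k.isLt.le]
    push_cast; ring
  have hcol : ∀ c : Fin n, prefixSum ((ofTriangle n t)ᵀ c) n = 1 := fun c => by
    rw [prefixSum_col_ofTriangle t c le_rfl, if_pos (hmt.succ_mem_entrySet_last c)]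
  refine ⟨fun k c => ?_, fun k => ?_, fun c => ?_, fun k => ?_, fun c => ?_⟩
  · simp only [ofTriangle]; split_ifs <;> norm_num
  · rw [← prefixSum_eq_sum_of_le _ le_rfl, hrow]
  · rw [← hcol c, prefixSum_eq_sum_of_le _ le_rfl]; rfl
  · refine alternating_of_prefixSum (fun x _ => ?_) (hrow k)
    rw [hmt.prefixSum_row_ofTriangle]
    have := hmt.count_entrySet_succ k.isLt (x + 1)
    omega
  · refine alternating_of_prefixSum (v := (ofTriangle n t)ᵀ c) (fun m hm => ?_) (hcol c)
    rw [prefixSum_col_ofTriangle t c hm]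
    split_ifs <;> simp

lemma partialSumSet_ofTriangle (hmt : IsMonotoneTriangle n t) {m : ℕ} (hm : m ≤ n) :
    partialSumSet (ofTriangle n t) m = entrySet t m := by
  ext y
  simp only [partialSumSet, mem_image, mem_filter_univ, prefixSum_col_ofTriangle t _ hm]
  constructor
  · rintro ⟨c, hc, rfl⟩
    by_contra h
    simp [h] at hc
  · intro hy
    have := Finset.mem_Icc.mp (hmt.entrySet_subset hm hy)
    exact ⟨⟨y - 1, by omega⟩, by simp [Nat.sub_add_cancel this.1, hy], Nat.sub_add_cancel this.1⟩

lemma triangleOf_ofTriangle (hmt : IsMonotoneTriangle n t) (hnorm : Normalized n t) :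
    triangleOf (ofTriangle n t) = t := by
  funext i j
  by_cases hij : i < n ∧ j ≤ i
  · rw [triangleOf_eq_nth _ hij.1 hij.2, hmt.partialSumSet_ofTriangle hij.1,
      hmt.nth_entrySet hij.1 hij.2]
  · rw [triangleOf, if_neg hij, hnorm i j (by omega)]

end IsMonotoneTriangle

lemma IsASM.entrySet_triangleOf {A : Matrix (Fin n) (Fin n) ℤ} (hA : IsASM n A) {m : ℕ}
    (hm : m ≤ n) : entrySet (triangleOf A) m = partialSumSet A m := by
  cases m with
  | zero => exact (partialSumSet_zero A).symm
  | succ i =>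
    conv_rhs => rw [← image_range_card_nth_mem (partialSumSet A (i + 1)), hA.card_partialSumSet hm]
    exact image_congr fun j hj => triangleOf_eq_nth A hm (by simpa [Nat.lt_succ_iff] using hj)

lemma IsASM.ofTriangle_triangleOf {A : Matrix (Fin n) (Fin n) ℤ} (hA : IsASM n A) :
    ofTriangle n (triangleOf A) = A := by
  ext k c
  rw [ofTriangle, hA.entrySet_triangleOf k.isLt, hA.entrySet_triangleOf k.isLt.le,
    ← hA.prefixSum_col_eq_ite, ← hA.prefixSum_col_eq_ite, prefixSum_succ]
  simp

/-- The map recording, for each `i`, the columns with partial sum `1` down to row `i`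
is a bijection from `n × n` alternating sign matrices onto monotone triangles of
order `n`. -/
theorem asm_bij_monotone_triangles (n : ℕ) :
    Set.BijOn (triangleOf (n := n)) {A | IsASM n A}
      {t | IsMonotoneTriangle n t ∧ Normalized n t} :=
  Set.InvOn.bijOn (f' := ofTriangle n)
    ⟨fun _ hA => IsASM.ofTriangle_triangleOf hA, fun _ ht => ht.1.triangleOf_ofTriangle ht.2⟩
    (fun A hA => ⟨IsASM.isMonotoneTriangle_triangleOf hA, normalized_triangleOf A⟩)
    (fun _ ht => ht.1.isASM_ofTriangle)
end

section
/- A permutation π of {1,...,n} avoids the pattern 312 if and only if its monotone triangle is gapless, where the monotone triangle of π has i-th row equal to the sorted set {π(1), π(2), ..., π(i)}. -/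
/-- The monotone triangle of a permutation `π` of size `n`: its `i`-th row (0-based) is
the increasing rearrangement of the 1-based values `π(1), …, π(i+1)`; entries outside the
triangle are `0`. -/
noncomputable def triOf {n : ℕ} (π : Equiv.Perm (Fin n)) : ℕ → ℕ → ℕ :=
  fun i j =>
    if i < n ∧ j ≤ i then
      (((Finset.univ.filter (fun k : Fin n => (k : ℕ) ≤ i)).image
          (fun k : Fin n => (π k : ℕ) + 1)).sort (· ≤ ·)).getD j 0
    else 0

/-!
Row `i` of the monotone triangle lists the values `π 0 + 1, …, π i + 1` in increasing order, so
its `j`-th entry is at most `c` exactly when more than `j` of `π 0, …, π i` lie below `c`. Writing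
everything in terms of these corner counts, the columns weakly decrease, and a column is gapless
unless it drops by at least two between consecutive rows `i` and `i + 1`. Such a drop over a value
`v + 1` happens exactly when `π (i + 1) < v`, some `π a` with `a ≤ i` exceeds `v`, and `v` itself
appears only after position `i + 1`: a `312` occurrence with middle position `i + 1`.
-/

open Finset

theorem Nat.nth_lt_iff_lt_count_of_finite {p : ℕ → Prop} [DecidablePred p]
    (hf : (Set.ofPred p).Finite) {k : ℕ} (hk : k < #hf.toFinset) (m : ℕ) :
    nth p k < m ↔ k < count p m := by
  refine ⟨fun h => ?_, nth_lt_of_lt_count⟩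
  calc k < k + 1 := k.lt_succ_self
    _ = count p (nth p k + 1) := (count_nth_succ fun _ => hk).symm
    _ ≤ count p m := count_monotone p h

theorem Nat.exists_eq_of_forall_le_succ_add_one {f : ℕ → ℕ} {a b c : ℕ} (hab : a ≤ b)
    (hstep : ∀ i, a ≤ i → i < b → f i ≤ f (i + 1) + 1) (ha : c ≤ f a) (hb : f b ≤ c) :
    ∃ i, a ≤ i ∧ i ≤ b ∧ f i = c := by
  induction b, hab using Nat.le_induction with
  | base => exact ⟨a, le_rfl, le_rfl, le_antisymm hb ha⟩
  | succ b hab ih =>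
    rcases le_or_gt (f b) c with hfb | hfb
    · obtain ⟨i, hai, hib, hfi⟩ := ih (fun i hai hib => hstep i hai (by omega)) hfb
      exact ⟨i, hai, by omega, hfi⟩
    · have := hstep b hab b.lt_succ_self
      exact ⟨b + 1, by omega, le_rfl, by omega⟩

theorem gapless_iff_forall_le_add_one {n : ℕ} {t : ℕ → ℕ → ℕ}
    (hanti : ∀ i i' j, j ≤ i → i ≤ i' → i' < n → t i' j ≤ t i j) :
    Gapless n t ↔ ∀ i j, j ≤ i → i + 1 < n → t i j ≤ t (i + 1) j + 1 := by
  constructor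
  · intro hG i j hji hi
    by_contra! hdrop
    obtain ⟨i', hji', hi', hti'⟩ :=
      hG j (t (i + 1) j + 1) (by omega) ⟨i + 1, by omega, hi, by omega⟩ ⟨i, hji, by omega, hdrop.le⟩
    rcases le_or_gt i' i with h | h
    · have := hanti i' i j hji' h (by omega)
      omega
    · have := hanti (i + 1) i' j (by omega) h hi'
      omega
  · rintro hstep j c hj ⟨i₁, hji₁, hi₁, ht₁⟩ ⟨i₂, hji₂, hi₂, ht₂⟩
    rcases le_or_gt i₁ i₂ with h | h
    · exact ⟨i₂, hji₂, hi₂, le_antisymm ((hanti i₁ i₂ j hji₁ h hi₂).trans ht₁) ht₂⟩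
    · obtain ⟨i, hi₂i, hii₁, hti⟩ := Nat.exists_eq_of_forall_le_succ_add_one (f := (t · j)) h.le
        (fun i hi₂i hii₁ => hstep i j (hji₂.trans hi₂i) (by omega)) ht₂ ht₁
      exact ⟨i, hji₂.trans hi₂i, by omega, hti⟩

theorem contains_312_iff {n : ℕ} (σ : Equiv.Perm (Fin n)) :
    Contains σ (finRotate 3)⁻¹ ↔ ∃ a b c : Fin n, a < b ∧ b < c ∧ σ b < σ c ∧ σ c < σ a := by
  have hrot : ∀ x, (finRotate 3)⁻¹ x = ![2, 0, 1] x := by decide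
  simp only [Contains, hrot]
  constructor
  · rintro ⟨f, hf, hσ⟩
    exact ⟨f 0, f 1, f 2, hf (by decide), hf (by decide), (hσ 1 2).1 (by decide),
      (hσ 2 0).1 (by decide)⟩
  · rintro ⟨a, b, c, hab, hbc, hσbc, hσca⟩
    refine ⟨![a, b, c], Fin.strictMono_iff_lt_succ.2 fun i => ?_, fun x y => ?_⟩
    · fin_cases i <;> assumption
    · have hσba := hσbc.trans hσca
      fin_cases x <;> fin_cases y <;>
        simp [hσbc, hσca, hσba, hσbc.not_gt, hσca.not_gt, hσba.not_gt]

section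
variable {n : ℕ}

def cornerCount (π : Equiv.Perm (Fin n)) (m c : ℕ) : ℕ :=
  #{k : Fin n | (k : ℕ) < m ∧ (π k : ℕ) < c}

variable (π : Equiv.Perm (Fin n))

theorem cornerCount_inv (m c : ℕ) : cornerCount π⁻¹ c m = cornerCount π m c := by
  refine card_equiv π⁻¹ fun k => ?_
  simp [and_comm]

theorem cornerCount_mono {m m' c c' : ℕ} (hm : m ≤ m') (hc : c ≤ c') :
    cornerCount π m c ≤ cornerCount π m' c' :=
  card_le_card <| monotone_filter_right _ fun _ _ h => ⟨h.1.trans_le hm, h.2.trans_le hc⟩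

theorem cornerCount_succ_left (p : Fin n) (c : ℕ) :
    cornerCount π (p + 1) c = cornerCount π p c + if (π p : ℕ) < c then 1 else 0 := by
  have hsplit : ∀ k : Fin n, (k : ℕ) < p + 1 ↔ (k : ℕ) < p ∨ k = p := by
    intro k; rw [Fin.ext_iff]; omega
  unfold cornerCount
  split_ifs with hp
  · rw [← card_insert_of_notMem (a := p) (by simp)]
    congr 1; ext k; simp only [hsplit, mem_filter, mem_univ, true_and, mem_insert]
    grind
  · rw [add_zero]; congr 1; ext k; simp only [hsplit, mem_filter, mem_univ, true_and]
    grind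

theorem cornerCount_succ_right (m : ℕ) (e : Fin n) :
    cornerCount π m (π e + 1) = cornerCount π m (π e) + if (e : ℕ) < m then 1 else 0 := by
  rw [← cornerCount_inv, cornerCount_succ_left, cornerCount_inv, Equiv.Perm.coe_inv,
    Equiv.symm_apply_apply]

theorem cornerCount_lt_iff {m : ℕ} (hm : m ≤ n) (c : ℕ) :
    cornerCount π m c < m ↔ ∃ a : Fin n, (a : ℕ) < m ∧ c ≤ π a := by
  set s : Finset (Fin n) := {k | (k : ℕ) < m}
  have hcard : #s = m := by rw [Fin.card_filter_val_lt, min_eq_right hm]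
  have hle := card_filter_le s fun k => (π k : ℕ) < c
  have heq := card_filter_eq_iff (s := s) (p := fun k => (π k : ℕ) < c)
  rw [cornerCount, ← filter_filter]
  simp only [s, mem_filter, mem_univ, true_and] at heq
  grind

theorem contains_312_iff_exists_cornerCount :
    Contains π (finRotate 3)⁻¹ ↔ ∃ m v, m < n ∧ cornerCount π m (v + 1) < m ∧
      cornerCount π m (v + 1) < cornerCount π (m + 1) v := by
  rw [contains_312_iff]
  constructor
  · rintro ⟨a, p, e, hap, hpe, hσpe, hσea⟩
    refine ⟨p, π e, p.is_lt, (cornerCount_lt_iff π p.is_lt.le _).2 ⟨a, hap, hσea⟩, ?_⟩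
    rw [cornerCount_succ_left, cornerCount_succ_right, if_neg (not_lt.2 (Fin.le_def.1 hpe.le)),
      if_pos (Fin.lt_def.1 hσpe)]
    omega
  · rintro ⟨m, v, hm, hlt, hcount⟩
    obtain ⟨a, ham, hva⟩ := (cornerCount_lt_iff π hm.le _).1 hlt
    obtain ⟨p, rfl⟩ : ∃ p : Fin n, (p : ℕ) = m := ⟨⟨m, hm⟩, rfl⟩
    obtain ⟨e, rfl⟩ : ∃ e : Fin n, (π e : ℕ) = v := ⟨π⁻¹ ⟨v, by omega⟩, by simp⟩
    rw [cornerCount_succ_left, cornerCount_succ_right] at hcount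
    have hσpe : π p < π e := by
      by_contra! h
      rw [if_neg (not_lt.2 (Fin.le_def.1 h))] at hcount
      have := cornerCount_mono π le_rfl (π e : ℕ).le_succ (m := p)
      omega
    have hpe : p < e := by
      refine lt_of_le_of_ne (not_lt.1 fun hep => ?_) fun hep => hσpe.ne (congrArg π hep)
      rw [if_pos (Fin.lt_def.1 hep), if_pos (Fin.lt_def.1 hσpe)] at hcount
      omega
    exact ⟨a, p, e, ham, hpe, hσpe, hva⟩

theorem triOf_le_iff {i j : ℕ} (hj : j ≤ i) (hi : i < n) (c : ℕ) :
    triOf π i j ≤ c ↔ j < cornerCount π (i + 1) c := by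
  set T := (univ.filter fun k : Fin n => (k : ℕ) ≤ i).image fun k => (π k : ℕ) + 1
  have hinj : Function.Injective fun k : Fin n => (π k : ℕ) + 1 := fun a b h =>
    π.injective (Fin.ext (Nat.add_right_cancel h))
  have hf : (Set.ofPred (· ∈ T)).Finite := T.finite_toSet
  have hfT : hf.toFinset = T := T.finite_toSet_toFinset
  have hcard : #T = i + 1 := by
    simp_rw [T, card_image_of_injective _ hinj, ← Nat.lt_add_one_iff, Fin.card_filter_val_lt]
    omega
  have htri : triOf π i j = Nat.nth (· ∈ T) j := by
    rw [triOf, if_pos ⟨hi, hj⟩, Nat.nth_eq_getD_sort hf, hfT]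
  have hcount : Nat.count (· ∈ T) (c + 1) = cornerCount π (i + 1) c := by
    rw [Nat.count_eq_card_filter_range, cornerCount, ← card_image_of_injective _ hinj]
    congr 1; ext y
    simp only [mem_image, mem_filter, mem_univ, true_and, mem_range, Order.lt_add_one_iff, T]
    grind
  rw [htri, ← Nat.lt_succ_iff, Nat.nth_lt_iff_lt_count_of_finite hf (by rw [hfT, hcard]; omega),
    hcount]

theorem triOf_le_triOf_of_le {i i' j : ℕ} (hj : j ≤ i) (hii' : i ≤ i') (hi' : i' < n) :
    triOf π i' j ≤ triOf π i j := by
  rw [triOf_le_iff π (hj.trans hii') hi']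
  exact ((triOf_le_iff π hj (by omega) _).1 le_rfl).trans_le (cornerCount_mono π (by omega) le_rfl)

theorem exists_triOf_drop_iff :
    (∃ i j, j ≤ i ∧ i + 1 < n ∧ triOf π (i + 1) j + 1 < triOf π i j) ↔
      ∃ m v, m < n ∧ cornerCount π m (v + 1) < m ∧
        cornerCount π m (v + 1) < cornerCount π (m + 1) v := by
  constructor
  · rintro ⟨i, j, hji, hi, hdrop⟩
    have hbelow := (triOf_le_iff π (by omega : j ≤ i + 1) hi _).1 le_rfl
    have habove := (triOf_le_iff π hji (by omega) (triOf π (i + 1) j + 1)).not.1 (by omega)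
    exact ⟨i + 1, triOf π (i + 1) j, hi, by omega, by omega⟩
  · rintro ⟨m, v, hm, hlt, hcount⟩
    obtain ⟨i, rfl⟩ : ∃ i, m = i + 1 := ⟨m - 1, by omega⟩
    set j := cornerCount π (i + 1) (v + 1)
    have hbelow := (triOf_le_iff π (by omega : j ≤ i + 1) hm v).2 hcount
    have habove := (triOf_le_iff π (by omega : j ≤ i) (by omega) (v + 1)).not.2 (lt_irrefl _)
    exact ⟨i, j, by omega, hm, by omega⟩

end

/-- A permutation avoids the pattern 312 iff its monotone triangle is gapless. -/
theorem avoids_312_iff_gapless (n : ℕ) (π : Equiv.Perm (Fin n)) :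
    Avoids π ((finRotate 3)⁻¹) ↔ Gapless n (triOf π) := by
  rw [gapless_iff_forall_le_add_one fun _ _ _ => triOf_le_triOf_of_le π, Avoids,
    contains_312_iff_exists_cornerCount, ← exists_triOf_drop_iff]
  simp only [not_exists, not_and, not_lt]
end
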